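/- arXiv:2505.10739 — 7 statements merged into one kernel-verified Lean document; each statement's English description precedes it below -/
import Mathlib

section
/- Let A be a totally unimodular m×n integer matrix and b ∈ ℤ^m such that the polyhedron Q := {x ∈ ℝ^n : A x ≤ b} is nonempty. Let k be a positive integer and let z* ∈ ℤ^n satisfy A z* ≤ k·b. Then there exist t ≥ 1, affinely independent integer vectors z₁, …, z_t ∈ Q, and positive integers μ₁, …, μ_t with μ₁ + ⋯ + μ_t = k, such that z* = μ₁ z₁ + ⋯ + μ_t z_t and each z_i is sign-consistent with z*, i.e. for every coordinate j ∈ {1,…,n}: if z*(j) ≥ 0 then z_i(j) ≥ 0 for all i ∈ {1,…,t}, and if z*(j) ≤ 0 then z_i(j) ≤ 0 for all i ∈ {1,…,t}. -/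
/-!
Put `x₀ = z* / k` and stack `A` on the identity, `D = [A; I]`, which is again totally
unimodular. Every integer point of the box `P = {x : ⌊D x₀⌋ ≤ D x ≤ ⌈D x₀⌉}` satisfies
`A x ≤ b` and is sign-consistent with `z*`, and all bounds of `P` have width at most one.

In such a box every point `x` is a convex combination, with positive weights, of a unimodular
family of integer points of the box. Induct on the number of rows with `lo < hi`: total unimodularity
gives an integer point `v₀` of the box; walk from `v₀` through `x` until some row `r₀` becomes
tight at a point `y`. As the width is at most one, row `r₀` takes the value `c` at `y` and
`c ± 1` at `v₀`. Fix that row to `c`, decompose `y` by induction and add `v₀`, which lies at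
lattice distance one from the hyperplane of the new family. For `x = x₀` the weights times `k`
are integers, and these are the multiplicities `μ`.
-/

open Matrix Finset Function

section ExitTime

variable {ι 𝕜 : Type*} [Fintype ι] [Field 𝕜] [LinearOrder 𝕜]

def exitTime (a d l h : 𝕜) : 𝕜 := if 0 < d then (h - a) / d else (l - a) / d

lemma add_exitTime_mul_eq {a d l h : 𝕜} (hd : d ≠ 0) :
    a + exitTime a d l h * d = l ∨ a + exitTime a d l h * d = h := by
  unfold exitTime
  split_ifs
  · right; rw [div_mul_cancel₀ _ hd]; ring
  · left; rw [div_mul_cancel₀ _ hd]; ring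

variable [IsStrictOrderedRing 𝕜]

lemma add_mul_mem_Icc_iff {a d l h s : 𝕜} (ha : a ∈ Set.Icc l h) (hd : d ≠ 0) (hs : 0 ≤ s) :
    a + s * d ∈ Set.Icc l h ↔ s ≤ exitTime a d l h := by
  rcases hd.lt_or_gt with hd | hd
  · rw [exitTime, if_neg hd.not_gt, le_div_iff_of_neg hd, Set.mem_Icc]
    constructor
    · rintro ⟨h1, -⟩; linarith
    · intro h1; constructor <;> nlinarith [ha.2]
  · rw [exitTime, if_pos hd, le_div_iff₀ hd, Set.mem_Icc]
    constructor
    · rintro ⟨-, h1⟩; linarith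
    · intro h1; constructor <;> nlinarith [ha.1]

theorem exists_exitTime_of_mem_Icc {lo hi y δ : ι → 𝕜} (hy : y ∈ Set.Icc lo hi) (hδ : δ ≠ 0) :
    ∃ θ, (∀ s, 0 ≤ s → (y + s • δ ∈ Set.Icc lo hi ↔ s ≤ θ)) ∧
      ∃ r, δ r ≠ 0 ∧ (y r + θ * δ r = lo r ∨ y r + θ * δ r = hi r) := by
  classical
  set S := univ.filter (δ · ≠ 0)
  have hS : S.Nonempty := by
    obtain ⟨r, hr⟩ := Function.ne_iff.mp hδ
    exact ⟨r, by simpa [S] using hr⟩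
  have hrow (r : ι) : y r ∈ Set.Icc (lo r) (hi r) := ⟨hy.1 r, hy.2 r⟩
  let τ r := exitTime (y r) (δ r) (lo r) (hi r)
  obtain ⟨r, hrS, hr⟩ := S.exists_mem_eq_inf' hS τ
  have hδr : δ r ≠ 0 := (mem_filter.mp hrS).2
  refine ⟨S.inf' hS τ, fun s hs => ?_, r, hδr, hr ▸ add_exitTime_mul_eq hδr⟩
  rw [le_inf'_iff]
  simp only [Set.mem_Icc, Pi.le_def, ← forall_and, Pi.add_apply, Pi.smul_apply, smul_eq_mul]
  refine forall_congr' fun r => ?_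
  by_cases hδr : δ r = 0
  · simpa [S, hδr] using hrow r
  · simpa [S, hδr] using add_mul_mem_Icc_iff (hrow r) hδr hs

end ExitTime

theorem intCast_dotProduct {σ R : Type*} [Fintype σ] [NonAssocRing R] (v w : σ → ℤ) :
    ((v ⬝ᵥ w : ℤ) : R) = (Int.cast ∘ v) ⬝ᵥ (Int.cast ∘ w) :=
  RingHom.map_dotProduct (Int.castRingHom R) v w

section UnimodularFamily

variable {κ σ 𝕜 : Type*} [Fintype κ] [CommRing 𝕜]

variable (𝕜) in
/-- Equivalently: the lifts `(v i, 1)` are linearly independent and form a basis of the lattice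
of integer points in their span. -/
structure IsUnimodularFamily (v : κ → σ → ℤ) : Prop where
  affineIndependent : AffineIndependent 𝕜 fun i => (Int.cast ∘ v i : σ → 𝕜)
  integral_coeff : ∀ (a : κ → 𝕜) (k : ℤ) (z : σ → ℤ), ∑ i, a i = k →
    ∑ i, a i • (Int.cast ∘ v i : σ → 𝕜) = Int.cast ∘ z → ∀ i, ∃ c : ℤ, a i = c

theorem isUnimodularFamily_of_subsingleton [Subsingleton κ] (v : κ → σ → ℤ) :
    IsUnimodularFamily 𝕜 v where
  affineIndependent := affineIndependent_of_subsingleton 𝕜 _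
  integral_coeff a k _ hk _ i := ⟨k, by rwa [Fintype.sum_subsingleton _ i] at hk⟩

/-- The functional `ρ ⬝ᵥ · - β` reads off the coefficient of `v₀` in any combination. -/
theorem IsUnimodularFamily.cons [Fintype σ] {t : ℕ} {v : Fin t → σ → ℤ}
    (hv : IsUnimodularFamily 𝕜 v) {v₀ ρ : σ → ℤ} {β : ℤ} (hface : ∀ i, ρ ⬝ᵥ v i = β)
    (h₀ : IsUnit (ρ ⬝ᵥ v₀ - β)) :
    IsUnimodularFamily 𝕜 (Fin.cons v₀ v : Fin (t + 1) → σ → ℤ) := by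
  set e := ρ ⬝ᵥ v₀ - β
  have he : (e : 𝕜) * e = 1 := by
    rcases Int.isUnit_iff.mp h₀ with h | h <;> simp [h]
  have unit_cancel (c : 𝕜) : c = c * e * e := by rw [mul_assoc, he, mul_one]
  set p : Fin (t + 1) → σ → 𝕜 := fun i => Int.cast ∘ (Fin.cons v₀ v : Fin (t + 1) → σ → ℤ) i
  have key (a : Fin (t + 1) → 𝕜) :
      a 0 * e = (Int.cast ∘ ρ) ⬝ᵥ (∑ i, a i • p i) - β * ∑ i, a i := by
    have hρp (i) :
        (Int.cast ∘ ρ) ⬝ᵥ p i = ((ρ ⬝ᵥ (Fin.cons v₀ v : Fin (t + 1) → σ → ℤ) i : ℤ) : 𝕜) :=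
      (intCast_dotProduct _ _).symm
    calc a 0 * e = ∑ i, a i * ((ρ ⬝ᵥ (Fin.cons v₀ v : Fin (t + 1) → σ → ℤ) i : ℤ) - β : 𝕜) := by
          simp [Fin.sum_univ_succ, hface, e]
      _ = _ := by
          simp only [dotProduct_sum, dotProduct_smul, hρp, smul_eq_mul, mul_sub, sum_sub_distrib,
            mul_comm (β : 𝕜), sum_mul]
  have tail (a : Fin (t + 1) → 𝕜) : ∑ i, a (Fin.succ i) = ∑ i, a i - a 0 ∧
      ∑ i, a (Fin.succ i) • (Int.cast ∘ v i : σ → 𝕜) = ∑ i, a i • p i - a 0 • p 0 := by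
    simp [Fin.sum_univ_succ, p]
  refine ⟨?_, fun a k z hk hz => ?_⟩
  · rw [affineIndependent_iff_of_fintype]
    intro w hw hs
    rw [weightedVSub_eq_linear_combination _ hw] at hs
    have hw0 : w 0 = 0 := by rw [unit_cancel (w 0), key, hs, hw]; simp
    obtain ⟨h1, h2⟩ := tail w
    have hsucc := hv.affineIndependent.eq_zero_of_sum_eq_zero (s := univ) (w := fun i => w i.succ)
      (by rw [h1, hw, hw0, sub_zero]) (by rw [h2, hs, hw0, zero_smul, sub_zero])
    exact Fin.cases hw0 fun i => hsucc i (mem_univ i)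
  · have ha0 : a 0 = ((ρ ⬝ᵥ z - β * k) * e : ℤ) := by
      rw [unit_cancel (a 0), key, hz, hk, ← intCast_dotProduct]
      push_cast
      rfl
    obtain ⟨h1, h2⟩ := tail a
    have hsucc := hv.integral_coeff (fun i => a i.succ) (k - (ρ ⬝ᵥ z - β * k) * e)
      (z - ((ρ ⬝ᵥ z - β * k) * e) • v₀) (by rw [h1, hk, ha0]; push_cast; ring)
      (by rw [h2, hz, ha0]; ext; simp [p])
    exact Fin.cases ⟨_, ha0⟩ hsucc

end UnimodularFamily

namespace Matrix

section Integrality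

variable {ι σ K : Type*} [Fintype σ]

theorem map_intCast_mulVec [NonAssocRing K] (D : Matrix ι σ ℤ) (v : σ → ℤ) :
    D.map (Int.cast : ℤ → K) *ᵥ (Int.cast ∘ v) = Int.cast ∘ (D *ᵥ v) :=
  funext fun i => (RingHom.map_mulVec (Int.castRingHom K) D v i).symm

variable [DecidableEq σ] [Field K]

theorem exists_isUnit_det_submatrix [Finite ι] (M : Matrix ι σ K) (hM : Injective M.mulVec) :
    ∃ f : σ → ι, IsUnit (M.submatrix f id).det := by
  obtain ⟨κ, a, -, hspan, hli⟩ := exists_linearIndependent' K M.row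
  have hrank : M.rank = Fintype.card σ := by
    rw [rank, LinearMap.finrank_range_of_inj hM, Module.finrank_fintype_fun_eq_card]
  have : Finite κ := hli.finite
  have : Fintype κ := Fintype.ofFinite κ
  have hcard : Fintype.card κ = Fintype.card σ := by
    rw [← hrank, rank_eq_finrank_span_row, ← hspan, finrank_span_eq_card hli]
  let e : σ ≃ κ := (Fintype.equivOfCardEq hcard).symm
  refine ⟨a ∘ e, (isUnit_iff_isUnit_det _).mp (linearIndependent_rows_iff_isUnit.mp ?_)⟩
  exact hli.comp e e.injective

theorem IsTotallyUnimodular.exists_eq_intCast_of_mulVec_eq [Finite ι] {D : Matrix ι σ ℤ}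
    (hD : D.IsTotallyUnimodular) (hinj : Injective (D.map (Int.cast : ℤ → K)).mulVec)
    {x : σ → K} {c : ι → ℤ} (hx : D.map Int.cast *ᵥ x = Int.cast ∘ c) :
    ∃ v : σ → ℤ, x = Int.cast ∘ v := by
  obtain ⟨f, hf⟩ := exists_isUnit_det_submatrix _ hinj
  set B := D.submatrix f id
  have hBK : (D.map (Int.cast : ℤ → K)).submatrix f id = B.map Int.cast := rfl
  have hB : IsUnit B.det := by
    obtain ⟨s, hs⟩ := (isTotallyUnimodular_iff_fintype D).mp hD σ f id
    rw [hBK, ← Int.cast_det, ← hs] at hf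
    rcases s with _ | _ | _ <;> simp_all [B, ← hs]
  have : Invertible B := B.invertibleOfIsUnitDet hB
  refine ⟨B⁻¹ *ᵥ (c ∘ f), (mulVec_injective_iff_isUnit.mpr ((isUnit_iff_isUnit_det _).mpr hf)) ?_⟩
  rw [hBK, map_intCast_mulVec, mulVec_mulVec, mul_inv_of_invertible, one_mulVec]
  ext i
  exact congrFun hx (f i)

end Integrality

section Box

variable {ι σ 𝕜 : Type*} [Fintype σ] [Field 𝕜] [LinearOrder 𝕜] {D : Matrix ι σ ℤ}
  {lo hi : ι → ℤ}

variable (D lo hi) in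
def box : Set (σ → 𝕜) := (D.map Int.cast *ᵥ ·) ⁻¹' Set.Icc (Int.cast ∘ lo) (Int.cast ∘ hi)

variable (D lo hi) in
def tightRows (x : σ → 𝕜) : Set ι :=
  {r | (D.map Int.cast *ᵥ x) r = lo r ∨ (D.map Int.cast *ᵥ x) r = hi r}

theorem mem_box {x : σ → 𝕜} :
    x ∈ box D lo hi ↔ D.map Int.cast *ᵥ x ∈ Set.Icc (Int.cast ∘ lo) (Int.cast ∘ hi) :=
  Iff.rfl

theorem mem_box_iff {x : σ → 𝕜} : x ∈ box D lo hi ↔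
    ∀ r, (lo r : 𝕜) ≤ (D.map Int.cast *ᵥ x) r ∧ (D.map Int.cast *ᵥ x) r ≤ hi r :=
  forall_and.symm

variable [IsStrictOrderedRing 𝕜]

theorem intCast_comp_mem_box {v : σ → ℤ} :
    (Int.cast ∘ v : σ → 𝕜) ∈ box D lo hi ↔ lo ≤ D *ᵥ v ∧ D *ᵥ v ≤ hi := by
  simp [box, map_intCast_mulVec, Pi.le_def]

theorem box_mono {lo' hi' : ι → ℤ} (hlo : lo ≤ lo') (hhi : hi' ≤ hi) :
    (box D lo' hi' : Set (σ → 𝕜)) ⊆ box D lo hi := fun _ hx =>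
  ⟨le_trans (fun r => Int.cast_le.mpr (hlo r)) hx.1,
    le_trans hx.2 (fun r => Int.cast_le.mpr (hhi r))⟩

variable [Fintype ι]

theorem exists_exit_point_mem_facet [DecidableEq ι]
    (hinj : Injective (D.map (Int.cast : ℤ → 𝕜)).mulVec) (hwidth : ∀ r, hi r ≤ lo r + 1)
    {x : σ → 𝕜} (hx : x ∈ box D lo hi) {v₀ : σ → ℤ}
    (hv₀ : (Int.cast ∘ v₀ : σ → 𝕜) ∈ box D lo hi) (hxv₀ : x ≠ Int.cast ∘ v₀) :
    ∃ θ : 𝕜, 1 ≤ θ ∧ ∃ r₀ c, c ∈ Set.Icc (lo r₀) (hi r₀) ∧ lo r₀ < hi r₀ ∧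
      IsUnit ((D *ᵥ v₀) r₀ - c) ∧
      Int.cast ∘ v₀ + θ • (x - Int.cast ∘ v₀) ∈ box D (update lo r₀ c) (update hi r₀ c) := by
  set d := x - Int.cast ∘ v₀
  set δ := D.map (Int.cast : ℤ → 𝕜) *ᵥ d
  have hδ : δ ≠ 0 := fun h => hxv₀ (sub_eq_zero.mp (hinj (h.trans (mulVec_zero _).symm)))
  obtain ⟨θ, hθ, r₀, hr₀, htight⟩ := exists_exitTime_of_mem_Icc (mem_box.mp hv₀) hδ
  rw [map_intCast_mulVec] at hθ htight
  have hmove (s : 𝕜) : D.map Int.cast *ᵥ (Int.cast ∘ v₀ + s • d) =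
      Int.cast ∘ (D *ᵥ v₀) + s • δ := by
    rw [mulVec_add, mulVec_smul, map_intCast_mulVec]
  have hθ1 : 1 ≤ θ := (hθ 1 zero_le_one).mp (by
    rw [← hmove, one_smul, add_sub_cancel]; exact hx)
  set y := Int.cast ∘ v₀ + θ • d
  have hy : y ∈ box D lo hi := by
    rw [mem_box, hmove]; exact (hθ θ (by linarith)).mpr le_rfl
  obtain ⟨c, hyc, hc⟩ : ∃ c : ℤ, (D.map Int.cast *ᵥ y) r₀ = (c : 𝕜) ∧
      (c = lo r₀ ∨ c = hi r₀) := by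
    rw [hmove]
    rcases htight with h | h
    exacts [⟨_, h, .inl rfl⟩, ⟨_, h, .inr rfl⟩]
  have hv₀c : (D *ᵥ v₀) r₀ ≠ c := by
    intro h
    rw [hmove, Pi.add_apply, Function.comp_apply, h, Pi.smul_apply, smul_eq_mul,
      add_eq_left] at hyc
    exact hr₀ ((mul_eq_zero.mp hyc).resolve_left (by positivity))
  have hv₀lo : lo r₀ ≤ (D *ᵥ v₀) r₀ := (intCast_comp_mem_box.mp hv₀).1 r₀
  have hv₀hi : (D *ᵥ v₀) r₀ ≤ hi r₀ := (intCast_comp_mem_box.mp hv₀).2 r₀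
  have hwidth₀ := hwidth r₀
  have hy' : y ∈ box D (update lo r₀ c) (update hi r₀ c) := by
    rw [mem_box_iff] at hy ⊢
    intro r
    rcases eq_or_ne r r₀ with rfl | hr
    · simp [hyc]
    · simpa [hr] using hy r
  exact ⟨θ, hθ1, r₀, c, ⟨by omega, by omega⟩, by omega, Int.isUnit_iff.mpr (by omega), hy'⟩

variable [DecidableEq σ]

theorem IsTotallyUnimodular.exists_intCast_mem_box_eq_on_tightRows (hD : D.IsTotallyUnimodular)
    (hinj : Injective (D.map (Int.cast : ℤ → 𝕜)).mulVec) {x : σ → 𝕜} (hx : x ∈ box D lo hi) :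
    ∃ v : σ → ℤ, (Int.cast ∘ v : σ → 𝕜) ∈ box D lo hi ∧
      ∀ r ∈ tightRows D lo hi x, ((D *ᵥ v) r : 𝕜) = (D.map Int.cast *ᵥ x) r := by
  -- If the rows tight at `x` determine `x`, it is integral by total unimodularity; otherwise move
  -- inside the face they cut out until one more row becomes tight.
  induction hN : (tightRows D lo hi x)ᶜ.ncard using Nat.strong_induction_on generalizing x with
  | _ N ih =>
  set T := tightRows D lo hi x
  by_cases hT : Injective ((D.submatrix ((↑) : T → ι) id).map (Int.cast : ℤ → 𝕜)).mulVec
  · have hc (r : T) : ∃ c : ℤ, (D.map Int.cast *ᵥ x) r = c := r.2.elim (⟨_, ·⟩) (⟨_, ·⟩)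
    choose c hc using hc
    obtain ⟨v, rfl⟩ := (hD.submatrix _ id).exists_eq_intCast_of_mulVec_eq hT (funext hc)
    exact ⟨v, hx, fun r _ => by rw [map_intCast_mulVec]; rfl⟩
  obtain ⟨d, hdT, hd⟩ :
      ∃ d : σ → 𝕜, (∀ r ∈ T, (D.map (Int.cast : ℤ → 𝕜) *ᵥ d) r = 0) ∧ d ≠ 0 := by
    rw [← coe_mulVecLin, injective_iff_map_eq_zero] at hT
    push Not at hT
    obtain ⟨d, hd, hd0⟩ := hT
    exact ⟨d, fun r hr => congrFun hd ⟨r, hr⟩, hd0⟩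
  set δ := D.map (Int.cast : ℤ → 𝕜) *ᵥ d
  have hδ : δ ≠ 0 := fun h => hd (hinj (h.trans (mulVec_zero _).symm))
  obtain ⟨θ, hθ, r₀, hr₀, htight⟩ := exists_exitTime_of_mem_Icc hx hδ
  have hθ0 : 0 ≤ θ := (hθ 0 le_rfl).mp (by rwa [zero_smul, add_zero])
  set x' := x + θ • d
  have hDx' : D.map Int.cast *ᵥ x' = D.map Int.cast *ᵥ x + θ • δ := by
    simp only [x', δ, mulVec_add, mulVec_smul]
  have hx' : x' ∈ box D lo hi := by
    rw [box, Set.mem_preimage, hDx']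
    exact (hθ θ hθ0).mpr le_rfl
  have hsame (r) (hr : r ∈ T) : (D.map Int.cast *ᵥ x') r = (D.map Int.cast *ᵥ x) r := by
    simp [hDx', δ, hdT r hr]
  have hsub : T ⊆ tightRows D lo hi x' := fun r hr => by
    change _ ∨ _; rw [hsame r hr]; exact hr
  have hr₀' : r₀ ∈ tightRows D lo hi x' := by simpa [tightRows, hDx'] using htight
  have hlt : (tightRows D lo hi x')ᶜ.ncard < N := hN ▸ Set.ncard_lt_ncard
    (compl_lt_compl_iff_lt.mpr (LE.le.ssubset_of_mem_notMem hsub hr₀' fun h => hr₀ (hdT r₀ h)))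
  obtain ⟨v, hv, hvx'⟩ := ih _ hlt hx' rfl
  exact ⟨v, hv, fun r hr => (hvx' r (hsub hr)).trans (hsame r hr)⟩

theorem IsTotallyUnimodular.exists_isUnimodularFamily (hD : D.IsTotallyUnimodular)
    (hinj : Injective (D.map (Int.cast : ℤ → 𝕜)).mulVec) (hwidth : ∀ r, hi r ≤ lo r + 1)
    {x : σ → 𝕜} (hx : x ∈ box D lo hi) :
    ∃ (t : ℕ) (v : Fin t → σ → ℤ) (w : Fin t → 𝕜), IsUnimodularFamily 𝕜 v ∧
      (∀ i, (Int.cast ∘ v i : σ → 𝕜) ∈ box D lo hi) ∧ (∀ i, 0 < w i) ∧ ∑ i, w i = 1 ∧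
      ∑ i, w i • (Int.cast ∘ v i : σ → 𝕜) = x := by
  classical
  induction hN : {r | lo r < hi r}.ncard using Nat.strong_induction_on
    generalizing lo hi x with
  | _ N ih =>
  obtain ⟨v₀, hv₀, -⟩ := hD.exists_intCast_mem_box_eq_on_tightRows hinj hx
  by_cases hxv₀ : x = Int.cast ∘ v₀
  · exact ⟨1, fun _ => v₀, fun _ => 1, isUnimodularFamily_of_subsingleton _, fun _ => hv₀,
      fun _ => one_pos, by simp, by simp [hxv₀]⟩
  obtain ⟨θ, hθ1, r₀, c, hc, hwide, hunit, hy⟩ :=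
    exists_exit_point_mem_facet hinj hwidth hx hv₀ hxv₀
  have hlo : lo ≤ update lo r₀ c := le_update_iff.mpr ⟨hc.1, fun _ _ => le_rfl⟩
  have hhi : update hi r₀ c ≤ hi := update_le_iff.mpr ⟨hc.2, fun _ _ => le_rfl⟩
  have hlt : {r | update lo r₀ c r < update hi r₀ c r}.ncard < N := by
    rw [← hN]
    refine Set.ncard_lt_ncard (LE.le.ssubset_of_mem_notMem (a := r₀) (fun r hr => ?_) hwide ?_)
    · exact (hlo r).trans_lt (hr.trans_le (hhi r))
    · simp
  obtain ⟨t, v, w, hv, hvbox, hwpos, hwsum, hwy⟩ :=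
    ih _ hlt (fun r => by linarith [hwidth r, hlo r, hhi r]) hy rfl
  rcases hθ1.eq_or_lt with rfl | hθ1
  · exact ⟨t, v, w, hv, fun i => box_mono hlo hhi (hvbox i), hwpos, hwsum, by simp [hwy]⟩
  have hface (i) : D r₀ ⬝ᵥ v i = c := by
    have h₁ := (intCast_comp_mem_box.mp (hvbox i)).1 r₀
    have h₂ := (intCast_comp_mem_box.mp (hvbox i)).2 r₀
    rw [update_self] at h₁ h₂
    exact le_antisymm h₂ h₁
  have hθ0 : 0 < θ := by linarith
  have hpos : ∀ i, 0 < (Fin.cons (1 - θ⁻¹) (θ⁻¹ • w) : Fin (t + 1) → 𝕜) i :=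
    Fin.cases (sub_pos.mpr (inv_lt_one_of_one_lt₀ hθ1))
      fun i => mul_pos (inv_pos.mpr hθ0) (hwpos i)
  refine ⟨t + 1, Fin.cons v₀ v, Fin.cons (1 - θ⁻¹) (θ⁻¹ • w), hv.cons hface hunit,
    Fin.cases hv₀ fun i => box_mono hlo hhi (hvbox i), hpos, ?_, ?_⟩
  · simp [Fin.sum_univ_succ, ← mul_sum, hwsum]
  · simp only [Fin.sum_univ_succ, Fin.cons_zero, Fin.cons_succ, Pi.smul_apply, smul_eq_mul,
      mul_smul, ← smul_sum, hwy]
    rw [smul_add, smul_smul, inv_mul_cancel₀ hθ0.ne']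
    module

theorem IsTotallyUnimodular.exists_affineIndependent_sum_eq [FloorRing 𝕜]
    (hD : D.IsTotallyUnimodular)
    (hinj : Injective (D.map (Int.cast : ℤ → 𝕜)).mulVec) {k : ℕ} (hk : 0 < k) (z : σ → ℤ) :
    ∃ (t : ℕ) (v : Fin t → σ → ℤ) (μ : Fin t → ℕ),
      AffineIndependent 𝕜 (fun i => (Int.cast ∘ v i : σ → 𝕜)) ∧ (∀ i, 0 < μ i) ∧
      ∑ i, μ i = k ∧ ∑ i, μ i • v i = z ∧
      ∀ i r (β : ℤ), ((D *ᵥ z) r ≤ k * β → (D *ᵥ v i) r ≤ β) ∧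
        (k * β ≤ (D *ᵥ z) r → β ≤ (D *ᵥ v i) r) := by
  have hk' : (0 : 𝕜) < k := by exact_mod_cast hk
  set x₀ : σ → 𝕜 := (k : 𝕜)⁻¹ • (Int.cast ∘ z)
  have hDx₀ (r) : (D.map Int.cast *ᵥ x₀) r = ((D *ᵥ z) r : 𝕜) / k := by
    simp [x₀, mulVec_smul, map_intCast_mulVec, div_eq_inv_mul]
  obtain ⟨t, v, w, hv, hvbox, hwpos, hwsum, hwx⟩ := hD.exists_isUnimodularFamily hinj
    (lo := fun r => ⌊(D.map Int.cast *ᵥ x₀) r⌋) (hi := fun r => ⌈(D.map Int.cast *ᵥ x₀) r⌉)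
    (fun r => Int.ceil_le_floor_add_one _)
    (mem_box_iff.mpr fun r => ⟨Int.floor_le _, Int.le_ceil _⟩)
  have hkx₀ : ∑ i, (k * w i) • (Int.cast ∘ v i : σ → 𝕜) = Int.cast ∘ z := by
    simp_rw [mul_smul, ← smul_sum, hwx, x₀, smul_smul, mul_inv_cancel₀ hk'.ne', one_smul]
  choose c hc using hv.integral_coeff (fun i => k * w i) k z
    (by rw [← mul_sum, hwsum, mul_one, Int.cast_natCast]) hkx₀
  have hcpos (i) : 0 < c i := by
    have : (0 : 𝕜) < c i := hc i ▸ mul_pos hk' (hwpos i)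
    exact_mod_cast this
  have hμ (i) : (((c i).toNat : ℕ) : 𝕜) = k * w i := by
    rw [hc i, ← Int.cast_natCast, Int.toNat_of_nonneg (hcpos i).le]
  refine ⟨t, v, fun i => (c i).toNat, hv.affineIndependent, fun i => by simpa using hcpos i,
    ?_, ?_, fun i r β => ?_⟩
  · exact_mod_cast (show ((∑ i, (c i).toNat : ℕ) : 𝕜) = k by
      push_cast [hμ, ← mul_sum, hwsum, mul_one]; rfl)
  · refine (Int.cast_injective (α := 𝕜)).comp_left ?_
    change Int.cast ∘ _ = Int.cast ∘ z
    rw [← hkx₀]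
    ext j
    simp only [Function.comp_apply, Finset.sum_apply, Pi.smul_apply, Int.cast_sum, smul_eq_mul]
    simp only [nsmul_eq_mul, Int.cast_mul, Int.cast_natCast, hμ]
  · have h := intCast_comp_mem_box.mp (hvbox i)
    have hlo := h.1 r
    have hhi := h.2 r
    simp only [hDx₀] at hlo hhi
    constructor <;> intro hβ
    · refine hhi.trans (Int.ceil_le.mpr ((div_le_iff₀ hk').mpr ?_))
      rw [mul_comm]; exact_mod_cast hβ
    · refine le_trans (Int.le_floor.mpr ((le_div_iff₀ hk').mpr ?_)) hlo
      rw [mul_comm]; exact_mod_cast hβ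

end Box

end Matrix

theorem stmt_0_general {m n : ℕ} (A : Matrix (Fin m) (Fin n) ℤ)
    (hTU : ∀ (r : ℕ) (φ : Fin r → Fin m) (ψ : Fin r → Fin n),
      Function.Injective φ → Function.Injective ψ →
      (A.submatrix φ ψ).det = 0 ∨ (A.submatrix φ ψ).det = 1 ∨
        (A.submatrix φ ψ).det = -1)
    (b : Fin m → ℤ)
    (k : ℕ) (hk : 0 < k) (zstar : Fin n → ℤ)
    (hzstar : ∀ i : Fin m, ∑ j, A i j * zstar j ≤ (k : ℤ) * b i) :
    ∃ (t : ℕ) (z : Fin t → Fin n → ℤ) (μ : Fin t → ℕ),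
      1 ≤ t ∧
      AffineIndependent ℝ (fun i : Fin t => fun j => (z i j : ℝ)) ∧
      (∀ i : Fin t, ∀ r : Fin m, ∑ j, A r j * z i j ≤ b r) ∧
      (∀ i, 0 < μ i) ∧ (∑ i, μ i) = k ∧
      (∀ j, zstar j = ∑ i, (μ i : ℤ) * z i j) ∧
      (∀ i j, (0 ≤ zstar j → 0 ≤ z i j) ∧ (zstar j ≤ 0 → z i j ≤ 0)) := by
  have hA : A.IsTotallyUnimodular := fun r φ ψ hφ hψ => by
    rcases hTU r φ ψ hφ hψ with h | h | h <;> rw [h]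
    exacts [⟨0, rfl⟩, ⟨1, rfl⟩, ⟨-1, rfl⟩]
  have hD := (fromRows_one_isTotallyUnimodular_iff A).mpr hA
  have hinj : Injective ((fromRows A 1).map (Int.cast : ℤ → ℝ)).mulVec := fun x y h => by
    ext j
    simpa [mulVec, dotProduct, one_apply] using congrFun h (.inr j)
  obtain ⟨t, z, μ, haff, hμ, hsum, hz, hrow⟩ := hD.exists_affineIndependent_sum_eq hinj hk zstar
  refine ⟨t, z, μ, Nat.pos_of_ne_zero ?_, haff, fun i r => (hrow i (.inl r) (b r)).1 (hzstar r),
    hμ, hsum, fun j => by simp [← hz, Finset.sum_apply], fun i j => ?_⟩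
  · rintro rfl
    exact hk.ne' (by simpa using hsum.symm)
  · have h := hrow i (.inr j) 0
    simp only [fromRows_mulVec, Sum.elim_inr, one_mulVec, mul_zero] at h
    exact ⟨h.2, h.1⟩

/-- sign-consistent integer Carathéodory property for polyhedra
defined by a totally unimodular matrix (Proposition on the Gijswijt–Regts
theorem, sharpened form). -/
theorem stmt_0 {m n : ℕ} (A : Matrix (Fin m) (Fin n) ℤ)
    (hTU : ∀ (r : ℕ) (φ : Fin r → Fin m) (ψ : Fin r → Fin n),
      Function.Injective φ → Function.Injective ψ →
      (A.submatrix φ ψ).det = 0 ∨ (A.submatrix φ ψ).det = 1 ∨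
        (A.submatrix φ ψ).det = -1)
    (b : Fin m → ℤ)
    (hQ : ∃ x : Fin n → ℝ, ∀ i : Fin m, ∑ j, (A i j : ℝ) * x j ≤ (b i : ℝ))
    (k : ℕ) (hk : 0 < k) (zstar : Fin n → ℤ)
    (hzstar : ∀ i : Fin m, ∑ j, A i j * zstar j ≤ (k : ℤ) * b i) :
    ∃ (t : ℕ) (z : Fin t → Fin n → ℤ) (μ : Fin t → ℕ),
      1 ≤ t ∧
      AffineIndependent ℝ (fun i : Fin t => fun j => (z i j : ℝ)) ∧
      (∀ i : Fin t, ∀ r : Fin m, ∑ j, A r j * z i j ≤ b r) ∧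
      (∀ i, 0 < μ i) ∧ (∑ i, μ i) = k ∧
      (∀ j, zstar j = ∑ i, (μ i : ℤ) * z i j) ∧
      (∀ i j, (0 ≤ zstar j → 0 ≤ z i j) ∧ (zstar j ≤ 0 → z i j ≤ 0)) :=
  stmt_0_general A hTU b k hk zstar hzstar
end

section
/- Let t ≥ 1 and let φ, γ : {0, 1, …, t} → ℤ satisfy φ(0) = γ(0) = 0 and φ(k) ≤ γ(k) for all k. Let Q := {x ∈ ℝ^t : φ(k) ≤ x(1) + ⋯ + x(k) ≤ γ(k) for k = 1, …, t}. Let Z ⊆ {1, …, t} be nonempty and let {h₁, …, k₁}, …, {h_q, …, k_q} be the maximal segments of Z (the maximal runs of consecutive integers contained in Z). Then min{x̃(Z) : x ∈ Q} = Σ_{r=1}^{q} (φ(k_r) − γ(h_r − 1)) and max{x̃(Z) : x ∈ Q} = Σ_{r=1}^{q} (γ(k_r) − φ(h_r − 1)); in particular, Q is nonempty and both optima are attained. -/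
/-!
Write `P x j = x(1) + ⋯ + x(j)`, so that `P x 0 = 0`. Since `Z` is the disjoint union of its
maximal segments `{h, …, k}`, we have `x̃(Z) = Σ_r (P x (k_r) − P x (h_r − 1))`, and every term is
at least `φ(k_r) − γ(h_r − 1)` on `Q`. The bound is attained by the vector whose prefix sums are
`φ` on `Z` and `γ` off `Z`: it lies in `Q` because `φ ≤ γ`, and by maximality `k_r ∈ Z` and
`h_r − 1 ∉ Z`. The maximum follows by applying this to `−x`, which satisfies `−γ ≤ P (−x) ≤ −φ`.
-/

open Finset

def prefixSum (x : ℕ → ℝ) (j : ℕ) : ℝ := ∑ i ∈ Icc 1 j, x i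

def prefixBox (t : ℕ) (lo hi : ℕ → ℝ) : Set (ℕ → ℝ) :=
  {x | ∀ j ∈ Icc 1 t, lo j ≤ prefixSum x j ∧ prefixSum x j ≤ hi j}

@[simp]
lemma prefixSum_zero (x : ℕ → ℝ) : prefixSum x 0 = 0 := by
  simp [prefixSum]

@[simp]
lemma prefixSum_neg (x : ℕ → ℝ) (j : ℕ) : prefixSum (-x) j = -prefixSum x j := by
  simp [prefixSum]

lemma sum_Icc_eq_prefixSum_sub (x : ℕ → ℝ) {a b : ℕ} (ha : 1 ≤ a) (hab : a ≤ b + 1) :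
    ∑ i ∈ Icc a b, x i = prefixSum x b - prefixSum x (a - 1) := by
  obtain ⟨c, rfl⟩ := Nat.exists_eq_add_of_le' ha
  have hIoc : ∀ m n, Icc (m + 1) n = Ioc m n := fun _ _ => Icc_add_one_left_eq_Ioc _ _
  rw [eq_sub_iff_add_eq', prefixSum, prefixSum, Nat.add_sub_cancel, hIoc, ← zero_add 1, hIoc,
    hIoc]
  exact sum_Ioc_consecutive x (Nat.zero_le _) (by omega)

lemma prefixSum_sub_pred (S : ℕ → ℝ) (j : ℕ) :
    prefixSum (fun i => S i - S (i - 1)) j = S j - S 0 := by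
  induction j with
  | zero => simp
  | succ n ih =>
    rw [prefixSum, sum_Icc_succ_top (by omega), ← prefixSum, ih, Nat.add_sub_cancel]
    ring

lemma sum_biUnion_Icc_eq_sum_prefixSum_sub {ι : Type*} [Fintype ι] (x : ℕ → ℝ) (a b : ι → ℕ)
    (hab : ∀ r, 1 ≤ a r ∧ a r ≤ b r)
    (hdisj : ∀ r r', r ≠ r' → Disjoint (Icc (a r) (b r)) (Icc (a r') (b r'))) :
    ∑ i ∈ univ.biUnion (fun r => Icc (a r) (b r)), x i
      = ∑ r, (prefixSum x (b r) - prefixSum x (a r - 1)) := by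
  rw [sum_biUnion fun r _ r' _ hne => hdisj r r' hne]
  exact sum_congr rfl fun r _ => sum_Icc_eq_prefixSum_sub x (hab r).1 (by have := hab r; omega)

section PrefixBox

variable {t : ℕ} {lo hi : ℕ → ℝ}

lemma neg_mem_prefixBox {x : ℕ → ℝ} (hx : x ∈ prefixBox t lo hi) :
    -x ∈ prefixBox t (-hi) (-lo) := fun j hj => by
  simpa [and_comm] using hx j hj

lemma prefixSum_le_of_mem_prefixBox {x : ℕ → ℝ} (hx : x ∈ prefixBox t lo hi) (hhi : 0 ≤ hi 0)
    {j : ℕ} (hj : j ≤ t) : prefixSum x j ≤ hi j := by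
  rcases Nat.eq_zero_or_pos j with rfl | hj0
  · simpa using hhi
  · exact (hx j (mem_Icc.2 ⟨hj0, hj⟩)).2

lemma sub_pred_mem_prefixBox {S : ℕ → ℝ} (hS0 : S 0 = 0)
    (hS : ∀ j ∈ Icc 1 t, lo j ≤ S j ∧ S j ≤ hi j) :
    (fun i => S i - S (i - 1)) ∈ prefixBox t lo hi := fun j hj => by
  simpa [prefixSum_sub_pred, hS0] using hS j hj

variable {ι : Type*} [Fintype ι] {Z : Finset ℕ} (a b : ι → ℕ)

theorem isLeast_sum_prefixBox (hhi0 : hi 0 = 0)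
    (hle : ∀ j ∈ Icc 1 t, lo j ≤ hi j)
    (hab : ∀ r, 1 ≤ a r ∧ a r ≤ b r ∧ b r ≤ t)
    (hcover : Z = univ.biUnion fun r => Icc (a r) (b r))
    (hgap : ∀ r, a r - 1 ∉ Z)
    (hdisj : ∀ r r', r ≠ r' → Disjoint (Icc (a r) (b r)) (Icc (a r') (b r'))) :
    IsLeast ((fun x => ∑ i ∈ Z, x i) '' prefixBox t lo hi) (∑ r, (lo (b r) - hi (a r - 1))) := by
  have hsum : ∀ x : ℕ → ℝ,
      ∑ i ∈ Z, x i = ∑ r, (prefixSum x (b r) - prefixSum x (a r - 1)) := fun x => by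
    rw [hcover]
    exact sum_biUnion_Icc_eq_sum_prefixSum_sub x a b (fun r => ⟨(hab r).1, (hab r).2.1⟩) hdisj
  have hbZ : ∀ r, b r ∈ Z := fun r => by
    rw [hcover]
    exact mem_biUnion.2 ⟨r, mem_univ r, mem_Icc.2 ⟨(hab r).2.1, le_rfl⟩⟩
  constructor
  · set S : ℕ → ℝ := fun j => if j ∈ Z then lo j else hi j
    have h0Z : 0 ∉ Z := by
      simpa [hcover, ← Nat.one_le_iff_ne_zero] using fun r => (hab r).1
    have hS0 : S 0 = 0 := by simp [S, h0Z, hhi0]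
    have hSbox : ∀ j ∈ Icc 1 t, lo j ≤ S j ∧ S j ≤ hi j := fun j hj => by
      by_cases hjZ : j ∈ Z <;> simp [S, hjZ, hle j hj]
    refine ⟨_, sub_pred_mem_prefixBox hS0 hSbox, ?_⟩
    simp only [hsum, prefixSum_sub_pred, hS0, sub_zero]
    exact sum_congr rfl fun r _ => by simp [S, hbZ r, hgap r]
  · rintro _ ⟨x, hx, rfl⟩
    show _ ≤ ∑ i ∈ Z, x i
    rw [hsum]
    refine sum_le_sum fun r _ => sub_le_sub ?_ ?_
    · exact (hx (b r) (mem_Icc.2 ⟨(hab r).1.trans (hab r).2.1, (hab r).2.2⟩)).1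
    · exact prefixSum_le_of_mem_prefixBox hx hhi0.ge (by have := hab r; omega)

theorem isGreatest_sum_prefixBox (hlo0 : lo 0 = 0)
    (hle : ∀ j ∈ Icc 1 t, lo j ≤ hi j)
    (hab : ∀ r, 1 ≤ a r ∧ a r ≤ b r ∧ b r ≤ t)
    (hcover : Z = univ.biUnion fun r => Icc (a r) (b r))
    (hgap : ∀ r, a r - 1 ∉ Z)
    (hdisj : ∀ r r', r ≠ r' → Disjoint (Icc (a r) (b r)) (Icc (a r') (b r'))) :
    IsGreatest ((fun x => ∑ i ∈ Z, x i) '' prefixBox t lo hi)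
      (∑ r, (hi (b r) - lo (a r - 1))) := by
  have hneg := isLeast_sum_prefixBox a b (lo := -hi) (hi := -lo) (by simp [hlo0])
    (fun j hj => neg_le_neg (hle j hj)) hab hcover hgap hdisj
  have hval : ∑ r, ((-hi) (b r) - (-lo) (a r - 1)) = -∑ r, (hi (b r) - lo (a r - 1)) := by
    simp only [Pi.neg_apply, ← sum_neg_distrib]
    exact sum_congr rfl fun r _ => by ring
  rw [hval] at hneg
  obtain ⟨⟨y, hy, hyval⟩, hlower⟩ := hneg
  constructor
  · refine ⟨-y, by simpa using neg_mem_prefixBox hy, ?_⟩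
    simpa [sum_neg_distrib, neg_eq_iff_eq_neg] using hyval
  · rintro _ ⟨x, hx, rfl⟩
    simpa [sum_neg_distrib, le_sub_iff_add_le] using hlower ⟨-x, neg_mem_prefixBox hx, rfl⟩

end PrefixBox

theorem stmt_2_general (t : ℕ) (φ γ : ℕ → ℤ)
    (hφ0 : φ 0 = 0) (hγ0 : γ 0 = 0) (hφγ : ∀ j ≤ t, φ j ≤ γ j)
    (Z : Finset ℕ)
    (q : ℕ) (h k : Fin q → ℕ)
    (hhk : ∀ r, 1 ≤ h r ∧ h r ≤ k r ∧ k r ≤ t)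
    (hcover : Z = Finset.univ.biUnion fun r => Finset.Icc (h r) (k r))
    (hmax : ∀ r, h r - 1 ∉ Z ∧ k r + 1 ∉ Z)
    (hdisj : ∀ r r', r ≠ r' →
      Disjoint (Finset.Icc (h r) (k r)) (Finset.Icc (h r') (k r'))) :
    IsLeast ((fun x : ℕ → ℝ => ∑ i ∈ Z, x i) ''
        {x : ℕ → ℝ | ∀ j ∈ Finset.Icc 1 t,
          (φ j : ℝ) ≤ ∑ i ∈ Finset.Icc 1 j, x i ∧
            ∑ i ∈ Finset.Icc 1 j, x i ≤ (γ j : ℝ)})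
      (∑ r : Fin q, ((φ (k r) : ℝ) - (γ (h r - 1) : ℝ))) ∧
    IsGreatest ((fun x : ℕ → ℝ => ∑ i ∈ Z, x i) ''
        {x : ℕ → ℝ | ∀ j ∈ Finset.Icc 1 t,
          (φ j : ℝ) ≤ ∑ i ∈ Finset.Icc 1 j, x i ∧
            ∑ i ∈ Finset.Icc 1 j, x i ≤ (γ j : ℝ)})
      (∑ r : Fin q, ((γ (k r) : ℝ) - (φ (h r - 1) : ℝ))) := by
  have hlo0 : (φ 0 : ℝ) = 0 := by simp [hφ0]
  have hhi0 : (γ 0 : ℝ) = 0 := by simp [hγ0]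
  have hle : ∀ j ∈ Icc 1 t, (φ j : ℝ) ≤ γ j := fun j hj =>
    Int.cast_le.2 (hφγ j (mem_Icc.1 hj).2)
  have hgap : ∀ r, h r - 1 ∉ Z := fun r => (hmax r).1
  exact ⟨isLeast_sum_prefixBox h k hhi0 hle hhk hcover hgap hdisj,
    isGreatest_sum_prefixBox h k hlo0 hle hhk hcover hgap hdisj⟩

/-- extreme values of x̃(Z) over an elementary prefix-bounded
g-polymatroid, expressed via the maximal segments of Z (Lemma on (p*, b*)). -/
theorem stmt_2 (t : ℕ) (ht : 1 ≤ t) (φ γ : ℕ → ℤ)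
    (hφ0 : φ 0 = 0) (hγ0 : γ 0 = 0) (hφγ : ∀ j ≤ t, φ j ≤ γ j)
    (Z : Finset ℕ) (hZ : Z ⊆ Finset.Icc 1 t) (hZne : Z.Nonempty)
    (q : ℕ) (h k : Fin q → ℕ)
    (hhk : ∀ r, 1 ≤ h r ∧ h r ≤ k r ∧ k r ≤ t)
    (hcover : Z = Finset.univ.biUnion fun r => Finset.Icc (h r) (k r))
    (hmax : ∀ r, h r - 1 ∉ Z ∧ k r + 1 ∉ Z)
    (hdisj : ∀ r r', r ≠ r' →
      Disjoint (Finset.Icc (h r) (k r)) (Finset.Icc (h r') (k r'))) :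
    IsLeast ((fun x : ℕ → ℝ => ∑ i ∈ Z, x i) ''
        {x : ℕ → ℝ | ∀ j ∈ Finset.Icc 1 t,
          (φ j : ℝ) ≤ ∑ i ∈ Finset.Icc 1 j, x i ∧
            ∑ i ∈ Finset.Icc 1 j, x i ≤ (γ j : ℝ)})
      (∑ r : Fin q, ((φ (k r) : ℝ) - (γ (h r - 1) : ℝ))) ∧
    IsGreatest ((fun x : ℕ → ℝ => ∑ i ∈ Z, x i) ''
        {x : ℕ → ℝ | ∀ j ∈ Finset.Icc 1 t,
          (φ j : ℝ) ≤ ∑ i ∈ Finset.Icc 1 j, x i ∧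
            ∑ i ∈ Finset.Icc 1 j, x i ≤ (γ j : ℝ)})
      (∑ r : Fin q, ((γ (k r) : ℝ) - (φ (h r - 1) : ℝ))) :=
  stmt_2_general t φ γ hφ0 hγ0 hφγ Z q h k hhk hcover hmax hdisj
end

section
/- Let S₀ be a finite set, let p₀ : 2^{S₀} → ℝ be fully supermodular and b₀ : 2^{S₀} → ℝ be fully submodular with p₀(∅) = b₀(∅) = 0 and p₀(S₀) = b₀(S₀) = 0, and let f₀, g₀ ∈ ℝ^{S₀} with f₀ ≤ g₀. Then the set {x ∈ ℝ^{S₀} : x̃(S₀) = 0, p₀(Z) ≤ x̃(Z) and x̃(Z) ≤ b₀(Z) for every Z ⊆ S₀, and f₀ ≤ x ≤ g₀} is nonempty if and only if p₀(Y₁) + f̃₀(Y₂ − Y₁) ≤ b₀(Y₂) + g̃₀(Y₁ − Y₂) holds for every Y₁, Y₂ ⊆ S₀. -/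
/-!
Frank's discrete sandwich theorem: a supermodular `p` below a submodular `b` admits a modular
`c + x̃` between them. By induction on the ground set: for a new element `a`, any value
`x(a) = α` between `max_X (p(X + a) - b(X))` and `min_Y (b(Y + a) - p(Y))` works (supermodularity
of `p` and submodularity of `b` make this interval nonempty), and the remaining coordinates are
sandwiched between `max (p Z) (p (Z + a) - α)` and `min (b Z) (b (Z + a) - α)`, which are again
super- and submodular.

The box is absorbed into the lower function `q(X) = max_Y (p(Y) + f̃(X - Y) - g̃(Y - X))`,
the best lower bound on `x̃(X)` implied by `p ≤ x̃` and `f ≤ x ≤ g`. It is supermodular when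
`f ≤ g`, and `q ≤ b` is exactly the stated condition. Conversely `x̃ ≥ q` gives `x ≥ f` via
`q({s}) ≥ p(∅) + f(s)` and `x ≤ g` via `q(S₀ - s) ≥ p(S₀) - g(s)`.
-/

open Finset

section Sandwich

variable {S : Type*} [DecidableEq S]

def SupermodularOn (T : Finset S) (p : Finset S → ℝ) : Prop :=
  ∀ ⦃X⦄, X ⊆ T → ∀ ⦃Y⦄, Y ⊆ T → p X + p Y ≤ p (X ∪ Y) + p (X ∩ Y)

def SubmodularOn (T : Finset S) (b : Finset S → ℝ) : Prop :=
  ∀ ⦃X⦄, X ⊆ T → ∀ ⦃Y⦄, Y ⊆ T → b (X ∪ Y) + b (X ∩ Y) ≤ b X + b Y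

variable {T : Finset S} {p b : Finset S → ℝ} {a : S}

lemma supermodularOn_neg_iff : SupermodularOn T (fun Z => -b Z) ↔ SubmodularOn T b := by
  refine forall₂_congr fun X _ => forall₂_congr fun Y _ => ?_
  constructor <;> intro h <;> linarith

lemma forall_subset_insert_iff {P : Finset S → Prop} :
    (∀ Z ⊆ insert a T, P Z) ↔ ∀ Z ⊆ T, P Z ∧ P (insert a Z) := by
  refine ⟨fun h Z hZ => ⟨h Z (hZ.trans (subset_insert a T)), h _ (insert_subset_insert a hZ)⟩,
    fun h Z hZ => ?_⟩
  by_cases haZ : a ∈ Z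
  · simpa [insert_erase haZ] using (h (Z.erase a) (subset_insert_iff.1 hZ)).2
  · exact (h Z ((subset_insert_iff_of_notMem haZ).1 hZ)).1

lemma SupermodularOn.max_insert (hp : SupermodularOn (insert a T) p) (ha : a ∉ T) (c : ℝ) :
    SupermodularOn T fun Z => max (p Z) (p (insert a Z) - c) := by
  intro X hX Y hY
  have haX : a ∉ X := fun h => ha (hX h)
  have haY : a ∉ Y := fun h => ha (hY h)
  have hX' : X ⊆ insert a T := hX.trans (subset_insert a T)
  have hY' : Y ⊆ insert a T := hY.trans (subset_insert a T)
  have hXa := insert_subset_insert a hX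
  have hYa := insert_subset_insert a hY
  have h₁ := hp hX' hY'
  have h₂ := hp hXa hYa
  have h₃ := hp hX' hYa
  have h₄ := hp hXa hY'
  rw [← insert_union_distrib, ← insert_inter_distrib] at h₂
  rw [union_insert, inter_insert_of_notMem haX] at h₃
  rw [insert_union, insert_inter_of_notMem haY] at h₄
  have := le_max_left (p (X ∪ Y)) (p (insert a (X ∪ Y)) - c)
  have := le_max_right (p (X ∪ Y)) (p (insert a (X ∪ Y)) - c)
  have := le_max_left (p (X ∩ Y)) (p (insert a (X ∩ Y)) - c)
  have := le_max_right (p (X ∩ Y)) (p (insert a (X ∩ Y)) - c)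
  -- each choice of branches of the two maxima on the left is one of `h₁`, …, `h₄`
  rcases max_choice (p X) (p (insert a X) - c) with e₁ | e₁ <;>
    rcases max_choice (p Y) (p (insert a Y) - c) with e₂ | e₂ <;>
    simp only [e₁, e₂] <;> linarith

lemma SubmodularOn.min_insert (hb : SubmodularOn (insert a T) b) (ha : a ∉ T) (c : ℝ) :
    SubmodularOn T fun Z => min (b Z) (b (insert a Z) - c) := by
  have := (supermodularOn_neg_iff.2 hb).max_insert ha (-c)
  rw [← supermodularOn_neg_iff]
  convert this using 2 with Z
  rw [← max_neg_neg]
  ring_nf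

lemma insert_add_le_insert_add (hp : SupermodularOn T p) (hb : SubmodularOn T b)
    (hpb : ∀ Z ⊆ T, p Z ≤ b Z) {X Y : Finset S} (hX : insert a X ⊆ T) (hY : insert a Y ⊆ T)
    (haX : a ∉ X) (haY : a ∉ Y) : p (insert a X) + p Y ≤ b (insert a Y) + b X := by
  obtain ⟨-, hX'⟩ := insert_subset_iff.1 hX
  obtain ⟨-, hY'⟩ := insert_subset_iff.1 hY
  calc p (insert a X) + p Y ≤ p (insert a (X ∪ Y)) + p (X ∩ Y) := by
        simpa [insert_union, insert_inter_of_notMem haY] using hp hX hY'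
    _ ≤ b (insert a (X ∪ Y)) + b (X ∩ Y) :=
        add_le_add (hpb _ (insert_union a X Y ▸ union_subset hX hY'))
          (hpb _ (inter_subset_left.trans hX'))
    _ ≤ b (insert a Y) + b X := by
        simpa [union_insert, inter_insert_of_notMem haX, add_comm] using hb hX' hY

lemma exists_forall_insert_sub_le_le (ha : a ∉ T) (hp : SupermodularOn (insert a T) p)
    (hb : SubmodularOn (insert a T) b) (hpb : ∀ Z ⊆ insert a T, p Z ≤ b Z) :
    ∃ α, ∀ Z ⊆ T, p (insert a Z) - b Z ≤ α ∧ α ≤ b (insert a Z) - p Z := by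
  have hne : T.powerset.Nonempty := ⟨∅, empty_mem_powerset T⟩
  refine ⟨T.powerset.sup' hne fun X => p (insert a X) - b X, fun Z hZ => ⟨?_, ?_⟩⟩
  · exact le_sup' (fun X => p (insert a X) - b X) (mem_powerset.2 hZ)
  · refine sup'_le _ _ fun X hX => ?_
    have := insert_add_le_insert_add hp hb hpb (insert_subset_insert a (mem_powerset.1 hX))
      (insert_subset_insert a hZ) (fun h => ha (mem_powerset.1 hX h)) (fun h => ha (hZ h))
    linarith

theorem exists_modular_between (hp : SupermodularOn T p) (hb : SubmodularOn T b)
    (hpb : ∀ Z ⊆ T, p Z ≤ b Z) :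
    ∃ (c : ℝ) (x : S → ℝ), ∀ Z ⊆ T, p Z ≤ c + ∑ s ∈ Z, x s ∧ c + ∑ s ∈ Z, x s ≤ b Z := by
  induction T using Finset.induction_on generalizing p b with
  | empty => exact ⟨p ∅, 0, by simpa [subset_empty] using hpb⟩
  | @insert a T ha ih =>
    obtain ⟨α, hα⟩ := exists_forall_insert_sub_le_le ha hp hb hpb
    have hpb' : ∀ Z ⊆ T, max (p Z) (p (insert a Z) - α) ≤ min (b Z) (b (insert a Z) - α) := by
      intro Z hZ
      have := forall_subset_insert_iff.1 hpb Z hZ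
      have := hα Z hZ
      exact max_le (le_min (by linarith) (by linarith)) (le_min (by linarith) (by linarith))
    obtain ⟨c, x, hx⟩ := ih (hp.max_insert ha α) (hb.min_insert ha α) hpb'
    refine ⟨c, Function.update x a α, forall_subset_insert_iff.2 fun Z hZ => ?_⟩
    have haZ : a ∉ Z := fun h => ha (hZ h)
    obtain ⟨hpx, hxb⟩ := hx Z hZ
    rw [max_le_iff] at hpx
    rw [le_min_iff] at hxb
    rw [sum_insert haZ, sum_update_of_notMem haZ, Function.update_self]
    exact ⟨⟨by linarith, by linarith⟩, by linarith, by linarith⟩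

end Sandwich

section Box

variable {S : Type*} [DecidableEq S]

/-- The minimum of `x̃(X) - x̃(Y)` over `f ≤ x ≤ g`. -/
def minBoxDiff (f g : S → ℝ) (X Y : Finset S) : ℝ :=
  ∑ s ∈ X \ Y, f s - ∑ s ∈ Y \ X, g s

lemma minBoxDiff_le_sum_sub_sum {f g x : S → ℝ} (hx : ∀ s, f s ≤ x s ∧ x s ≤ g s)
    (X Y : Finset S) : minBoxDiff f g X Y ≤ ∑ s ∈ X, x s - ∑ s ∈ Y, x s := by
  have hXY := sum_inter_add_sum_sdiff X Y x
  have hYX := sum_inter_add_sum_sdiff Y X x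
  have hf : ∑ s ∈ X \ Y, f s ≤ ∑ s ∈ X \ Y, x s := sum_le_sum fun s _ => (hx s).1
  have hg : ∑ s ∈ Y \ X, x s ≤ ∑ s ∈ Y \ X, g s := sum_le_sum fun s _ => (hx s).2
  rw [inter_comm] at hYX
  unfold minBoxDiff
  linarith

variable [Fintype S]

def boxedLowerBound (p : Finset S → ℝ) (f g : S → ℝ) (X : Finset S) : ℝ :=
  univ.sup' univ_nonempty fun Y => p Y + minBoxDiff f g X Y

variable {p : Finset S → ℝ} {f g : S → ℝ}

lemma minBoxDiff_eq_sum (X Y : Finset S) :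
    minBoxDiff f g X Y =
      ∑ s, ((if s ∈ X \ Y then f s else 0) - if s ∈ Y \ X then g s else 0) := by
  rw [sum_sub_distrib, Fintype.sum_ite_mem, Fintype.sum_ite_mem, minBoxDiff]

lemma minBoxDiff_add_le (hfg : ∀ s, f s ≤ g s) (A B Y Y' : Finset S) :
    minBoxDiff f g A Y + minBoxDiff f g B Y' ≤
      minBoxDiff f g (A ∪ B) (Y ∪ Y') + minBoxDiff f g (A ∩ B) (Y ∩ Y') := by
  simp only [minBoxDiff_eq_sum, ← sum_add_distrib]
  refine sum_le_sum fun s _ => ?_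
  by_cases hA : s ∈ A <;> by_cases hB : s ∈ B <;> by_cases hY : s ∈ Y <;>
    by_cases hY' : s ∈ Y' <;> simp [hA, hB, hY, hY'] <;> linarith [hfg s]

lemma le_boxedLowerBound (X Y : Finset S) : p Y + minBoxDiff f g X Y ≤ boxedLowerBound p f g X :=
  le_sup' (fun Y => p Y + minBoxDiff f g X Y) (mem_univ Y)

lemma le_boxedLowerBound_self (X : Finset S) : p X ≤ boxedLowerBound p f g X := by
  simpa [minBoxDiff] using le_boxedLowerBound (p := p) (f := f) (g := g) X X

lemma boxedLowerBound_le_iff {X : Finset S} {r : ℝ} :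
    boxedLowerBound p f g X ≤ r ↔ ∀ Y, p Y + ∑ s ∈ X \ Y, f s ≤ r + ∑ s ∈ Y \ X, g s := by
  simp only [boxedLowerBound, sup'_le_iff, mem_univ, true_implies, minBoxDiff]
  exact forall_congr' fun Y => by constructor <;> intro h <;> linarith

lemma boxedLowerBound_le_sum {x : S → ℝ} (hpx : ∀ Z, p Z ≤ ∑ s ∈ Z, x s)
    (hx : ∀ s, f s ≤ x s ∧ x s ≤ g s) (X : Finset S) :
    boxedLowerBound p f g X ≤ ∑ s ∈ X, x s :=
  sup'_le _ _ fun Y _ => by linarith [hpx Y, minBoxDiff_le_sum_sub_sum hx X Y]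

lemma supermodularOn_boxedLowerBound (hp : SupermodularOn univ p) (hfg : ∀ s, f s ≤ g s) :
    SupermodularOn univ (boxedLowerBound p f g) := by
  intro A _ B _
  obtain ⟨Y, -, hY⟩ := exists_mem_eq_sup' univ_nonempty fun Y => p Y + minBoxDiff f g A Y
  obtain ⟨Y', -, hY'⟩ := exists_mem_eq_sup' univ_nonempty fun Y' => p Y' + minBoxDiff f g B Y'
  calc boxedLowerBound p f g A + boxedLowerBound p f g B
      = (p Y + p Y') + (minBoxDiff f g A Y + minBoxDiff f g B Y') := by
        rw [boxedLowerBound, boxedLowerBound, hY, hY']; ring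
    _ ≤ (p (Y ∪ Y') + p (Y ∩ Y')) +
        (minBoxDiff f g (A ∪ B) (Y ∪ Y') + minBoxDiff f g (A ∩ B) (Y ∩ Y')) :=
        add_le_add (hp (subset_univ Y) (subset_univ Y')) (minBoxDiff_add_le hfg A B Y Y')
    _ ≤ boxedLowerBound p f g (A ∪ B) + boxedLowerBound p f g (A ∩ B) := by
        linarith [le_boxedLowerBound (p := p) (f := f) (g := g) (A ∪ B) (Y ∪ Y'),
          le_boxedLowerBound (p := p) (f := f) (g := g) (A ∩ B) (Y ∩ Y')]

lemma mem_box_of_boxedLowerBound_le_sum {x : S → ℝ}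
    (hx : ∀ Z, boxedLowerBound p f g Z ≤ ∑ s ∈ Z, x s) (hp0 : p ∅ = 0)
    (hpx : ∑ s, x s = p univ) (s : S) : f s ≤ x s ∧ x s ≤ g s := by
  constructor
  · simpa [minBoxDiff, hp0] using (le_boxedLowerBound {s} ∅).trans (hx {s})
  · have := (le_boxedLowerBound (univ.erase s) univ).trans (hx (univ.erase s))
    rw [minBoxDiff, sdiff_eq_empty_iff_subset.2 (erase_subset s univ),
      sdiff_erase_self (mem_univ s), sum_erase_eq_sub (mem_univ s), hpx, sum_empty,
      sum_singleton] at this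
    linarith

end Box

/-- feasibility of the intersection of two 0-base-polyhedra
with a box (Proposition on p₀, b₀, f₀, g₀). -/
theorem stmt_3 {S : Type*} [Fintype S] [DecidableEq S]
    (p b : Finset S → ℝ) (hp0 : p ∅ = 0) (hb0 : b ∅ = 0)
    (hsuper : ∀ X Y : Finset S, p X + p Y ≤ p (X ∪ Y) + p (X ∩ Y))
    (hsub : ∀ X Y : Finset S, b (X ∪ Y) + b (X ∩ Y) ≤ b X + b Y)
    (hpS : p Finset.univ = 0) (hbS : b Finset.univ = 0)
    (f g : S → ℝ) (hfg : ∀ s, f s ≤ g s) :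
    (∃ x : S → ℝ, (∑ s, x s) = 0 ∧
        (∀ Z : Finset S, p Z ≤ ∑ s ∈ Z, x s ∧ ∑ s ∈ Z, x s ≤ b Z) ∧
        (∀ s, f s ≤ x s ∧ x s ≤ g s)) ↔
      (∀ Y₁ Y₂ : Finset S,
        p Y₁ + ∑ s ∈ Y₂ \ Y₁, f s ≤ b Y₂ + ∑ s ∈ Y₁ \ Y₂, g s) := by
  rw [← forall_comm, ← forall_congr' fun X => boxedLowerBound_le_iff (p := p) (r := b X)]
  constructor
  · rintro ⟨x, -, hx, hfxg⟩ X
    exact (boxedLowerBound_le_sum (fun Z => (hx Z).1) hfxg X).trans (hx X).2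
  · intro hqb
    obtain ⟨c, x, hx⟩ := exists_modular_between
      (supermodularOn_boxedLowerBound (fun X _ Y _ => hsuper X Y) hfg)
      (fun X _ Y _ => hsub X Y) fun Z _ => hqb Z
    have hx₀ := hx ∅ (empty_subset _)
    rw [sum_empty, add_zero] at hx₀
    have hc : c = 0 :=
      le_antisymm (hb0 ▸ hx₀.2) (hp0 ▸ (le_boxedLowerBound_self (p := p) ∅).trans hx₀.1)
    subst hc
    simp only [zero_add, subset_univ, true_implies] at hx
    have hsum : ∑ s, x s = 0 := le_antisymm (hbS ▸ (hx univ).2)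
      (hpS ▸ (le_boxedLowerBound_self univ).trans (hx univ).1)
    exact ⟨x, hsum, fun Z => ⟨(le_boxedLowerBound_self Z).trans (hx Z).1, (hx Z).2⟩,
      mem_box_of_boxedLowerBound_le_sum (fun Z => (hx Z).1) hp0 (hsum.trans hpS.symm)⟩
end

section
/- Let S be a finite set, let b*₁, b*₂ : 2^S → ℝ be fully submodular set-functions with b*₁(∅) = b*₂(∅) = 0 and b*₁(S) = b*₂(S) = H, and let f, g ∈ ℝ^S with f ≤ g. Let B₁ := {x ∈ ℝ^S : x̃(S) = H and x̃(Z) ≤ b*₁(Z) for every Z ⊆ S} and B₂ := {x ∈ ℝ^S : x̃(S) = H and x̃(Z) ≤ b*₂(Z) for every Z ⊆ S} be the corresponding base-polyhedra, and T := {x ∈ ℝ^S : f ≤ x ≤ g}. Then B₁ ∩ B₂ ∩ T is nonempty if and only if H ≤ b*₁(X') + b*₂(X'') + g̃(X'ᶜ ∩ X''ᶜ) − f̃(X' ∩ X'') holds for every X', X'' ⊆ S. -/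
open Finset

lemma exists_ub (c : Finset ℝ) (h : c.Nonempty) : ∃ α ∈ c, ∀ y ∈ c, y ≤ α :=
  ⟨c.max' h, c.max'_mem h, fun y hy => c.le_max' y hy⟩

theorem key_lemma {S : Type*} [DecidableEq S] :
    ∀ (n : ℕ) (G : Finset S) (b1 b2 : Finset S → ℝ) (H : ℝ) (f g : S → ℝ),
      G.card = n →
      b1 ∅ = 0 → b2 ∅ = 0 → b1 G = H → b2 G = H →
      (∀ X Y : Finset S, X ⊆ G → Y ⊆ G → b1 (X ∪ Y) + b1 (X ∩ Y) ≤ b1 X + b1 Y) →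
      (∀ X Y : Finset S, X ⊆ G → Y ⊆ G → b2 (X ∪ Y) + b2 (X ∩ Y) ≤ b2 X + b2 Y) →
      (∀ s, f s ≤ g s) →
      (∀ X' X'' : Finset S, X' ⊆ G → X'' ⊆ G →
          H ≤ b1 X' + b2 X'' + ∑ t ∈ G \ (X' ∪ X''), g t - ∑ t ∈ X' ∩ X'', f t) →
      ∃ x : S → ℝ, (∑ t ∈ G, x t) = H ∧
        (∀ Z : Finset S, Z ⊆ G → ∑ t ∈ Z, x t ≤ b1 Z) ∧
        (∀ Z : Finset S, Z ⊆ G → ∑ t ∈ Z, x t ≤ b2 Z) ∧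
        (∀ t ∈ G, f t ≤ x t ∧ x t ≤ g t) := by
  intro n
  induction n with
  | zero =>
    intro G b1 b2 H f g hcard hb10 hb20 hb1G hb2G hsub1 hsub2 hfg hc
    rw [Finset.card_eq_zero] at hcard
    subst hcard
    refine ⟨f, by simp; rw [← hb1G, hb10], ?_, ?_, by simp⟩ <;>
    · intro Z hZ
      rw [Finset.subset_empty] at hZ
      subst hZ
      simp [hb10, hb20]
  | succ n ih =>
    intro G b1 b2 H f g hcard hb10 hb20 hb1G hb2G hsub1 hsub2 hfg hc
    have hGne : G.Nonempty := Finset.card_pos.mp (by omega)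
    obtain ⟨s, hs⟩ := hGne
    set G' : Finset S := G.erase s with hG'def
    have hG'card : G'.card = n := by rw [hG'def, Finset.card_erase_of_mem hs, hcard]; omega
    have hsG' : s ∉ G' := Finset.notMem_erase s G
    have hG'G : G' ⊆ G := Finset.erase_subset s G
    have hinsG' : insert s G' = G := Finset.insert_erase hs
    have hins : ∀ {T : Finset S}, T ⊆ G' → insert s T ⊆ G :=
      fun hT => Finset.insert_subset hs (hT.trans hG'G)
    have hnotmem : ∀ {T : Finset S}, T ⊆ G' → s ∉ T := fun hT h => hsG' (hT h)
    -- complement rewriting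
    have hsdiff : ∀ T : Finset S, G \ insert s T = G' \ T := by
      intro T; ext t; simp [hG'def, Finset.mem_erase]; tauto
    have hGdiff : ∀ T : Finset S, T ⊆ G' → G \ T = insert s (G' \ T) := by
      intro T hT; ext t
      simp [hG'def, Finset.mem_erase]
      constructor
      · rintro ⟨h1, h2⟩
        by_cases hts : t = s
        · exact Or.inl hts
        · exact Or.inr ⟨⟨hts, h1⟩, h2⟩
      · rintro (rfl | ⟨⟨h1, h2⟩, h3⟩)
        · exact ⟨hs, hnotmem hT⟩
        · exact ⟨h2, h3⟩
    have hsumdiff : ∀ T : Finset S, T ⊆ G' → ∑ t ∈ G \ T, g t = g s + ∑ t ∈ G' \ T, g t := by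
      intro T hT
      rw [hGdiff T hT, Finset.sum_insert (by simp [Finset.mem_sdiff, hsG'])]
    have hinterl : ∀ {X Y : Finset S}, s ∉ X → insert s Y ∩ X = Y ∩ X := by
      intro X Y hX; ext t
      simp only [Finset.mem_inter, Finset.mem_insert]
      constructor
      · rintro ⟨rfl | h, hx⟩
        · exact absurd hx hX
        · exact ⟨h, hx⟩
      · rintro ⟨h, hx⟩
        exact ⟨Or.inr h, hx⟩
    have hinterr : ∀ {X Y : Finset S}, s ∉ X → X ∩ insert s Y = X ∩ Y := by
      intro X Y hX
      rw [Finset.inter_comm, hinterl hX, Finset.inter_comm]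
    -- instantiated forms of the condition hc
    have hcA : ∀ X' X'' : Finset S, X' ⊆ G' → X'' ⊆ G' →
        H ≤ b1 X' + b2 X'' + (g s + ∑ t ∈ G' \ (X' ∪ X''), g t) - ∑ t ∈ X' ∩ X'', f t := by
      intro X' X'' h1 h2
      have h := hc X' X'' (h1.trans hG'G) (h2.trans hG'G)
      rwa [hsumdiff _ (Finset.union_subset h1 h2)] at h
    have hcB : ∀ X' X'' : Finset S, X' ⊆ G' → X'' ⊆ G' →
        H ≤ b1 (insert s X') + b2 X'' + ∑ t ∈ G' \ (X' ∪ X''), g t - ∑ t ∈ X' ∩ X'', f t := by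
      intro X' X'' h1 h2
      have h := hc (insert s X') X'' (hins h1) (h2.trans hG'G)
      rwa [Finset.insert_union, hsdiff, hinterl (hnotmem h2)] at h
    have hcC : ∀ X' X'' : Finset S, X' ⊆ G' → X'' ⊆ G' →
        H ≤ b1 X' + b2 (insert s X'') + ∑ t ∈ G' \ (X' ∪ X''), g t - ∑ t ∈ X' ∩ X'', f t := by
      intro X' X'' h1 h2
      have h := hc X' (insert s X'') (h1.trans hG'G) (hins h2)
      rwa [Finset.union_insert, hsdiff, hinterr (hnotmem h1)] at h
    have hcD : ∀ X' X'' : Finset S, X' ⊆ G' → X'' ⊆ G' →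
        H ≤ b1 (insert s X') + b2 (insert s X'') + ∑ t ∈ G' \ (X' ∪ X''), g t
            - (f s + ∑ t ∈ X' ∩ X'', f t) := by
      intro X' X'' h1 h2
      have h := hc (insert s X') (insert s X'') (hins h1) (hins h2)
      rw [← Finset.insert_union_distrib, hsdiff, ← Finset.insert_inter_distrib,
        Finset.sum_insert (hnotmem (Finset.inter_subset_left.trans h1))] at h
      exact h
    -- conversion of sums to indicator form
    have hconv : ∀ (h : S → ℝ) (T : Finset S), T ⊆ G' →
        ∑ t ∈ T, h t = ∑ t ∈ G', if t ∈ T then h t else 0 := by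
      intro h T hT
      rw [Finset.sum_ite_mem, Finset.inter_eq_right.mpr hT]
    -- the uncrossing sum inequality
    have hsum : ∀ X' X'' Y' Y'' : Finset S, X' ⊆ G' → X'' ⊆ G' → Y' ⊆ G' → Y'' ⊆ G' →
        ∑ t ∈ G' \ ((X' ∪ Y') ∪ (X'' ∩ Y'')), g t + ∑ t ∈ G' \ ((X' ∩ Y') ∪ (X'' ∪ Y'')), g t
          + ∑ t ∈ X' ∩ X'', f t + ∑ t ∈ Y' ∩ Y'', f t
        ≤ ∑ t ∈ G' \ (X' ∪ X''), g t + ∑ t ∈ G' \ (Y' ∪ Y''), g t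
          + ∑ t ∈ (X' ∪ Y') ∩ (X'' ∩ Y''), f t + ∑ t ∈ (X' ∩ Y') ∩ (X'' ∪ Y''), f t := by
      intro X' X'' Y' Y'' h1 h2 h3 h4
      rw [hconv g (G' \ ((X' ∪ Y') ∪ (X'' ∩ Y''))) Finset.sdiff_subset,
        hconv g (G' \ ((X' ∩ Y') ∪ (X'' ∪ Y''))) Finset.sdiff_subset,
        hconv g (G' \ (X' ∪ X'')) Finset.sdiff_subset,
        hconv g (G' \ (Y' ∪ Y'')) Finset.sdiff_subset,
        hconv f (X' ∩ X'') (Finset.inter_subset_left.trans h1),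
        hconv f (Y' ∩ Y'') (Finset.inter_subset_left.trans h3),
        hconv f ((X' ∪ Y') ∩ (X'' ∩ Y''))
          (Finset.inter_subset_right.trans (Finset.inter_subset_left.trans h2)),
        hconv f ((X' ∩ Y') ∩ (X'' ∪ Y''))
          (Finset.inter_subset_left.trans (Finset.inter_subset_left.trans h1))]
      simp only [← Finset.sum_add_distrib]
      refine Finset.sum_le_sum ?_
      intro t ht
      simp only [Finset.mem_sdiff, Finset.mem_union, Finset.mem_inter, ht, true_and]
      by_cases e1 : t ∈ X' <;> by_cases e2 : t ∈ X'' <;> by_cases e3 : t ∈ Y' <;>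
        by_cases e4 : t ∈ Y'' <;> simp [e1, e2, e3, e4] <;> linarith [hfg t]
    -- the main compatibility inequality: every lower bound ≤ every pair upper bound
    have hLBUB : ∀ X' X'' Y' Y'' : Finset S, X' ⊆ G' → X'' ⊆ G' → Y' ⊆ G' → Y'' ⊆ G' →
        H - (b1 X' + b2 X'' + ∑ t ∈ G' \ (X' ∪ X''), g t - ∑ t ∈ X' ∩ X'', f t)
          ≤ b1 (insert s Y') + b2 (insert s Y'') + ∑ t ∈ G' \ (Y' ∪ Y''), g t
            - ∑ t ∈ Y' ∩ Y'', f t - H := by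
      intro X' X'' Y' Y'' h1 h2 h3 h4
      have hA := hcB (X' ∪ Y') (X'' ∩ Y'') (Finset.union_subset h1 h3)
        (Finset.inter_subset_left.trans h2)
      have hB := hcC (X' ∩ Y') (X'' ∪ Y'') (Finset.inter_subset_left.trans h1)
        (Finset.union_subset h2 h4)
      have hs1 := hsub1 X' (insert s Y') (h1.trans hG'G) (hins h3)
      rw [Finset.union_insert, hinterr (hnotmem h1)] at hs1
      have hs2 := hsub2 X'' (insert s Y'') (h2.trans hG'G) (hins h4)
      rw [Finset.union_insert, hinterr (hnotmem h2)] at hs2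
      have hS := hsum X' X'' Y' Y'' h1 h2 h3 h4
      linarith
    -- the candidate set for α
    set cands : Finset ℝ :=
      insert (f s) (insert (H - b1 G') (insert (H - b2 G')
        ((G'.powerset ×ˢ G'.powerset).image
          (fun p => H - (b1 p.1 + b2 p.2 + ∑ t ∈ G' \ (p.1 ∪ p.2), g t
            - ∑ t ∈ p.1 ∩ p.2, f t))))) with hcands
    have hcne : cands.Nonempty := Finset.insert_nonempty _ _
    obtain ⟨α, hαmem, hαismax⟩ := exists_ub cands hcne
    -- lower bound facts
    have hαf : f s ≤ α := hαismax _ (by simp [hcands])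
    have hαb1G' : H - b1 G' ≤ α := hαismax _ (by simp [hcands])
    have hαb2G' : H - b2 G' ≤ α := hαismax _ (by simp [hcands])
    have hαLB : ∀ X' X'' : Finset S, X' ⊆ G' → X'' ⊆ G' →
        H - (b1 X' + b2 X'' + ∑ t ∈ G' \ (X' ∪ X''), g t - ∑ t ∈ X' ∩ X'', f t) ≤ α := by
      intro X' X'' h1 h2
      refine hαismax _ ?_
      rw [hcands]
      refine Finset.mem_insert_of_mem (Finset.mem_insert_of_mem (Finset.mem_insert_of_mem ?_))
      simp only [Finset.mem_image, Finset.mem_product, Finset.mem_powerset]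
      exact ⟨(X', X''), ⟨h1, h2⟩, rfl⟩
    -- generic tool to prove upper bounds on α
    have hαUBgen : ∀ u : ℝ, f s ≤ u → H - b1 G' ≤ u → H - b2 G' ≤ u →
        (∀ X' X'' : Finset S, X' ⊆ G' → X'' ⊆ G' →
          H - (b1 X' + b2 X'' + ∑ t ∈ G' \ (X' ∪ X''), g t - ∑ t ∈ X' ∩ X'', f t) ≤ u) →
        α ≤ u := by
      intro u hu1 hu2 hu3 hu4
      have hm := hαmem
      rw [hcands] at hm
      simp only [Finset.mem_insert, Finset.mem_image, Finset.mem_product,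
        Finset.mem_powerset] at hm
      rcases hm with rfl | rfl | rfl | ⟨⟨X', X''⟩, ⟨h1, h2⟩, rfl⟩
      · exact hu1
      · exact hu2
      · exact hu3
      · exact hu4 X' X'' h1 h2
    have hsing : ({s} : Finset S) ⊆ G := Finset.singleton_subset_iff.mpr hs
    have hαg : α ≤ g s := by
      refine hαUBgen _ (hfg s) ?_ ?_ ?_
      · have h := hcA G' ∅ (subset_refl G') (Finset.empty_subset G')
        simp only [Finset.union_empty, Finset.sdiff_self, Finset.sum_empty,
          Finset.inter_empty, hb20] at h
        linarith
      · have h := hcA ∅ G' (Finset.empty_subset G') (subset_refl G')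
        simp only [Finset.empty_union, Finset.sdiff_self, Finset.sum_empty,
          Finset.empty_inter, hb10] at h
        linarith
      · intro X' X'' h1 h2
        have h := hcA X' X'' h1 h2
        linarith
    have hαb1s : α ≤ b1 {s} := by
      refine hαUBgen _ ?_ ?_ ?_ ?_
      · have h := hcD ∅ G' (Finset.empty_subset G') (subset_refl G')
        simp only [Finset.empty_union, Finset.sdiff_self, Finset.sum_empty,
          Finset.empty_inter, Finset.insert_empty, hinsG', hb2G] at h
        linarith
      · have h := hsub1 G' {s} hG'G hsing
        have e1 : G' ∪ {s} = G := by rw [Finset.union_comm, ← Finset.insert_eq, hinsG']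
        have e2 : G' ∩ {s} = ∅ := Finset.inter_singleton_of_notMem hsG'
        rw [e1, e2, hb1G, hb10] at h
        linarith
      · have h := hcB ∅ G' (Finset.empty_subset G') (subset_refl G')
        simp only [Finset.empty_union, Finset.sdiff_self, Finset.sum_empty,
          Finset.empty_inter, Finset.insert_empty] at h
        linarith
      · intro X' X'' h1 h2
        have h := hcB X' X'' h1 h2
        have h5 := hsub1 {s} X' hsing (h1.trans hG'G)
        rw [← Finset.insert_eq, Finset.singleton_inter_of_notMem (hnotmem h1), hb10] at h5
        linarith
    have hαb2s : α ≤ b2 {s} := by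
      refine hαUBgen _ ?_ ?_ ?_ ?_
      · have h := hcD G' ∅ (subset_refl G') (Finset.empty_subset G')
        simp only [Finset.union_empty, Finset.sdiff_self, Finset.sum_empty,
          Finset.inter_empty, Finset.insert_empty, hinsG', hb1G] at h
        linarith
      · have h := hcC G' ∅ (subset_refl G') (Finset.empty_subset G')
        simp only [Finset.union_empty, Finset.sdiff_self, Finset.sum_empty,
          Finset.inter_empty, Finset.insert_empty] at h
        linarith
      · have h := hsub2 G' {s} hG'G hsing
        have e1 : G' ∪ {s} = G := by rw [Finset.union_comm, ← Finset.insert_eq, hinsG']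
        have e2 : G' ∩ {s} = ∅ := Finset.inter_singleton_of_notMem hsG'
        rw [e1, e2, hb2G, hb20] at h
        linarith
      · intro X' X'' h1 h2
        have h := hcC X' X'' h1 h2
        have h5 := hsub2 {s} X'' hsing (h2.trans hG'G)
        rw [← Finset.insert_eq, Finset.singleton_inter_of_notMem (hnotmem h2), hb20] at h5
        linarith
    have hαUB : ∀ Y' Y'' : Finset S, Y' ⊆ G' → Y'' ⊆ G' →
        α ≤ b1 (insert s Y') + b2 (insert s Y'') + ∑ t ∈ G' \ (Y' ∪ Y''), g t
          - ∑ t ∈ Y' ∩ Y'', f t - H := by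
      intro Y' Y'' h3 h4
      refine hαUBgen _ ?_ ?_ ?_ ?_
      · have h := hcD Y' Y'' h3 h4
        linarith
      · have h5 := hsub1 G' (insert s Y') hG'G (hins h3)
        rw [Finset.union_insert, Finset.union_eq_left.mpr h3, hinsG', hinterr hsG',
          Finset.inter_eq_right.mpr h3, hb1G] at h5
        have h6 := hcC Y' Y'' h3 h4
        linarith
      · have h5 := hsub2 G' (insert s Y'') hG'G (hins h4)
        rw [Finset.union_insert, Finset.union_eq_left.mpr h4, hinsG', hinterr hsG',
          Finset.inter_eq_right.mpr h4, hb2G] at h5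
        have h6 := hcB Y' Y'' h3 h4
        linarith
      · intro X' X'' h1 h2
        exact hLBUB X' X'' Y' Y'' h1 h2 h3 h4
    -- the contracted functions
    set b1' : Finset S → ℝ := fun Z => min (b1 Z) (b1 (insert s Z) - α) with hb1'def
    set b2' : Finset S → ℝ := fun Z => min (b2 Z) (b2 (insert s Z) - α) with hb2'def
    have hmin_sub : ∀ (b : Finset S → ℝ),
        (∀ X Y : Finset S, X ⊆ G → Y ⊆ G → b (X ∪ Y) + b (X ∩ Y) ≤ b X + b Y) →
        ∀ X Y : Finset S, X ⊆ G' → Y ⊆ G' →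
          min (b (X ∪ Y)) (b (insert s (X ∪ Y)) - α) + min (b (X ∩ Y)) (b (insert s (X ∩ Y)) - α)
            ≤ min (b X) (b (insert s X) - α) + min (b Y) (b (insert s Y) - α) := by
      intro b hb X Y hX hY
      rcases min_cases (b X) (b (insert s X) - α) with ⟨e1, _⟩ | ⟨e1, _⟩ <;>
        rcases min_cases (b Y) (b (insert s Y) - α) with ⟨e2, _⟩ | ⟨e2, _⟩ <;> rw [e1, e2]
      · have h := hb X Y (hX.trans hG'G) (hY.trans hG'G)
        have m1 := min_le_left (b (X ∪ Y)) (b (insert s (X ∪ Y)) - α)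
        have m2 := min_le_left (b (X ∩ Y)) (b (insert s (X ∩ Y)) - α)
        linarith
      · have h := hb X (insert s Y) (hX.trans hG'G) (hins hY)
        rw [Finset.union_insert, hinterr (hnotmem hX)] at h
        have m1 := min_le_right (b (X ∪ Y)) (b (insert s (X ∪ Y)) - α)
        have m2 := min_le_left (b (X ∩ Y)) (b (insert s (X ∩ Y)) - α)
        linarith
      · have h := hb (insert s X) Y (hins hX) (hY.trans hG'G)
        rw [Finset.insert_union, hinterl (hnotmem hY)] at h
        have m1 := min_le_right (b (X ∪ Y)) (b (insert s (X ∪ Y)) - α)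
        have m2 := min_le_left (b (X ∩ Y)) (b (insert s (X ∩ Y)) - α)
        linarith
      · have h := hb (insert s X) (insert s Y) (hins hX) (hins hY)
        rw [← Finset.insert_union_distrib, ← Finset.insert_inter_distrib] at h
        have m1 := min_le_right (b (X ∪ Y)) (b (insert s (X ∪ Y)) - α)
        have m2 := min_le_right (b (X ∩ Y)) (b (insert s (X ∩ Y)) - α)
        linarith
    -- hypotheses of the induction
    have hb1'0 : b1' ∅ = 0 := by
      rw [hb1'def]
      simp only [Finset.insert_empty, hb10]
      exact min_eq_left (by linarith)
    have hb2'0 : b2' ∅ = 0 := by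
      rw [hb2'def]
      simp only [Finset.insert_empty, hb20]
      exact min_eq_left (by linarith)
    have hb1'G : b1' G' = H - α := by
      rw [hb1'def]
      simp only [hinsG', hb1G]
      exact min_eq_right (by linarith)
    have hb2'G : b2' G' = H - α := by
      rw [hb2'def]
      simp only [hinsG', hb2G]
      exact min_eq_right (by linarith)
    have hcond' : ∀ X' X'' : Finset S, X' ⊆ G' → X'' ⊆ G' →
        H - α ≤ b1' X' + b2' X'' + ∑ t ∈ G' \ (X' ∪ X''), g t - ∑ t ∈ X' ∩ X'', f t := by
      intro X' X'' h1 h2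
      rw [hb1'def, hb2'def]
      simp only
      rcases min_cases (b1 X') (b1 (insert s X') - α) with ⟨e1, _⟩ | ⟨e1, _⟩ <;>
        rcases min_cases (b2 X'') (b2 (insert s X'') - α) with ⟨e2, _⟩ | ⟨e2, _⟩ <;>
          rw [e1, e2]
      · have h := hαLB X' X'' h1 h2
        linarith
      · have h := hcC X' X'' h1 h2
        linarith
      · have h := hcB X' X'' h1 h2
        linarith
      · have h := hαUB X' X'' h1 h2
        linarith
    obtain ⟨x', hx'sum, hx'b1, hx'b2, hx'fg⟩ :=
      ih G' b1' b2' (H - α) f g hG'card hb1'0 hb2'0 hb1'G hb2'G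
        (hmin_sub b1 hsub1) (hmin_sub b2 hsub2) hfg hcond'
    -- assemble the solution
    refine ⟨Function.update x' s α, ?_, ?_, ?_, ?_⟩
    · rw [← hinsG', Finset.sum_insert hsG', Function.update_self]
      rw [Finset.sum_congr rfl (fun t ht => Function.update_of_ne
        (ne_of_mem_of_not_mem ht hsG') α x'), hx'sum]
      ring
    · intro Z hZ
      by_cases hsZ : s ∈ Z
      · have hZ' : Z.erase s ⊆ G' := Finset.erase_subset_erase s hZ
        rw [← Finset.insert_erase hsZ, Finset.sum_insert (Finset.notMem_erase s Z),
          Function.update_self]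
        rw [Finset.sum_congr rfl (fun t ht => Function.update_of_ne
          (ne_of_mem_of_not_mem ht (Finset.notMem_erase s Z)) α x')]
        have h := hx'b1 (Z.erase s) hZ'
        have h2 : b1' (Z.erase s) ≤ b1 (insert s (Z.erase s)) - α :=
          min_le_right _ _
        linarith
      · have hZ' : Z ⊆ G' := Finset.subset_erase.mpr ⟨hZ, hsZ⟩
        rw [Finset.sum_congr rfl (fun t ht => Function.update_of_ne
          (ne_of_mem_of_not_mem ht (fun h => hsZ h)) α x')]
        have h := hx'b1 Z hZ'
        have h2 : b1' Z ≤ b1 Z := min_le_left _ _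
        linarith
    · intro Z hZ
      by_cases hsZ : s ∈ Z
      · have hZ' : Z.erase s ⊆ G' := Finset.erase_subset_erase s hZ
        rw [← Finset.insert_erase hsZ, Finset.sum_insert (Finset.notMem_erase s Z),
          Function.update_self]
        rw [Finset.sum_congr rfl (fun t ht => Function.update_of_ne
          (ne_of_mem_of_not_mem ht (Finset.notMem_erase s Z)) α x')]
        have h := hx'b2 (Z.erase s) hZ'
        have h2 : b2' (Z.erase s) ≤ b2 (insert s (Z.erase s)) - α :=
          min_le_right _ _
        linarith
      · have hZ' : Z ⊆ G' := Finset.subset_erase.mpr ⟨hZ, hsZ⟩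
        rw [Finset.sum_congr rfl (fun t ht => Function.update_of_ne
          (ne_of_mem_of_not_mem ht (fun h => hsZ h)) α x')]
        have h := hx'b2 Z hZ'
        have h2 : b2' Z ≤ b2 Z := min_le_left _ _
        linarith
    · intro t ht
      by_cases hts : t = s
      · subst hts
        rw [Function.update_self]
        exact ⟨hαf, hαg⟩
      · rw [Function.update_of_ne hts]
        exact hx'fg t (Finset.mem_erase.mpr ⟨hts, ht⟩)






/-- feasibility of the intersection of two base-polyhedra with a
box (Corollary for B(b*₁) ∩ B(b*₂) ∩ T). -/
theorem stmt_5 {S : Type*} [Fintype S] [DecidableEq S]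
    (b1 b2 : Finset S → ℝ) (hb10 : b1 ∅ = 0) (hb20 : b2 ∅ = 0)
    (hsub1 : ∀ X Y : Finset S, b1 (X ∪ Y) + b1 (X ∩ Y) ≤ b1 X + b1 Y)
    (hsub2 : ∀ X Y : Finset S, b2 (X ∪ Y) + b2 (X ∩ Y) ≤ b2 X + b2 Y)
    (H : ℝ) (hb1S : b1 Finset.univ = H) (hb2S : b2 Finset.univ = H)
    (f g : S → ℝ) (hfg : ∀ s, f s ≤ g s) :
    (∃ x : S → ℝ,
        (∑ s, x s) = H ∧
        (∀ Z : Finset S, ∑ s ∈ Z, x s ≤ b1 Z) ∧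
        (∀ Z : Finset S, ∑ s ∈ Z, x s ≤ b2 Z) ∧
        (∀ s, f s ≤ x s ∧ x s ≤ g s)) ↔
      (∀ X' X'' : Finset S,
        H ≤ b1 X' + b2 X'' + ∑ s ∈ X'ᶜ ∩ X''ᶜ, g s - ∑ s ∈ X' ∩ X'', f s) := by
  constructor
  · rintro ⟨x, hsum, hZ1, hZ2, hbox⟩ X' X''
    have hcompl : (X' ∪ X'')ᶜ = X'ᶜ ∩ X''ᶜ := Finset.compl_union X' X''
    have h1 : ∑ t ∈ X', x t ≤ b1 X' := hZ1 X'
    have h2 : ∑ t ∈ X'', x t ≤ b2 X'' := hZ2 X''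
    have hui : ∑ t ∈ X' ∪ X'', x t + ∑ t ∈ X' ∩ X'', x t
        = ∑ t ∈ X', x t + ∑ t ∈ X'', x t := Finset.sum_union_inter
    have hsplit : ∑ t ∈ X' ∪ X'', x t + ∑ t ∈ (X' ∪ X'')ᶜ, x t = ∑ t, x t :=
      Finset.sum_add_sum_compl (X' ∪ X'') x
    have hgc : ∑ t ∈ (X' ∪ X'')ᶜ, x t ≤ ∑ t ∈ (X' ∪ X'')ᶜ, g t :=
      Finset.sum_le_sum fun i _ => (hbox i).2
    have hfc : ∑ t ∈ X' ∩ X'', f t ≤ ∑ t ∈ X' ∩ X'', x t :=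
      Finset.sum_le_sum fun i _ => (hbox i).1
    rw [hcompl] at hgc hsplit
    rw [hsum] at hsplit
    linarith
  · intro hcond
    obtain ⟨x, hsum, hZ1, hZ2, hbox⟩ :=
      key_lemma (Finset.univ : Finset S).card Finset.univ b1 b2 H f g rfl
        hb10 hb20 hb1S hb2S (fun X Y _ _ => hsub1 X Y) (fun X Y _ _ => hsub2 X Y) hfg
        (by
          intro X' X'' _ _
          have h := hcond X' X''
          rwa [← Finset.compl_union, Finset.compl_eq_univ_sdiff] at h)
    exact ⟨x, hsum, fun Z => hZ1 Z (Finset.subset_univ Z),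
      fun Z => hZ2 Z (Finset.subset_univ Z), fun t => hbox t (Finset.mem_univ t)⟩
end

section
/- Let (p*₁, b*₁) and (p*₂, b*₂) be strong pairs on a finite set S, let f, g ∈ ℝ^S with f ≤ g, and suppose Q := Q(p*₁, b*₁) ∩ Q(p*₂, b*₂) ∩ {x : f ≤ x ≤ g} is nonempty. Then max{x̃(S) : x ∈ Q} = min{b*₁(X₁) + b*₂(X₂) + g̃(X₁ᶜ ∩ X₂ᶜ) − f̃(X₁ ∩ X₂) : X₁, X₂ ⊆ S} and min{x̃(S) : x ∈ Q} = max{p*₁(X₁) + p*₂(X₂) + f̃(X₁ᶜ ∩ X₂ᶜ) − g̃(X₁ ∩ X₂) : X₁, X₂ ⊆ S}, and both optima over Q are attained. -/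
/-!
Weak duality is the decomposition `x̃(S) = x̃(X₁) + x̃(X₂) - x̃(X₁ ∩ X₂) + x̃(X₁ᶜ ∩ X₂ᶜ)`. For
strong duality take a maximiser `x` of `x̃(S)` on the compact set `Q`. By submodularity every `u`
lying in some `bᵢ`-tight set lies in a smallest one, `Tᵢ(u)`, and by the cross inequality
`Tᵢ(u) \ W` is again `bᵢ`-tight for every `pᵢ`-tight `W`. Put an arc `u → u'` when
`x u' < g u'` and some `v ∈ T₁(u) ∩ T₂(u')` has `f v < x v`, and start walks at the `u₀` with
`x u₀ < g u₀` lying in no `b₂`-tight set. If a walk `u₀, v₀, u₁, …, u` reached a `u` lying in no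
`b₁`-tight set, then raising `x` on the `uᵢ` and lowering it on the `vᵢ` by a small amount would
keep `x` in `Q` and increase `x̃(S)`. So the union `X₁` of the `T₁(u)` over reachable `u` and the
union `X₂` of the `T₂(u)` over the unreachable `u` with `x u < g u` are tight, `x = f` on
`X₁ ∩ X₂` and `x = g` off `X₁ ∪ X₂`, and `x̃(S)` equals the bound. The min formula is the max
formula for `-x`, since `(p, b) ↦ (-b, -p)` preserves strong pairs.
-/

namespace GPolymatroid

open Finset Filter Topology

variable {S : Type*}

def IsTight (b : Finset S → ℝ) (x : S → ℝ) (Z : Finset S) : Prop := ∑ s ∈ Z, x s = b Z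

def MemGPolymatroid (p b : Finset S → ℝ) (x : S → ℝ) : Prop :=
  ∀ Z, p Z ≤ ∑ s ∈ Z, x s ∧ ∑ s ∈ Z, x s ≤ b Z

def MemBox (f g x : S → ℝ) : Prop := ∀ s, f s ≤ x s ∧ x s ≤ g s

def InTightSet (b : Finset S → ℝ) (x : S → ℝ) (u : S) : Prop := ∃ Z, IsTight b x Z ∧ u ∈ Z

variable (p1 b1 p2 b2 f g) in
def feasibleSet : Set (S → ℝ) :=
  {x | MemGPolymatroid p1 b1 x ∧ MemGPolymatroid p2 b2 x ∧ MemBox f g x}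

section Basic

variable {p b p1 b1 p2 b2 : Finset S → ℝ} {f g x : S → ℝ}

lemma isClosed_setOf_memGPolymatroid : IsClosed {x : S → ℝ | MemGPolymatroid p b x} := by
  simp only [MemGPolymatroid, Set.ofPred_forall, Set.ofPred_and]
  exact isClosed_iInter fun Z =>
    (isClosed_le continuous_const (by fun_prop)).inter (isClosed_le (by fun_prop) continuous_const)

lemma isClosed_setOf_memBox : IsClosed {x : S → ℝ | MemBox f g x} := by
  simp only [MemBox, Set.ofPred_forall, Set.ofPred_and]
  exact isClosed_iInter fun s =>
    (isClosed_le continuous_const (continuous_apply s)).inter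
      (isClosed_le (continuous_apply s) continuous_const)

lemma isCompact_feasibleSet : IsCompact (feasibleSet p1 b1 p2 b2 f g) :=
  isCompact_Icc.of_isClosed_subset
    (isClosed_setOf_memGPolymatroid.inter
      (isClosed_setOf_memGPolymatroid.inter isClosed_setOf_memBox))
    fun _ hx => ⟨fun s => (hx.2.2 s).1, fun s => (hx.2.2 s).2⟩

lemma memGPolymatroid_neg_iff : MemGPolymatroid (-b) (-p) (-x) ↔ MemGPolymatroid p b x := by
  simp only [MemGPolymatroid, Pi.neg_apply, sum_neg_distrib, neg_le_neg_iff]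
  exact forall_congr' fun _ => and_comm

lemma memBox_neg_iff : MemBox (-g) (-f) (-x) ↔ MemBox f g x := by
  simp only [MemBox, Pi.neg_apply, neg_le_neg_iff]
  exact forall_congr' fun _ => and_comm

lemma neg_mem_feasibleSet_neg_iff :
    -x ∈ feasibleSet (-b1) (-p1) (-b2) (-p2) (-g) (-f) ↔ x ∈ feasibleSet p1 b1 p2 b2 f g := by
  simp only [feasibleSet, Set.mem_ofPred_eq, memGPolymatroid_neg_iff, memBox_neg_iff]

lemma neg_image_sum_feasibleSet_neg [Fintype S] :
    (fun v => -v) '' ((fun x => ∑ s, x s) '' feasibleSet (-b1) (-p1) (-b2) (-p2) (-g) (-f)) =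
      (fun x => ∑ s, x s) '' feasibleSet p1 b1 p2 b2 f g := by
  refine Set.ext fun v => ⟨?_, ?_⟩
  · rintro ⟨_, ⟨y, hy, rfl⟩, rfl⟩
    exact ⟨-y, by rwa [← neg_mem_feasibleSet_neg_iff, neg_neg], by simp⟩
  · rintro ⟨y, hy, rfl⟩
    exact ⟨_, ⟨-y, neg_mem_feasibleSet_neg_iff.2 hy, rfl⟩, by simp⟩

end Basic

section Tight

variable [DecidableEq S] {p b : Finset S → ℝ} {x : S → ℝ} {Z W : Finset S} {u v : S}

lemma IsTight.union_and_inter (hub : ∀ Z, ∑ s ∈ Z, x s ≤ b Z)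
    (hsub : ∀ X Y, b (X ∪ Y) + b (X ∩ Y) ≤ b X + b Y)
    (hZ : IsTight b x Z) (hW : IsTight b x W) : IsTight b x (Z ∪ W) ∧ IsTight b x (Z ∩ W) := by
  have hmod : ∑ s ∈ Z ∪ W, x s + ∑ s ∈ Z ∩ W, x s = ∑ s ∈ Z, x s + ∑ s ∈ W, x s :=
    sum_union_inter
  unfold IsTight at *
  constructor <;> linarith [hub (Z ∪ W), hub (Z ∩ W), hsub Z W]

lemma IsTight.sdiff (hx : MemGPolymatroid p b x)
    (hcross : ∀ X Y, b (X \ Y) - p (Y \ X) ≤ b X - p Y)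
    (hZ : IsTight b x Z) (hW : IsTight p x W) : IsTight b x (Z \ W) := by
  have hdiff : ∑ s ∈ Z \ W, x s - ∑ s ∈ W \ Z, x s = ∑ s ∈ Z, x s - ∑ s ∈ W, x s :=
    sum_sdiff_sub_sum_sdiff
  unfold IsTight at *
  linarith [(hx (Z \ W)).2, (hx (W \ Z)).1, hcross Z W]

lemma isTight_sup {ι : Type*} (hb0 : b ∅ = 0) (hub : ∀ Z, ∑ s ∈ Z, x s ≤ b Z)
    (hsub : ∀ X Y, b (X ∪ Y) + b (X ∩ Y) ≤ b X + b Y)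
    {t : Finset ι} {F : ι → Finset S} (hF : ∀ i ∈ t, IsTight b x (F i)) :
    IsTight b x (t.sup F) :=
  sup_induction (by simp [IsTight, hb0]) (fun _ hA _ hB => (hA.union_and_inter hub hsub hB).1) hF

variable [Fintype S]

open Classical in
variable (b x) in
noncomputable def minTightSet (u : S) : Finset S :=
  (univ.filter fun Z => IsTight b x Z ∧ u ∈ Z).inf id

lemma mem_minTightSet : u ∈ minTightSet b x u := by
  simp [minTightSet, mem_inf]

lemma minTightSet_subset (hZ : IsTight b x Z) (hu : u ∈ Z) : minTightSet b x u ⊆ Z :=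
  inf_le (f := id) (by simp [hZ, hu])

lemma isTight_minTightSet (hub : ∀ Z, ∑ s ∈ Z, x s ≤ b Z)
    (hsub : ∀ X Y, b (X ∪ Y) + b (X ∩ Y) ≤ b X + b Y) (hu : InTightSet b x u) :
    IsTight b x (minTightSet b x u) := by
  classical
  obtain ⟨Z, hZ, huZ⟩ := hu
  have hne : (univ.filter fun Z => IsTight b x Z ∧ u ∈ Z).Nonempty := ⟨Z, by simp [hZ, huZ]⟩
  rw [minTightSet, ← inf'_eq_inf hne]
  exact inf'_induction hne id (fun _ hA _ hB => (hA.union_and_inter hub hsub hB).2)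
    fun Z hZ => (mem_filter.1 hZ).2.1

/-- The cross inequality makes `minTightSet b x u \ W` tight, so by minimality it is all of
`minTightSet b x u`. -/
lemma mem_of_mem_minTightSet (hx : MemGPolymatroid p b x)
    (hsub : ∀ X Y, b (X ∪ Y) + b (X ∩ Y) ≤ b X + b Y)
    (hcross : ∀ X Y, b (X \ Y) - p (Y \ X) ≤ b X - p Y)
    (hu : InTightSet b x u) (hW : IsTight p x W) (hv : v ∈ minTightSet b x u) (hvW : v ∈ W) :
    u ∈ W := by
  by_contra huW
  have hdiff := (isTight_minTightSet (fun Z => (hx Z).2) hsub hu).sdiff hx hcross hW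
  have := minTightSet_subset hdiff (mem_sdiff.2 ⟨mem_minTightSet, huW⟩) hv
  exact (mem_sdiff.1 this).2 hvW

end Tight

lemma eventually_add_mul_le {a c e : ℝ} (h : a ≤ c) (he : a = c → e ≤ 0) :
    ∀ᶠ t in 𝓝[>] (0 : ℝ), a + t * e ≤ c := by
  rcases h.lt_or_eq with hlt | heq
  · have hcont : Continuous fun t : ℝ => a + t * e := by fun_prop
    exact nhdsWithin_le_nhds <| (hcont.continuousAt.eventually_lt continuousAt_const
      (by simpa using hlt)).mono fun _ => le_of_lt
  · filter_upwards [self_mem_nhdsWithin] with t ht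
    linarith [mul_nonpos_of_nonneg_of_nonpos (le_of_lt ht) (he heq)]

lemma eventually_le_add_mul {a c e : ℝ} (h : c ≤ a) (he : a = c → 0 ≤ e) :
    ∀ᶠ t in 𝓝[>] (0 : ℝ), c ≤ a + t * e := by
  filter_upwards [eventually_add_mul_le (e := -e) (neg_le_neg h)
    fun h' => by linarith [he (neg_inj.1 h')]] with t ht
  linarith

section Perturb

variable {p b : Finset S → ℝ} {f g x d : S → ℝ}

lemma sum_add_smul (t : ℝ) (Z : Finset S) :
    ∑ s ∈ Z, (x + t • d) s = ∑ s ∈ Z, x s + t * ∑ s ∈ Z, d s := by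
  simp [sum_add_distrib, mul_sum]

lemma MemGPolymatroid.eventually_add_smul [Finite S] (hx : MemGPolymatroid p b x)
    (hb : ∀ Z, IsTight b x Z → ∑ s ∈ Z, d s ≤ 0) (hp : ∀ Z, IsTight p x Z → 0 ≤ ∑ s ∈ Z, d s) :
    ∀ᶠ t in 𝓝[>] (0 : ℝ), MemGPolymatroid p b (x + t • d) := by
  refine eventually_all.2 fun Z => ?_
  simp only [sum_add_smul]
  exact (eventually_le_add_mul (hx Z).1 fun h => hp Z h).and
    (eventually_add_mul_le (hx Z).2 fun h => hb Z h)

lemma MemBox.eventually_add_smul [Finite S] (hx : MemBox f g x)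
    (hg : ∀ s, 0 < d s → x s < g s) (hf : ∀ s, d s < 0 → f s < x s) :
    ∀ᶠ t in 𝓝[>] (0 : ℝ), MemBox f g (x + t • d) := by
  refine eventually_all.2 fun s => ?_
  simp only [Pi.add_apply, Pi.smul_apply, smul_eq_mul]
  refine (eventually_le_add_mul (hx s).1 fun h => ?_).and
    (eventually_add_mul_le (hx s).2 fun h => ?_)
  · exact not_lt.1 fun hd => (hf s hd).ne' h
  · exact not_lt.1 fun hd => (hg s hd).ne h

end Perturb

lemma ite_le_ite_of_imp {P Q : Prop} [Decidable P] [Decidable Q] (h : P → Q) :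
    (if P then (1 : ℝ) else 0) ≤ if Q then 1 else 0 := by
  split_ifs <;> simp_all

section Augment

variable [Fintype S] [DecidableEq S] {p1 b1 p2 b2 : Finset S → ℝ} {f g x d : S → ℝ} {u u' : S}

variable (b1 b2 f g x) in
def AugArc (u u' : S) : Prop :=
  x u' < g u' ∧ InTightSet b1 x u ∧ InTightSet b2 x u' ∧
    ∃ v ∈ minTightSet b1 x u ∩ minTightSet b2 x u', f v < x v

variable (b1 b2 f g x) in
def IsReachable (u : S) : Prop :=
  ∃ u₀, (x u₀ < g u₀ ∧ ¬ InTightSet b2 x u₀) ∧ Relation.ReflTransGen (AugArc b1 b2 f g x) u₀ u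

/-- The invariants of the vector that is `+1` on the `uᵢ` and `-1` on the `vᵢ` of a walk
`u₀, v₀, u₁, v₁, …, u` along `AugArc` from a `u₀` lying in no `b2`-tight set. -/
structure IsAugmentingDir (p1 b1 p2 b2 : Finset S → ℝ) (f g x : S → ℝ) (u : S) (d : S → ℝ) :
    Prop where
  sum_univ : ∑ s, d s = 1
  lt_upper : ∀ s, 0 < d s → x s < g s
  lower_lt : ∀ s, d s < 0 → f s < x s
  sum_le_of_isTight₁ : ∀ Z, IsTight b1 x Z → ∑ s ∈ Z, d s ≤ if u ∈ Z then 1 else 0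
  le_sum_of_isTight₁ : ∀ Z, IsTight p1 x Z → (if u ∈ Z then 1 else 0) ≤ ∑ s ∈ Z, d s
  sum_nonpos_of_isTight₂ : ∀ Z, IsTight b2 x Z → ∑ s ∈ Z, d s ≤ 0
  sum_nonneg_of_isTight₂ : ∀ Z, IsTight p2 x Z → 0 ≤ ∑ s ∈ Z, d s

lemma isAugmentingDir_single (hu : x u < g u) (hu₂ : ¬ InTightSet b2 x u) :
    IsAugmentingDir p1 b1 p2 b2 f g x u (Pi.single u 1) where
  sum_univ := by simp
  lt_upper s hs := by
    rw [Pi.single_apply] at hs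
    split_ifs at hs with hsu
    exacts [hsu ▸ hu, absurd hs (lt_irrefl 0)]
  lower_lt s hs := by
    rw [Pi.single_apply] at hs
    split_ifs at hs <;> linarith
  sum_le_of_isTight₁ Z _ := by simp
  le_sum_of_isTight₁ Z _ := by simp
  sum_nonpos_of_isTight₂ Z hZ := by
    rw [sum_pi_single', if_neg fun huZ => hu₂ ⟨Z, hZ, huZ⟩]
  sum_nonneg_of_isTight₂ Z _ := by
    rw [sum_pi_single']
    split_ifs <;> norm_num

lemma IsAugmentingDir.step (hx₁ : MemGPolymatroid p1 b1 x)
    (hsub₁ : ∀ X Y, b1 (X ∪ Y) + b1 (X ∩ Y) ≤ b1 X + b1 Y)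
    (hcross₁ : ∀ X Y, b1 (X \ Y) - p1 (Y \ X) ≤ b1 X - p1 Y)
    (hx₂ : MemGPolymatroid p2 b2 x)
    (hsub₂ : ∀ X Y, b2 (X ∪ Y) + b2 (X ∩ Y) ≤ b2 X + b2 Y)
    (hcross₂ : ∀ X Y, b2 (X \ Y) - p2 (Y \ X) ≤ b2 X - p2 Y)
    (hd : IsAugmentingDir p1 b1 p2 b2 f g x u d) (harc : AugArc b1 b2 f g x u u') :
    ∃ d', IsAugmentingDir p1 b1 p2 b2 f g x u' d' := by
  obtain ⟨hu', hu₁, hu'₂, v, hv, hfv⟩ := harc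
  obtain ⟨hv₁, hv₂⟩ := mem_inter.1 hv
  set d' : S → ℝ := d - Pi.single v 1 + Pi.single u' 1
  have hd' : ∀ s, d' s = d s - (if s = v then 1 else 0) + if s = u' then 1 else 0 := fun s => by
    simp [d', Pi.single_apply]
  have hsum : ∀ Z, ∑ s ∈ Z, d' s =
      ∑ s ∈ Z, d s - (if v ∈ Z then 1 else 0) + if u' ∈ Z then 1 else 0 := fun Z => by
    simp [d', sum_add_distrib, sum_sub_distrib]
  refine ⟨d', ⟨by simp [hsum, hd.sum_univ], fun s hs => ?_, fun s hs => ?_,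
      fun Z hZ => ?_, fun Z hZ => ?_, fun Z hZ => ?_, fun Z hZ => ?_⟩⟩
  · rw [hd'] at hs
    by_cases hsu' : s = u'
    · exact hsu' ▸ hu'
    · refine hd.lt_upper s ?_
      split_ifs at hs <;> linarith
  · rw [hd'] at hs
    by_cases hsv : s = v
    · exact hsv ▸ hfv
    · refine hd.lower_lt s ?_
      split_ifs at hs <;> linarith
  · have := ite_le_ite_of_imp fun huZ : u ∈ Z => minTightSet_subset hZ huZ hv₁
    linarith [hsum Z, hd.sum_le_of_isTight₁ Z hZ]
  · have := ite_le_ite_of_imp fun hvZ : v ∈ Z =>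
      mem_of_mem_minTightSet hx₁ hsub₁ hcross₁ hu₁ hZ hv₁ hvZ
    linarith [hsum Z, hd.le_sum_of_isTight₁ Z hZ]
  · have := ite_le_ite_of_imp fun huZ : u' ∈ Z => minTightSet_subset hZ huZ hv₂
    linarith [hsum Z, hd.sum_nonpos_of_isTight₂ Z hZ]
  · have := ite_le_ite_of_imp fun hvZ : v ∈ Z =>
      mem_of_mem_minTightSet hx₂ hsub₂ hcross₂ hu'₂ hZ hv₂ hvZ
    linarith [hsum Z, hd.sum_nonneg_of_isTight₂ Z hZ]

lemma IsReachable.exists_isAugmentingDir (hx₁ : MemGPolymatroid p1 b1 x)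
    (hsub₁ : ∀ X Y, b1 (X ∪ Y) + b1 (X ∩ Y) ≤ b1 X + b1 Y)
    (hcross₁ : ∀ X Y, b1 (X \ Y) - p1 (Y \ X) ≤ b1 X - p1 Y)
    (hx₂ : MemGPolymatroid p2 b2 x)
    (hsub₂ : ∀ X Y, b2 (X ∪ Y) + b2 (X ∩ Y) ≤ b2 X + b2 Y)
    (hcross₂ : ∀ X Y, b2 (X \ Y) - p2 (Y \ X) ≤ b2 X - p2 Y)
    (hu : IsReachable b1 b2 f g x u) : ∃ d, IsAugmentingDir p1 b1 p2 b2 f g x u d := by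
  obtain ⟨u₀, ⟨hu₀, hu₀₂⟩, h⟩ := hu
  induction h with
  | refl => exact ⟨_, isAugmentingDir_single hu₀ hu₀₂⟩
  | tail _ harc ih =>
    obtain ⟨d, hd⟩ := ih
    exact hd.step hx₁ hsub₁ hcross₁ hx₂ hsub₂ hcross₂ harc

end Augment

section Optimum

variable [Fintype S] [DecidableEq S] {p1 b1 p2 b2 : Finset S → ℝ} {f g x d : S → ℝ} {u : S}

lemma IsAugmentingDir.exists_sum_lt (hx : x ∈ feasibleSet p1 b1 p2 b2 f g)
    (hd : IsAugmentingDir p1 b1 p2 b2 f g x u d) (hu : ¬ InTightSet b1 x u) :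
    ∃ y ∈ feasibleSet p1 b1 p2 b2 f g, ∑ s, x s < ∑ s, y s := by
  have hnot : ∀ Z, IsTight b1 x Z → u ∉ Z := fun Z hZ huZ => hu ⟨Z, hZ, huZ⟩
  have h₁ := hx.1.eventually_add_smul
    (fun Z hZ => by simpa [hnot Z hZ] using hd.sum_le_of_isTight₁ Z hZ)
    (fun Z hZ => le_trans (by positivity) (hd.le_sum_of_isTight₁ Z hZ))
  have h₂ := hx.2.1.eventually_add_smul hd.sum_nonpos_of_isTight₂ hd.sum_nonneg_of_isTight₂
  have h₃ := hx.2.2.eventually_add_smul hd.lt_upper hd.lower_lt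
  obtain ⟨t, hy₁, hy₂, hy₃, ht⟩ := (h₁.and (h₂.and (h₃.and self_mem_nhdsWithin))).exists
  refine ⟨x + t • d, ⟨hy₁, hy₂, hy₃⟩, ?_⟩
  rw [sum_add_smul, hd.sum_univ]
  linarith

lemma inTightSet_of_isMaxOn_of_isReachable
    (hsub₁ : ∀ X Y, b1 (X ∪ Y) + b1 (X ∩ Y) ≤ b1 X + b1 Y)
    (hcross₁ : ∀ X Y, b1 (X \ Y) - p1 (Y \ X) ≤ b1 X - p1 Y)
    (hsub₂ : ∀ X Y, b2 (X ∪ Y) + b2 (X ∩ Y) ≤ b2 X + b2 Y)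
    (hcross₂ : ∀ X Y, b2 (X \ Y) - p2 (Y \ X) ≤ b2 X - p2 Y)
    (hx : x ∈ feasibleSet p1 b1 p2 b2 f g)
    (hmax : IsMaxOn (fun y => ∑ s, y s) (feasibleSet p1 b1 p2 b2 f g) x)
    (hu : IsReachable b1 b2 f g x u) : InTightSet b1 x u := by
  by_contra hu₁
  obtain ⟨d, hd⟩ := hu.exists_isAugmentingDir hx.1 hsub₁ hcross₁ hx.2.1 hsub₂ hcross₂
  obtain ⟨y, hy, hlt⟩ := hd.exists_sum_lt hx hu₁
  exact (hmax hy).not_gt hlt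

theorem exists_tight_of_isMaxOn (hb10 : b1 ∅ = 0)
    (hsub₁ : ∀ X Y, b1 (X ∪ Y) + b1 (X ∩ Y) ≤ b1 X + b1 Y)
    (hcross₁ : ∀ X Y, b1 (X \ Y) - p1 (Y \ X) ≤ b1 X - p1 Y) (hb20 : b2 ∅ = 0)
    (hsub₂ : ∀ X Y, b2 (X ∪ Y) + b2 (X ∩ Y) ≤ b2 X + b2 Y)
    (hcross₂ : ∀ X Y, b2 (X \ Y) - p2 (Y \ X) ≤ b2 X - p2 Y)
    (hx : x ∈ feasibleSet p1 b1 p2 b2 f g)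
    (hmax : IsMaxOn (fun y => ∑ s, y s) (feasibleSet p1 b1 p2 b2 f g) x) :
    ∃ X₁ X₂, IsTight b1 x X₁ ∧ IsTight b2 x X₂ ∧ (∀ s ∈ X₁ ∩ X₂, x s = f s) ∧
      ∀ s ∉ X₁ ∪ X₂, x s = g s := by
  classical
  have hR := fun u =>
    inTightSet_of_isMaxOn_of_isReachable (u := u) hsub₁ hcross₁ hsub₂ hcross₂ hx hmax
  have hsource : ∀ u, x u < g u → ¬ IsReachable b1 b2 f g x u → InTightSet b2 x u :=
    fun u hu hnR => by_contra fun hu₂ => hnR ⟨u, ⟨hu, hu₂⟩, .refl⟩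
  let X₁ := (univ.filter (IsReachable b1 b2 f g x)).sup (minTightSet b1 x)
  let X₂ := (univ.filter fun u => x u < g u ∧ ¬ IsReachable b1 b2 f g x u).sup (minTightSet b2 x)
  refine ⟨X₁, X₂, isTight_sup hb10 (fun Z => (hx.1 Z).2) hsub₁ fun u hu => ?_,
    isTight_sup hb20 (fun Z => (hx.2.1 Z).2) hsub₂ fun u hu => ?_, fun s hs => ?_, fun s hs => ?_⟩
  · exact isTight_minTightSet (fun Z => (hx.1 Z).2) hsub₁ (hR u (mem_filter.1 hu).2)
  · obtain ⟨hu, hnR⟩ := (mem_filter.1 hu).2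
    exact isTight_minTightSet (fun Z => (hx.2.1 Z).2) hsub₂ (hsource u hu hnR)
  · obtain ⟨hs₁, hs₂⟩ := mem_inter.1 hs
    obtain ⟨u, hu, hsu⟩ := mem_sup.1 hs₁
    obtain ⟨u', hu', hsu'⟩ := mem_sup.1 hs₂
    obtain ⟨hu'g, hnR⟩ := (mem_filter.1 hu').2
    refine (((hx.2.2 s).1.eq_or_lt).resolve_right fun hfs => hnR ?_).symm
    obtain ⟨u₀, hu₀, h⟩ := (mem_filter.1 hu).2
    exact ⟨u₀, hu₀, h.tail ⟨hu'g, hR u (mem_filter.1 hu).2, hsource u' hu'g hnR, s,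
      mem_inter.2 ⟨hsu, hsu'⟩, hfs⟩⟩
  · refine ((hx.2.2 s).2.lt_or_eq).resolve_left fun hsg => hs ?_
    by_cases hRs : IsReachable b1 b2 f g x s
    · exact mem_union_left _ <|
        le_sup (f := minTightSet b1 x) (by simpa using hRs) mem_minTightSet
    · exact mem_union_right _ <|
        le_sup (f := minTightSet b2 x) (by simpa using ⟨hsg, hRs⟩) mem_minTightSet

end Optimum

section Duality

variable [Fintype S] [DecidableEq S] {p1 b1 p2 b2 : Finset S → ℝ} {f g x : S → ℝ}

lemma sum_univ_eq_add_sub_inter_add_compl (y : S → ℝ) (Y₁ Y₂ : Finset S) :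
    ∑ s, y s = ∑ s ∈ Y₁, y s + ∑ s ∈ Y₂, y s - ∑ s ∈ Y₁ ∩ Y₂, y s + ∑ s ∈ Y₁ᶜ ∩ Y₂ᶜ, y s := by
  rw [← compl_union, ← sum_add_sum_compl (Y₁ ∪ Y₂), ← sum_union_inter (s₁ := Y₁)]
  ring

lemma sum_le_of_mem_feasibleSet (hx : x ∈ feasibleSet p1 b1 p2 b2 f g) (X₁ X₂ : Finset S) :
    ∑ s, x s ≤ b1 X₁ + b2 X₂ + ∑ s ∈ X₁ᶜ ∩ X₂ᶜ, g s - ∑ s ∈ X₁ ∩ X₂, f s := by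
  rw [sum_univ_eq_add_sub_inter_add_compl x X₁ X₂]
  linarith [(hx.1 X₁).2, (hx.2.1 X₂).2, sum_le_sum fun s (_ : s ∈ X₁ᶜ ∩ X₂ᶜ) => (hx.2.2 s).2,
    sum_le_sum fun s (_ : s ∈ X₁ ∩ X₂) => (hx.2.2 s).1]

theorem exists_isGreatest_sum_isLeast_dual (hb10 : b1 ∅ = 0)
    (hsub₁ : ∀ X Y, b1 (X ∪ Y) + b1 (X ∩ Y) ≤ b1 X + b1 Y)
    (hcross₁ : ∀ X Y, b1 (X \ Y) - p1 (Y \ X) ≤ b1 X - p1 Y) (hb20 : b2 ∅ = 0)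
    (hsub₂ : ∀ X Y, b2 (X ∪ Y) + b2 (X ∩ Y) ≤ b2 X + b2 Y)
    (hcross₂ : ∀ X Y, b2 (X \ Y) - p2 (Y \ X) ≤ b2 X - p2 Y)
    (hne : (feasibleSet p1 b1 p2 b2 f g).Nonempty) :
    ∃ M, IsGreatest ((fun x => ∑ s, x s) '' feasibleSet p1 b1 p2 b2 f g) M ∧
      IsLeast {v | ∃ X₁ X₂ : Finset S,
        v = b1 X₁ + b2 X₂ + ∑ s ∈ X₁ᶜ ∩ X₂ᶜ, g s - ∑ s ∈ X₁ ∩ X₂, f s} M := by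
  obtain ⟨x, hx, hmax⟩ := isCompact_feasibleSet.exists_isMaxOn hne
    (by fun_prop : Continuous fun y : S → ℝ => ∑ s, y s).continuousOn
  obtain ⟨X₁, X₂, hX₁, hX₂, hf, hg⟩ :=
    exists_tight_of_isMaxOn hb10 hsub₁ hcross₁ hb20 hsub₂ hcross₂ hx hmax
  refine ⟨∑ s, x s, ⟨⟨x, hx, rfl⟩, ?_⟩, ⟨⟨X₁, X₂, ?_⟩, ?_⟩⟩
  · rintro _ ⟨y, hy, rfl⟩
    exact hmax hy
  · have hf' : ∑ s ∈ X₁ ∩ X₂, x s = ∑ s ∈ X₁ ∩ X₂, f s := sum_congr rfl hf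
    have hg' : ∑ s ∈ X₁ᶜ ∩ X₂ᶜ, x s = ∑ s ∈ X₁ᶜ ∩ X₂ᶜ, g s :=
      sum_congr rfl fun s hs => hg s (by simpa [not_or] using hs)
    unfold IsTight at hX₁ hX₂
    linarith [sum_univ_eq_add_sub_inter_add_compl x X₁ X₂]
  · rintro _ ⟨Y₁, Y₂, rfl⟩
    exact sum_le_of_mem_feasibleSet hx Y₁ Y₂

theorem exists_isLeast_sum_isGreatest_dual (hp10 : p1 ∅ = 0)
    (hsuper₁ : ∀ X Y, p1 X + p1 Y ≤ p1 (X ∪ Y) + p1 (X ∩ Y))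
    (hcross₁ : ∀ X Y, b1 (X \ Y) - p1 (Y \ X) ≤ b1 X - p1 Y) (hp20 : p2 ∅ = 0)
    (hsuper₂ : ∀ X Y, p2 X + p2 Y ≤ p2 (X ∪ Y) + p2 (X ∩ Y))
    (hcross₂ : ∀ X Y, b2 (X \ Y) - p2 (Y \ X) ≤ b2 X - p2 Y)
    (hne : (feasibleSet p1 b1 p2 b2 f g).Nonempty) :
    ∃ M, IsLeast ((fun x => ∑ s, x s) '' feasibleSet p1 b1 p2 b2 f g) M ∧
      IsGreatest {v | ∃ X₁ X₂ : Finset S,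
        v = p1 X₁ + p2 X₂ + ∑ s ∈ X₁ᶜ ∩ X₂ᶜ, f s - ∑ s ∈ X₁ ∩ X₂, g s} M := by
  obtain ⟨x, hx⟩ := hne
  obtain ⟨M, hmax, hdual⟩ := exists_isGreatest_sum_isLeast_dual (p1 := -b1) (b1 := -p1)
    (p2 := -b2) (b2 := -p2) (f := -g) (g := -f) (by simp [hp10])
    (fun X Y => by simp only [Pi.neg_apply]; linarith [hsuper₁ X Y])
    (fun X Y => by simp only [Pi.neg_apply]; linarith [hcross₁ Y X]) (by simp [hp20])
    (fun X Y => by simp only [Pi.neg_apply]; linarith [hsuper₂ X Y])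
    (fun X Y => by simp only [Pi.neg_apply]; linarith [hcross₂ Y X])
    ⟨-x, neg_mem_feasibleSet_neg_iff.2 hx⟩
  have hdual_neg : (fun v => -v) '' {v | ∃ X₁ X₂ : Finset S,
      v = (-p1) X₁ + (-p2) X₂ + ∑ s ∈ X₁ᶜ ∩ X₂ᶜ, (-f) s - ∑ s ∈ X₁ ∩ X₂, (-g) s} =
      {v | ∃ X₁ X₂ : Finset S,
        v = p1 X₁ + p2 X₂ + ∑ s ∈ X₁ᶜ ∩ X₂ᶜ, f s - ∑ s ∈ X₁ ∩ X₂, g s} := by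
    refine Set.ext fun v => ⟨?_, ?_⟩
    · rintro ⟨_, ⟨X₁, X₂, rfl⟩, rfl⟩
      exact ⟨X₁, X₂, by simp only [Pi.neg_apply, sum_neg_distrib]; ring⟩
    · rintro ⟨X₁, X₂, rfl⟩
      exact ⟨_, ⟨X₁, X₂, rfl⟩, by simp only [Pi.neg_apply, sum_neg_distrib]; ring⟩
  have hneg : Antitone fun v : ℝ => -v := fun _ _ => neg_le_neg
  refine ⟨-M, ?_, ?_⟩
  · simpa only [neg_image_sum_feasibleSet_neg] using hneg.map_isGreatest hmax
  · simpa only [hdual_neg] using hneg.map_isLeast hdual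

end Duality

end GPolymatroid

theorem stmt_6_general {S : Type*} [Fintype S] [DecidableEq S]
    (p1 b1 p2 b2 : Finset S → ℝ)
    (hp10 : p1 ∅ = 0) (hb10 : b1 ∅ = 0) (hp20 : p2 ∅ = 0) (hb20 : b2 ∅ = 0)
    (hsuper1 : ∀ X Y : Finset S, p1 X + p1 Y ≤ p1 (X ∪ Y) + p1 (X ∩ Y))
    (hsub1 : ∀ X Y : Finset S, b1 (X ∪ Y) + b1 (X ∩ Y) ≤ b1 X + b1 Y)
    (hcross1 : ∀ X Y : Finset S, b1 (X \ Y) - p1 (Y \ X) ≤ b1 X - p1 Y)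
    (hsuper2 : ∀ X Y : Finset S, p2 X + p2 Y ≤ p2 (X ∪ Y) + p2 (X ∩ Y))
    (hsub2 : ∀ X Y : Finset S, b2 (X ∪ Y) + b2 (X ∩ Y) ≤ b2 X + b2 Y)
    (hcross2 : ∀ X Y : Finset S, b2 (X \ Y) - p2 (Y \ X) ≤ b2 X - p2 Y)
    (f g : S → ℝ)
    (hne : {x : S → ℝ |
        (∀ Z : Finset S, p1 Z ≤ ∑ s ∈ Z, x s ∧ ∑ s ∈ Z, x s ≤ b1 Z) ∧
        (∀ Z : Finset S, p2 Z ≤ ∑ s ∈ Z, x s ∧ ∑ s ∈ Z, x s ≤ b2 Z) ∧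
        (∀ s, f s ≤ x s ∧ x s ≤ g s)}.Nonempty) :
    (∃ M : ℝ,
      IsGreatest ((fun x : S → ℝ => ∑ s, x s) ''
          {x : S → ℝ |
            (∀ Z : Finset S, p1 Z ≤ ∑ s ∈ Z, x s ∧ ∑ s ∈ Z, x s ≤ b1 Z) ∧
            (∀ Z : Finset S, p2 Z ≤ ∑ s ∈ Z, x s ∧ ∑ s ∈ Z, x s ≤ b2 Z) ∧
            (∀ s, f s ≤ x s ∧ x s ≤ g s)}) M ∧
      IsLeast {v : ℝ | ∃ X₁ X₂ : Finset S,
          v = b1 X₁ + b2 X₂ + ∑ s ∈ X₁ᶜ ∩ X₂ᶜ, g s - ∑ s ∈ X₁ ∩ X₂, f s} M) ∧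
    (∃ M : ℝ,
      IsLeast ((fun x : S → ℝ => ∑ s, x s) ''
          {x : S → ℝ |
            (∀ Z : Finset S, p1 Z ≤ ∑ s ∈ Z, x s ∧ ∑ s ∈ Z, x s ≤ b1 Z) ∧
            (∀ Z : Finset S, p2 Z ≤ ∑ s ∈ Z, x s ∧ ∑ s ∈ Z, x s ≤ b2 Z) ∧
            (∀ s, f s ≤ x s ∧ x s ≤ g s)}) M ∧
      IsGreatest {v : ℝ | ∃ X₁ X₂ : Finset S,
          v = p1 X₁ + p2 X₂ + ∑ s ∈ X₁ᶜ ∩ X₂ᶜ, f s - ∑ s ∈ X₁ ∩ X₂, g s} M) :=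
  ⟨GPolymatroid.exists_isGreatest_sum_isLeast_dual hb10 hsub1 hcross1 hb20 hsub2 hcross2 hne,
    GPolymatroid.exists_isLeast_sum_isGreatest_dual hp10 hsuper1 hcross1 hp20 hsuper2 hcross2 hne⟩

/-- min-max formulae for the total sum x̃(S) over the intersection
of two g-polymatroids with a box (Corollary maxx(S)). -/
theorem stmt_6 {S : Type*} [Fintype S] [DecidableEq S]
    (p1 b1 p2 b2 : Finset S → ℝ)
    (hp10 : p1 ∅ = 0) (hb10 : b1 ∅ = 0) (hp20 : p2 ∅ = 0) (hb20 : b2 ∅ = 0)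
    (hsuper1 : ∀ X Y : Finset S, p1 X + p1 Y ≤ p1 (X ∪ Y) + p1 (X ∩ Y))
    (hsub1 : ∀ X Y : Finset S, b1 (X ∪ Y) + b1 (X ∩ Y) ≤ b1 X + b1 Y)
    (hcross1 : ∀ X Y : Finset S, b1 (X \ Y) - p1 (Y \ X) ≤ b1 X - p1 Y)
    (hsuper2 : ∀ X Y : Finset S, p2 X + p2 Y ≤ p2 (X ∪ Y) + p2 (X ∩ Y))
    (hsub2 : ∀ X Y : Finset S, b2 (X ∪ Y) + b2 (X ∩ Y) ≤ b2 X + b2 Y)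
    (hcross2 : ∀ X Y : Finset S, b2 (X \ Y) - p2 (Y \ X) ≤ b2 X - p2 Y)
    (f g : S → ℝ) (hfg : ∀ s, f s ≤ g s)
    (hne : {x : S → ℝ |
        (∀ Z : Finset S, p1 Z ≤ ∑ s ∈ Z, x s ∧ ∑ s ∈ Z, x s ≤ b1 Z) ∧
        (∀ Z : Finset S, p2 Z ≤ ∑ s ∈ Z, x s ∧ ∑ s ∈ Z, x s ≤ b2 Z) ∧
        (∀ s, f s ≤ x s ∧ x s ≤ g s)}.Nonempty) :
    (∃ M : ℝ,
      IsGreatest ((fun x : S → ℝ => ∑ s, x s) ''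
          {x : S → ℝ |
            (∀ Z : Finset S, p1 Z ≤ ∑ s ∈ Z, x s ∧ ∑ s ∈ Z, x s ≤ b1 Z) ∧
            (∀ Z : Finset S, p2 Z ≤ ∑ s ∈ Z, x s ∧ ∑ s ∈ Z, x s ≤ b2 Z) ∧
            (∀ s, f s ≤ x s ∧ x s ≤ g s)}) M ∧
      IsLeast {v : ℝ | ∃ X₁ X₂ : Finset S,
          v = b1 X₁ + b2 X₂ + ∑ s ∈ X₁ᶜ ∩ X₂ᶜ, g s - ∑ s ∈ X₁ ∩ X₂, f s} M) ∧
    (∃ M : ℝ,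
      IsLeast ((fun x : S → ℝ => ∑ s, x s) ''
          {x : S → ℝ |
            (∀ Z : Finset S, p1 Z ≤ ∑ s ∈ Z, x s ∧ ∑ s ∈ Z, x s ≤ b1 Z) ∧
            (∀ Z : Finset S, p2 Z ≤ ∑ s ∈ Z, x s ∧ ∑ s ∈ Z, x s ≤ b2 Z) ∧
            (∀ s, f s ≤ x s ∧ x s ≤ g s)}) M ∧
      IsGreatest {v : ℝ | ∃ X₁ X₂ : Finset S,
          v = p1 X₁ + p2 X₂ + ∑ s ∈ X₁ᶜ ∩ X₂ᶜ, f s - ∑ s ∈ X₁ ∩ X₂, g s} M) :=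
  stmt_6_general p1 b1 p2 b2 hp10 hb10 hp20 hb20 hsuper1 hsub1 hcross1 hsuper2 hsub2 hcross2 f g hne
end

section
/- Let (p*₁, b*₁) and (p*₂, b*₂) be integer-valued strong pairs on a finite set S, let S_P ⊆ S, and let m_P : S_P → ℤ. Then there exists an integer vector z ∈ Q(p*₁, b*₁) ∩ Q(p*₂, b*₂) whose restriction to S_P equals m_P if and only if for all X₁, X₂ ⊆ S with X₁ ⊖ X₂ ⊆ S_P the two inequalities p*₁(X₁) + m̃_P(X₂ − X₁) ≤ b*₂(X₂) + m̃_P(X₁ − X₂) and p*₂(X₂) + m̃_P(X₁ − X₂) ≤ b*₁(X₁) + m̃_P(X₂ − X₁) hold. -/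
set_option maxHeartbeats 2000000 in
theorem key_stmt7 {S : Type*} [Fintype S] [DecidableEq S] :
    ∀ (n : ℕ) (P1 B1 P2 B2 : Finset S → ℤ) (SP : Finset S),
    SPᶜ.card ≤ n →
    P1 ∅ = 0 → B1 ∅ = 0 → P2 ∅ = 0 → B2 ∅ = 0 →
    (∀ X Y : Finset S, P1 X + P1 Y ≤ P1 (X ∪ Y) + P1 (X ∩ Y)) →
    (∀ X Y : Finset S, B1 (X ∪ Y) + B1 (X ∩ Y) ≤ B1 X + B1 Y) →
    (∀ X Y : Finset S, B1 (X \ Y) - P1 (Y \ X) ≤ B1 X - P1 Y) →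
    (∀ X Y : Finset S, P2 X + P2 Y ≤ P2 (X ∪ Y) + P2 (X ∩ Y)) →
    (∀ X Y : Finset S, B2 (X ∪ Y) + B2 (X ∩ Y) ≤ B2 X + B2 Y) →
    (∀ X Y : Finset S, B2 (X \ Y) - P2 (Y \ X) ≤ B2 X - P2 Y) →
    (∀ X₁ X₂ : Finset S, (X₁ \ X₂) ∪ (X₂ \ X₁) ⊆ SP → P1 X₁ ≤ B2 X₂ ∧ P2 X₂ ≤ B1 X₁) →
    ∃ w : S → ℤ,
      (∀ Z : Finset S, P1 Z ≤ ∑ s ∈ Z, w s ∧ ∑ s ∈ Z, w s ≤ B1 Z) ∧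
      (∀ Z : Finset S, P2 Z ≤ ∑ s ∈ Z, w s ∧ ∑ s ∈ Z, w s ≤ B2 Z) ∧
      (∀ s ∈ SP, w s = 0) := by
  intro n
  induction n with
  | zero =>
    intro P1 B1 P2 B2 SP hcard hP10 hB10 hP20 hB20 hsup1 hsub1 hcr1 hsup2 hsub2 hcr2 hcond
    have hSP : SP = Finset.univ := by
      have : SPᶜ = ∅ := Finset.card_eq_zero.mp (Nat.le_zero.mp hcard)
      simpa using congrArg compl this
    subst hSP
    refine ⟨0, ?_, ?_, fun s _ => rfl⟩
    · intro Z
      have h1 := (hcond Z ∅ (Finset.subset_univ _)).1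
      have h2 := (hcond Z ∅ (Finset.subset_univ _)).2
      simp only [hB20, hP20] at h1 h2
      constructor <;> simp <;> linarith
    · intro Z
      have h1 := (hcond ∅ Z (Finset.subset_univ _)).1
      have h2 := (hcond ∅ Z (Finset.subset_univ _)).2
      simp only [hP10, hB10] at h1 h2
      constructor <;> simp <;> linarith
  | succ n IH =>
    intro P1 B1 P2 B2 SP hcard hP10 hB10 hP20 hB20 hsup1 hsub1 hcr1 hsup2 hsub2 hcr2 hcond
    rcases Finset.eq_empty_or_nonempty SPᶜ with he | ⟨t, ht⟩
    · exact IH P1 B1 P2 B2 SP (by simp [he]) hP10 hB10 hP20 hB20 hsup1 hsub1 hcr1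
        hsup2 hsub2 hcr2 hcond
    have htSP : t ∉ SP := Finset.mem_compl.mp ht
    -- the four combination lemmas
    have L1U1 : ∀ A₁ A₂ Y₁ Y₂ : Finset S, t ∈ A₁ → t ∉ A₂ →
        (A₁ \ A₂) ∪ (A₂ \ A₁) ⊆ insert t SP → t ∈ Y₂ → t ∉ Y₁ →
        (Y₁ \ Y₂) ∪ (Y₂ \ Y₁) ⊆ insert t SP →
        P1 A₁ - B2 A₂ ≤ B2 Y₂ - P1 Y₁ := by
      intro A₁ A₂ Y₁ Y₂ ha1 ha2 hA hy2 hy1 hB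
      have hsubU : ((A₁ ∪ Y₁) \ (A₂ ∪ Y₂)) ∪ ((A₂ ∪ Y₂) \ (A₁ ∪ Y₁)) ⊆ SP := by
        intro s hs
        have h1 : s ∈ (A₁ \ A₂) ∪ (A₂ \ A₁) → s ∈ insert t SP := fun h => hA h
        have h2 : s ∈ (Y₁ \ Y₂) ∪ (Y₂ \ Y₁) → s ∈ insert t SP := fun h => hB h
        simp only [Finset.mem_union, Finset.mem_sdiff, Finset.mem_inter,
          Finset.mem_insert] at hs h1 h2
        by_cases hst : s = t
        · subst hst; tauto
        · tauto
      have hsubI : ((A₁ ∩ Y₁) \ (A₂ ∩ Y₂)) ∪ ((A₂ ∩ Y₂) \ (A₁ ∩ Y₁)) ⊆ SP := by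
        intro s hs
        have h1 : s ∈ (A₁ \ A₂) ∪ (A₂ \ A₁) → s ∈ insert t SP := fun h => hA h
        have h2 : s ∈ (Y₁ \ Y₂) ∪ (Y₂ \ Y₁) → s ∈ insert t SP := fun h => hB h
        simp only [Finset.mem_union, Finset.mem_sdiff, Finset.mem_inter,
          Finset.mem_insert] at hs h1 h2
        by_cases hst : s = t
        · subst hst; tauto
        · tauto
      have c1 := (hcond (A₁ ∪ Y₁) (A₂ ∪ Y₂) hsubU).1
      have c2 := (hcond (A₁ ∩ Y₁) (A₂ ∩ Y₂) hsubI).1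
      have s1 := hsup1 A₁ Y₁
      have s2 := hsub2 A₂ Y₂
      linarith
    have L2U2 : ∀ A₁ A₂ Y₁ Y₂ : Finset S, t ∈ A₂ → t ∉ A₁ →
        (A₁ \ A₂) ∪ (A₂ \ A₁) ⊆ insert t SP → t ∈ Y₁ → t ∉ Y₂ →
        (Y₁ \ Y₂) ∪ (Y₂ \ Y₁) ⊆ insert t SP →
        P2 A₂ - B1 A₁ ≤ B1 Y₁ - P2 Y₂ := by
      intro A₁ A₂ Y₁ Y₂ ha2 ha1 hA hy1 hy2 hB
      have hsubU : ((A₁ ∪ Y₁) \ (A₂ ∪ Y₂)) ∪ ((A₂ ∪ Y₂) \ (A₁ ∪ Y₁)) ⊆ SP := by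
        intro s hs
        have h1 : s ∈ (A₁ \ A₂) ∪ (A₂ \ A₁) → s ∈ insert t SP := fun h => hA h
        have h2 : s ∈ (Y₁ \ Y₂) ∪ (Y₂ \ Y₁) → s ∈ insert t SP := fun h => hB h
        simp only [Finset.mem_union, Finset.mem_sdiff, Finset.mem_inter,
          Finset.mem_insert] at hs h1 h2
        by_cases hst : s = t
        · subst hst; tauto
        · tauto
      have hsubI : ((A₁ ∩ Y₁) \ (A₂ ∩ Y₂)) ∪ ((A₂ ∩ Y₂) \ (A₁ ∩ Y₁)) ⊆ SP := by
        intro s hs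
        have h1 : s ∈ (A₁ \ A₂) ∪ (A₂ \ A₁) → s ∈ insert t SP := fun h => hA h
        have h2 : s ∈ (Y₁ \ Y₂) ∪ (Y₂ \ Y₁) → s ∈ insert t SP := fun h => hB h
        simp only [Finset.mem_union, Finset.mem_sdiff, Finset.mem_inter,
          Finset.mem_insert] at hs h1 h2
        by_cases hst : s = t
        · subst hst; tauto
        · tauto
      have c1 := (hcond (A₁ ∪ Y₁) (A₂ ∪ Y₂) hsubU).2
      have c2 := (hcond (A₁ ∩ Y₁) (A₂ ∩ Y₂) hsubI).2
      have s1 := hsup2 A₂ Y₂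
      have s2 := hsub1 A₁ Y₁
      linarith
    have L2U1 : ∀ A₁ A₂ Y₁ Y₂ : Finset S, t ∈ A₂ → t ∉ A₁ →
        (A₁ \ A₂) ∪ (A₂ \ A₁) ⊆ insert t SP → t ∈ Y₂ → t ∉ Y₁ →
        (Y₁ \ Y₂) ∪ (Y₂ \ Y₁) ⊆ insert t SP →
        P2 A₂ - B1 A₁ ≤ B2 Y₂ - P1 Y₁ := by
      intro A₁ A₂ Y₁ Y₂ ha2 ha1 hA hy2 hy1 hB
      have hsub1' : ((Y₁ \ A₁) \ (Y₂ \ A₂)) ∪ ((Y₂ \ A₂) \ (Y₁ \ A₁)) ⊆ SP := by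
        intro s hs
        have h1 : s ∈ (A₁ \ A₂) ∪ (A₂ \ A₁) → s ∈ insert t SP := fun h => hA h
        have h2 : s ∈ (Y₁ \ Y₂) ∪ (Y₂ \ Y₁) → s ∈ insert t SP := fun h => hB h
        simp only [Finset.mem_union, Finset.mem_sdiff, Finset.mem_inter,
          Finset.mem_insert] at hs h1 h2
        by_cases hst : s = t
        · subst hst; tauto
        · tauto
      have hsub2' : ((A₁ \ Y₁) \ (A₂ \ Y₂)) ∪ ((A₂ \ Y₂) \ (A₁ \ Y₁)) ⊆ SP := by
        intro s hs
        have h1 : s ∈ (A₁ \ A₂) ∪ (A₂ \ A₁) → s ∈ insert t SP := fun h => hA h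
        have h2 : s ∈ (Y₁ \ Y₂) ∪ (Y₂ \ Y₁) → s ∈ insert t SP := fun h => hB h
        simp only [Finset.mem_union, Finset.mem_sdiff, Finset.mem_inter,
          Finset.mem_insert] at hs h1 h2
        by_cases hst : s = t
        · subst hst; tauto
        · tauto
      have c1 := (hcond (Y₁ \ A₁) (Y₂ \ A₂) hsub1').1
      have c2 := (hcond (A₁ \ Y₁) (A₂ \ Y₂) hsub2').2
      have s1 := hcr2 Y₂ A₂
      have s2 := hcr1 A₁ Y₁
      linarith
    have L1U2 : ∀ A₁ A₂ Y₁ Y₂ : Finset S, t ∈ A₁ → t ∉ A₂ →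
        (A₁ \ A₂) ∪ (A₂ \ A₁) ⊆ insert t SP → t ∈ Y₁ → t ∉ Y₂ →
        (Y₁ \ Y₂) ∪ (Y₂ \ Y₁) ⊆ insert t SP →
        P1 A₁ - B2 A₂ ≤ B1 Y₁ - P2 Y₂ := by
      intro A₁ A₂ Y₁ Y₂ ha1 ha2 hA hy1 hy2 hB
      have hsub1' : ((A₁ \ Y₁) \ (A₂ \ Y₂)) ∪ ((A₂ \ Y₂) \ (A₁ \ Y₁)) ⊆ SP := by
        intro s hs
        have h1 : s ∈ (A₁ \ A₂) ∪ (A₂ \ A₁) → s ∈ insert t SP := fun h => hA h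
        have h2 : s ∈ (Y₁ \ Y₂) ∪ (Y₂ \ Y₁) → s ∈ insert t SP := fun h => hB h
        simp only [Finset.mem_union, Finset.mem_sdiff, Finset.mem_inter,
          Finset.mem_insert] at hs h1 h2
        by_cases hst : s = t
        · subst hst; tauto
        · tauto
      have hsub2' : ((Y₁ \ A₁) \ (Y₂ \ A₂)) ∪ ((Y₂ \ A₂) \ (Y₁ \ A₁)) ⊆ SP := by
        intro s hs
        have h1 : s ∈ (A₁ \ A₂) ∪ (A₂ \ A₁) → s ∈ insert t SP := fun h => hA h
        have h2 : s ∈ (Y₁ \ Y₂) ∪ (Y₂ \ Y₁) → s ∈ insert t SP := fun h => hB h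
        simp only [Finset.mem_union, Finset.mem_sdiff, Finset.mem_inter,
          Finset.mem_insert] at hs h1 h2
        by_cases hst : s = t
        · subst hst; tauto
        · tauto
      have c1 := (hcond (A₁ \ Y₁) (A₂ \ Y₂) hsub1').1
      have c2 := (hcond (Y₁ \ A₁) (Y₂ \ A₂) hsub2').2
      have s1 := hcr1 Y₁ A₁
      have s2 := hcr2 A₂ Y₂
      linarith
    -- define α
    set lo : Finset S × Finset S → ℤ := fun q =>
      if t ∈ q.1 ∧ t ∉ q.2 ∧ (q.1 \ q.2) ∪ (q.2 \ q.1) ⊆ insert t SP then P1 q.1 - B2 q.2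
      else if t ∈ q.2 ∧ t ∉ q.1 ∧ (q.1 \ q.2) ∪ (q.2 \ q.1) ⊆ insert t SP then P2 q.2 - B1 q.1
      else P1 {t} - B2 ∅ with hlo
    have hne : ((Finset.univ : Finset (Finset S × Finset S)).image lo).Nonempty :=
      Finset.Nonempty.image ⟨({t}, ∅), Finset.mem_univ _⟩ lo
    set α : ℤ := ((Finset.univ : Finset (Finset S × Finset S)).image lo).max' hne with hα
    have hdeft : t ∈ ({t} : Finset S) := Finset.mem_singleton_self t
    have hdefC : (({t} : Finset S) \ ∅) ∪ (∅ \ {t}) ⊆ insert t SP := by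
      intro s hs; simp only [Finset.sdiff_empty, Finset.empty_sdiff, Finset.union_empty,
        Finset.mem_singleton] at hs; simp [hs]
    have hlb1 : ∀ X₁ X₂ : Finset S, t ∈ X₁ → t ∉ X₂ →
        (X₁ \ X₂) ∪ (X₂ \ X₁) ⊆ insert t SP → P1 X₁ - B2 X₂ ≤ α := by
      intro X₁ X₂ h1 h2 hC
      have hmem : P1 X₁ - B2 X₂ ∈ (Finset.univ : Finset (Finset S × Finset S)).image lo := by
        refine Finset.mem_image.mpr ⟨(X₁, X₂), Finset.mem_univ _, ?_⟩
        rw [hlo]; exact if_pos ⟨h1, h2, hC⟩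
      exact Finset.le_max' _ _ hmem
    have hlb2 : ∀ X₁ X₂ : Finset S, t ∈ X₂ → t ∉ X₁ →
        (X₁ \ X₂) ∪ (X₂ \ X₁) ⊆ insert t SP → P2 X₂ - B1 X₁ ≤ α := by
      intro X₁ X₂ h2 h1 hC
      have hmem : P2 X₂ - B1 X₁ ∈ (Finset.univ : Finset (Finset S × Finset S)).image lo := by
        refine Finset.mem_image.mpr ⟨(X₁, X₂), Finset.mem_univ _, ?_⟩
        rw [hlo]; dsimp only
        rw [if_neg (by tauto), if_pos ⟨h2, h1, hC⟩]
      exact Finset.le_max' _ _ hmem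
    have hub1 : ∀ Y₁ Y₂ : Finset S, t ∈ Y₂ → t ∉ Y₁ →
        (Y₁ \ Y₂) ∪ (Y₂ \ Y₁) ⊆ insert t SP → α ≤ B2 Y₂ - P1 Y₁ := by
      intro Y₁ Y₂ hy2 hy1 hB
      apply Finset.max'_le
      intro v hv
      obtain ⟨q, -, hq⟩ := Finset.mem_image.mp hv
      rw [hlo] at hq; dsimp only at hq
      split_ifs at hq with hc1 hc2
      · exact hq ▸ L1U1 q.1 q.2 Y₁ Y₂ hc1.1 hc1.2.1 hc1.2.2 hy2 hy1 hB
      · exact hq ▸ L2U1 q.1 q.2 Y₁ Y₂ hc2.1 hc2.2.1 hc2.2.2 hy2 hy1 hB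
      · exact hq ▸ L1U1 {t} ∅ Y₁ Y₂ hdeft (Finset.notMem_empty t) hdefC hy2 hy1 hB
    have hub2 : ∀ Y₁ Y₂ : Finset S, t ∈ Y₁ → t ∉ Y₂ →
        (Y₁ \ Y₂) ∪ (Y₂ \ Y₁) ⊆ insert t SP → α ≤ B1 Y₁ - P2 Y₂ := by
      intro Y₁ Y₂ hy1 hy2 hB
      apply Finset.max'_le
      intro v hv
      obtain ⟨q, -, hq⟩ := Finset.mem_image.mp hv
      rw [hlo] at hq; dsimp only at hq
      split_ifs at hq with hc1 hc2
      · exact hq ▸ L1U2 q.1 q.2 Y₁ Y₂ hc1.1 hc1.2.1 hc1.2.2 hy1 hy2 hB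
      · exact hq ▸ L2U2 q.1 q.2 Y₁ Y₂ hc2.1 hc2.2.1 hc2.2.2 hy1 hy2 hB
      · exact hq ▸ L1U2 {t} ∅ Y₁ Y₂ hdeft (Finset.notMem_empty t) hdefC hy1 hy2 hB
    -- shifted functions
    set it : Finset S → ℤ := fun X => if t ∈ X then α else 0 with hit
    have hit0 : it ∅ = 0 := by simp [hit]
    have hitUI : ∀ X Y : Finset S, it (X ∪ Y) + it (X ∩ Y) = it X + it Y := by
      intro X Y
      by_cases hX : t ∈ X <;> by_cases hY : t ∈ Y <;>
        simp [hit, Finset.mem_union, Finset.mem_inter, hX, hY]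
    have hitSD : ∀ X Y : Finset S, it X - it Y = it (X \ Y) - it (Y \ X) := by
      intro X Y
      by_cases hX : t ∈ X <;> by_cases hY : t ∈ Y <;>
        simp [hit, Finset.mem_sdiff, hX, hY]
    have hcard' : (insert t SP)ᶜ.card ≤ n := by
      rw [Finset.compl_insert]
      have := Finset.card_erase_of_mem ht
      omega
    have hcond' : ∀ X₁ X₂ : Finset S, (X₁ \ X₂) ∪ (X₂ \ X₁) ⊆ insert t SP →
        (fun X => P1 X - it X) X₁ ≤ (fun X => B2 X - it X) X₂ ∧
        (fun X => P2 X - it X) X₂ ≤ (fun X => B1 X - it X) X₁ := by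
      intro X₁ X₂ hΔ
      dsimp only
      by_cases h1 : t ∈ X₁ <;> by_cases h2 : t ∈ X₂
      · have hsub : (X₁ \ X₂) ∪ (X₂ \ X₁) ⊆ SP := by
          intro s hs
          have h := hΔ hs
          simp only [Finset.mem_union, Finset.mem_sdiff, Finset.mem_insert] at h hs
          by_cases hst : s = t
          · subst hst; tauto
          · tauto
        have := hcond X₁ X₂ hsub
        simp only [hit, h1, h2, if_pos]
        constructor <;> linarith [this.1, this.2]
      · have hl := hlb1 X₁ X₂ h1 h2 hΔ
        have hu := hub2 X₁ X₂ h1 h2 hΔ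
        simp only [hit, h1, h2, if_pos, if_neg]
        constructor <;> simp <;> linarith
      · have hl := hlb2 X₁ X₂ h2 h1 hΔ
        have hu := hub1 X₁ X₂ h2 h1 hΔ
        simp only [hit, h1, h2]
        constructor <;> simp <;> linarith
      · have hsub : (X₁ \ X₂) ∪ (X₂ \ X₁) ⊆ SP := by
          intro s hs
          have h := hΔ hs
          simp only [Finset.mem_union, Finset.mem_sdiff, Finset.mem_insert] at h hs
          by_cases hst : s = t
          · subst hst; tauto
          · tauto
        have := hcond X₁ X₂ hsub
        simp only [hit, h1, h2]
        constructor <;> simp <;> linarith [this.1, this.2]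
    obtain ⟨w', hw1', hw2', hw0'⟩ := IH (fun X => P1 X - it X) (fun X => B1 X - it X)
      (fun X => P2 X - it X) (fun X => B2 X - it X) (insert t SP) hcard'
      (by simp [hP10, hit0]) (by simp [hB10, hit0]) (by simp [hP20, hit0]) (by simp [hB20, hit0])
      (fun X Y => by have := hsup1 X Y; have := hitUI X Y; linarith)
      (fun X Y => by have := hsub1 X Y; have := hitUI X Y; linarith)
      (fun X Y => by have := hcr1 X Y; have := hitSD X Y; linarith)
      (fun X Y => by have := hsup2 X Y; have := hitUI X Y; linarith)
      (fun X Y => by have := hsub2 X Y; have := hitUI X Y; linarith)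
      (fun X Y => by have := hcr2 X Y; have := hitSD X Y; linarith)
      hcond'
    refine ⟨fun s => w' s + if s = t then α else 0, ?_, ?_, ?_⟩
    · intro Z
      have hs : ∑ s ∈ Z, (w' s + if s = t then α else 0) = (∑ s ∈ Z, w' s) + it Z := by
        rw [Finset.sum_add_distrib, Finset.sum_ite_eq' Z t (fun _ => α)]
      rw [hs]
      have := hw1' Z
      constructor <;> linarith [this.1, this.2]
    · intro Z
      have hs : ∑ s ∈ Z, (w' s + if s = t then α else 0) = (∑ s ∈ Z, w' s) + it Z := by
        rw [Finset.sum_add_distrib, Finset.sum_ite_eq' Z t (fun _ => α)]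
      rw [hs]
      have := hw2' Z
      constructor <;> linarith [this.1, this.2]
    · intro s hsSP
      have hst : s ≠ t := fun h => htSP (h ▸ hsSP)
      have := hw0' s (Finset.mem_insert_of_mem hsSP)
      simp [this, hst]
/-- existence of an integral element of the intersection of two
g-polymatroids with prescribed values on a subset S_P (Corollary "fixed"). -/
theorem stmt_7 {S : Type*} [Fintype S] [DecidableEq S]
    (p1 b1 p2 b2 : Finset S → ℤ)
    (hp10 : p1 ∅ = 0) (hb10 : b1 ∅ = 0) (hp20 : p2 ∅ = 0) (hb20 : b2 ∅ = 0)
    (hsuper1 : ∀ X Y : Finset S, p1 X + p1 Y ≤ p1 (X ∪ Y) + p1 (X ∩ Y))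
    (hsub1 : ∀ X Y : Finset S, b1 (X ∪ Y) + b1 (X ∩ Y) ≤ b1 X + b1 Y)
    (hcross1 : ∀ X Y : Finset S, b1 (X \ Y) - p1 (Y \ X) ≤ b1 X - p1 Y)
    (hsuper2 : ∀ X Y : Finset S, p2 X + p2 Y ≤ p2 (X ∪ Y) + p2 (X ∩ Y))
    (hsub2 : ∀ X Y : Finset S, b2 (X ∪ Y) + b2 (X ∩ Y) ≤ b2 X + b2 Y)
    (hcross2 : ∀ X Y : Finset S, b2 (X \ Y) - p2 (Y \ X) ≤ b2 X - p2 Y)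
    (SP : Finset S) (mP : S → ℤ) :
    (∃ z : S → ℤ,
        (∀ Z : Finset S, p1 Z ≤ ∑ s ∈ Z, z s ∧ ∑ s ∈ Z, z s ≤ b1 Z) ∧
        (∀ Z : Finset S, p2 Z ≤ ∑ s ∈ Z, z s ∧ ∑ s ∈ Z, z s ≤ b2 Z) ∧
        (∀ s ∈ SP, z s = mP s)) ↔
      (∀ X₁ X₂ : Finset S, (X₁ \ X₂) ∪ (X₂ \ X₁) ⊆ SP →
        (p1 X₁ + ∑ s ∈ X₂ \ X₁, mP s ≤ b2 X₂ + ∑ s ∈ X₁ \ X₂, mP s) ∧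
        (p2 X₂ + ∑ s ∈ X₁ \ X₂, mP s ≤ b1 X₁ + ∑ s ∈ X₂ \ X₁, mP s)) := by
  constructor
  · rintro ⟨z, hz1, hz2, hzm⟩ X₁ X₂ hΔ
    have e1 : ∑ s ∈ X₁ \ X₂, z s = ∑ s ∈ X₁ \ X₂, mP s :=
      Finset.sum_congr rfl fun s hs => hzm s (hΔ (Finset.mem_union_left _ hs))
    have e2 : ∑ s ∈ X₂ \ X₁, z s = ∑ s ∈ X₂ \ X₁, mP s :=
      Finset.sum_congr rfl fun s hs => hzm s (hΔ (Finset.mem_union_right _ hs))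
    have u1 : ∑ s ∈ X₁, z s + ∑ s ∈ X₂ \ X₁, z s = ∑ s ∈ X₁ ∪ X₂, z s := by
      rw [← Finset.sum_union Finset.disjoint_sdiff, Finset.union_sdiff_self_eq_union]
    have u2 : ∑ s ∈ X₂, z s + ∑ s ∈ X₁ \ X₂, z s = ∑ s ∈ X₁ ∪ X₂, z s := by
      rw [← Finset.sum_union Finset.disjoint_sdiff, Finset.union_sdiff_self_eq_union,
        Finset.union_comm]
    have h1 := (hz1 X₁).1
    have h2 := (hz1 X₁).2
    have h3 := (hz2 X₂).1
    have h4 := (hz2 X₂).2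
    constructor <;> linarith
  · intro hcond
    set m : Finset S → ℤ := fun X => ∑ s ∈ X, mP s with hm
    have hmSD : ∀ X Y : Finset S, m X - m Y = m (X \ Y) - m (Y \ X) := by
      intro X Y
      have hx : m X = m (X \ Y) + m (X ∩ Y) := by
        rw [hm]; dsimp only
        rw [← Finset.sum_union (Finset.disjoint_sdiff_inter X Y), Finset.sdiff_union_inter]
      have hy : m Y = m (Y \ X) + m (Y ∩ X) := by
        rw [hm]; dsimp only
        rw [← Finset.sum_union (Finset.disjoint_sdiff_inter Y X), Finset.sdiff_union_inter]
      have hxy : m (X ∩ Y) = m (Y ∩ X) := by rw [Finset.inter_comm]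
      linarith
    have hmUI : ∀ X Y : Finset S, m (X ∪ Y) + m (X ∩ Y) = m X + m Y := fun X Y =>
      Finset.sum_union_inter
    obtain ⟨w, hw1, hw2, hw0⟩ := key_stmt7 SPᶜ.card
      (fun X => p1 X - m X) (fun X => b1 X - m X)
      (fun X => p2 X - m X) (fun X => b2 X - m X) SP le_rfl
      (by simp [hp10, hm]) (by simp [hb10, hm]) (by simp [hp20, hm]) (by simp [hb20, hm])
      (fun X Y => by have := hsuper1 X Y; have := hmUI X Y; linarith)
      (fun X Y => by have := hsub1 X Y; have := hmUI X Y; linarith)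
      (fun X Y => by have := hcross1 X Y; have := hmSD X Y; linarith)
      (fun X Y => by have := hsuper2 X Y; have := hmUI X Y; linarith)
      (fun X Y => by have := hsub2 X Y; have := hmUI X Y; linarith)
      (fun X Y => by have := hcross2 X Y; have := hmSD X Y; linarith)
      (by
        intro X₁ X₂ hΔ
        have h := hcond X₁ X₂ hΔ
        have hsd := hmSD X₂ X₁
        have h1 : p1 X₁ + m (X₂ \ X₁) ≤ b2 X₂ + m (X₁ \ X₂) := h.1
        have h2 : p2 X₂ + m (X₁ \ X₂) ≤ b1 X₁ + m (X₂ \ X₁) := h.2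
        constructor <;> linarith)
    · refine ⟨fun s => mP s + w s, ?_, ?_, ?_⟩
      · intro Z
        have hs : ∑ s ∈ Z, (mP s + w s) = m Z + ∑ s ∈ Z, w s := by
          rw [Finset.sum_add_distrib]
        have h1 := (hw1 Z).1
        have h2 := (hw1 Z).2
        rw [hs]
        constructor <;> linarith
      · intro Z
        have hs : ∑ s ∈ Z, (mP s + w s) = m Z + ∑ s ∈ Z, w s := by
          rw [Finset.sum_add_distrib]
        have h1 := (hw2 Z).1
        have h2 := (hw2 Z).2
        rw [hs]
        constructor <;> linarith
      · intro s hs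
        simp [hw0 s hs]
end

section
/- Let m, n ≥ 1, let Φ¹ ≤ Γ¹ and Φ² ≤ Γ² be integer m×n prefix-bound matrices and f ≤ g integer m×n matrices. Assume Φ¹(i,n) = Γ¹(i,n) for every i, Φ²(m,j) = Γ²(m,j) for every j, and Σ_{i=1}^{m} Φ¹(i,n) = Σ_{j=1}^{n} Φ²(m,j) = H. Then there exists an integer prefix-bounded matrix A with f ≤ A ≤ g if and only if H ≤ b*₁(X') + b*₂(X'') + g̃(X'ᶜ ∩ X''ᶜ) − f̃(X' ∩ X'') holds for every X', X'' ⊆ S_{m,n}. -/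
/-- The set of positions of an m×n matrix, 1-based: S_{m,n} = [m] × [n]. -/
def Smn (m n : ℕ) : Finset (ℕ × ℕ) := Finset.Icc 1 m ×ˢ Finset.Icc 1 n

/-- The horizontal prefix P¹_{i,j} = {(i,1), …, (i,j)}. -/
def hPrefix (i j : ℕ) : Finset (ℕ × ℕ) := {i} ×ˢ Finset.Icc 1 j

/-- The vertical prefix P²_{i,j} = {(1,j), …, (i,j)}. -/
def vPrefix (i j : ℕ) : Finset (ℕ × ℕ) := Finset.Icc 1 i ×ˢ {j}

/-- x̃(X), the sum of the entries of x at the positions in X. -/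
def fsum (x : ℕ × ℕ → ℤ) (X : Finset (ℕ × ℕ)) : ℤ := ∑ s ∈ X, x s

/-- A is a prefix-bounded matrix (PBM) of size m×n with respect to the
horizontal-prefix bounds Φ1 ≤ Γ1 and the vertical-prefix bounds Φ2 ≤ Γ2. -/
def IsPBM (m n : ℕ) (Φ1 Γ1 Φ2 Γ2 : ℕ × ℕ → ℤ) (A : ℕ × ℕ → ℤ) : Prop :=
  ∀ i ∈ Finset.Icc 1 m, ∀ j ∈ Finset.Icc 1 n,
    (Φ1 (i, j) ≤ fsum A (hPrefix i j) ∧ fsum A (hPrefix i j) ≤ Γ1 (i, j)) ∧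
    (Φ2 (i, j) ≤ fsum A (vPrefix i j) ∧ fsum A (vPrefix i j) ≤ Γ2 (i, j))

/-- Starting positions of the maximal horizontal segments of X ⊆ S_{m,n}. -/
def hStarts (X : Finset (ℕ × ℕ)) : Finset (ℕ × ℕ) :=
  X.filter (fun s => (s.1, s.2 - 1) ∉ X)

/-- Ending positions of the maximal horizontal segments of X ⊆ S_{m,n}. -/
def hEnds (X : Finset (ℕ × ℕ)) : Finset (ℕ × ℕ) :=
  X.filter (fun s => (s.1, s.2 + 1) ∉ X)

/-- Starting positions of the maximal vertical segments of X ⊆ S_{m,n}. -/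
def vStarts (X : Finset (ℕ × ℕ)) : Finset (ℕ × ℕ) :=
  X.filter (fun s => (s.1 - 1, s.2) ∉ X)

/-- Ending positions of the maximal vertical segments of X ⊆ S_{m,n}. -/
def vEnds (X : Finset (ℕ × ℕ)) : Finset (ℕ × ℕ) :=
  X.filter (fun s => (s.1 + 1, s.2) ∉ X)

/-- σ₁(X): the number of maximal horizontal segments of X. -/
def sigma1 (X : Finset (ℕ × ℕ)) : ℕ := (hStarts X).card

/-- σ₂(X): the number of maximal vertical segments of X. -/
def sigma2 (X : Finset (ℕ × ℕ)) : ℕ := (vStarts X).card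

/-- p*₁(X) = Σ [Φ¹(i,j₂) − Γ¹(i,j₁−1)] over the maximal horizontal segments
{(i,j₁),…,(i,j₂)} of X, with the convention Γ¹(i,0) = 0. -/
def pstar1 (Φ1 Γ1 : ℕ × ℕ → ℤ) (X : Finset (ℕ × ℕ)) : ℤ :=
  ∑ s ∈ hEnds X, Φ1 s -
    ∑ s ∈ hStarts X, (if s.2 = 1 then 0 else Γ1 (s.1, s.2 - 1))

/-- b*₁(X) = Σ [Γ¹(i,j₂) − Φ¹(i,j₁−1)] over the maximal horizontal segments
{(i,j₁),…,(i,j₂)} of X, with the convention Φ¹(i,0) = 0. -/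
def bstar1 (Φ1 Γ1 : ℕ × ℕ → ℤ) (X : Finset (ℕ × ℕ)) : ℤ :=
  ∑ s ∈ hEnds X, Γ1 s -
    ∑ s ∈ hStarts X, (if s.2 = 1 then 0 else Φ1 (s.1, s.2 - 1))

/-- p*₂(X) = Σ [Φ²(i₂,j) − Γ²(i₁−1,j)] over the maximal vertical segments
{(i₁,j),…,(i₂,j)} of X, with the convention Γ²(0,j) = 0. -/
def pstar2 (Φ2 Γ2 : ℕ × ℕ → ℤ) (X : Finset (ℕ × ℕ)) : ℤ :=
  ∑ s ∈ vEnds X, Φ2 s -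
    ∑ s ∈ vStarts X, (if s.1 = 1 then 0 else Γ2 (s.1 - 1, s.2))

/-- b*₂(X) = Σ [Γ²(i₂,j) − Φ²(i₁−1,j)] over the maximal vertical segments
{(i₁,j),…,(i₂,j)} of X, with the convention Φ²(0,j) = 0. -/
def bstar2 (Φ2 Γ2 : ℕ × ℕ → ℤ) (X : Finset (ℕ × ℕ)) : ℤ :=
  ∑ s ∈ vEnds X, Γ2 s -
    ∑ s ∈ vStarts X, (if s.1 = 1 then 0 else Φ2 (s.1 - 1, s.2))

open Finset

lemma fsum_mono {x y : ℕ × ℕ → ℤ} {X T : Finset (ℕ × ℕ)} (h : X ⊆ T)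
    (hxy : ∀ s ∈ T, x s ≤ y s) : fsum x X ≤ fsum y X :=
  Finset.sum_le_sum fun s hs => hxy s (h hs)

lemma fsum_sdiff {x : ℕ × ℕ → ℤ} {X T : Finset (ℕ × ℕ)} (h : X ⊆ T) :
    fsum x (T \ X) = fsum x T - fsum x X := by
  have := Finset.sum_sdiff (f := x) h
  unfold fsum; linarith

lemma sum_subset_ite (F : ℕ × ℕ → ℤ) {X T : Finset (ℕ × ℕ)} (h : X ⊆ T) :
    ∑ s ∈ X, F s = ∑ s ∈ T, if s ∈ X then F s else 0 := by
  rw [Finset.sum_ite_mem, Finset.inter_eq_right.mpr h]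

lemma fsum_ite (x : ℕ × ℕ → ℤ) {X T : Finset (ℕ × ℕ)} (h : X ⊆ T) :
    fsum x X = ∑ s ∈ T, if s ∈ X then x s else 0 := sum_subset_ite x h

/-- The truncated-shift convention value: u'(i,j) = u(i,j-1), 0 for j = 1. -/
def phiP (u : ℕ × ℕ → ℤ) (s : ℕ × ℕ) : ℤ := if s.2 = 1 then 0 else u (s.1, s.2 - 1)

lemma snd_pos_of_mem_Smn {m n : ℕ} {s : ℕ × ℕ} (hs : s ∈ Smn m n) : 1 ≤ s.2 := by
  simp only [Smn, Finset.mem_product, Finset.mem_Icc] at hs; omega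

lemma reindexH (m n : ℕ) (u : ℕ × ℕ → ℤ) {X : Finset (ℕ × ℕ)} (hX : X ⊆ Smn m n) :
    ∑ s ∈ X.filter (fun s => (s.1, s.2 - 1) ∈ X), phiP u s
      = ∑ s ∈ X.filter (fun s => (s.1, s.2 + 1) ∈ X), u s := by
  refine (Finset.sum_nbij' (fun s => (s.1, s.2 + 1)) (fun t => (t.1, t.2 - 1)) ?_ ?_ ?_ ?_ ?_).symm
  · intro a ha
    simp only [Finset.mem_filter] at ha ⊢
    have h1 : 1 ≤ a.2 := snd_pos_of_mem_Smn (hX ha.1)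
    refine ⟨ha.2, ?_⟩
    simp only [show a.2 + 1 - 1 = a.2 from rfl]
    exact ha.1
  · intro t ht
    simp only [Finset.mem_filter] at ht ⊢
    have h1 : 1 ≤ t.2 - 1 := snd_pos_of_mem_Smn (hX ht.2)
    have h2 : t.2 - 1 + 1 = t.2 := by omega
    exact ⟨ht.2, by rw [h2]; exact ht.1⟩
  · intro a ha; simp
  · intro t ht
    simp only [Finset.mem_filter] at ht
    have h1 : 1 ≤ t.2 - 1 := snd_pos_of_mem_Smn (hX ht.2)
    have h2 : t.2 - 1 + 1 = t.2 := by omega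
    simp [h2]
  · intro a ha
    simp only [Finset.mem_filter] at ha
    have h1 : 1 ≤ a.2 := snd_pos_of_mem_Smn (hX ha.1)
    simp only [phiP]
    rw [if_neg (by omega)]
    simp

/-- Representation of bstar1 as a sum over the whole grid:
a modular part plus a nonpositive pair part. -/
lemma bstar1_rep (m n : ℕ) (Φ Γ : ℕ × ℕ → ℤ) {X : Finset (ℕ × ℕ)} (hX : X ⊆ Smn m n) :
    bstar1 Φ Γ X = ∑ s ∈ Smn m n,
      ((if s ∈ X then Γ s - phiP Φ s else 0)
        + (if s ∈ X ∧ (s.1, s.2 + 1) ∈ X then Φ s - Γ s else 0)) := by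
  have hends : hEnds X = X.filter (fun s => ¬ (s.1, s.2 + 1) ∈ X) := rfl
  have hstarts : hStarts X = X.filter (fun s => ¬ (s.1, s.2 - 1) ∈ X) := rfl
  have e1 : ∑ s ∈ hEnds X, Γ s
      = ∑ s ∈ X, Γ s - ∑ s ∈ X.filter (fun s => (s.1, s.2 + 1) ∈ X), Γ s := by
    rw [hends]
    have := Finset.sum_filter_add_sum_filter_not X (fun s => (s.1, s.2 + 1) ∈ X) Γ
    linarith
  have e2 : ∑ s ∈ hStarts X, phiP Φ s
      = ∑ s ∈ X, phiP Φ s - ∑ s ∈ X.filter (fun s => (s.1, s.2 + 1) ∈ X), Φ s := by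
    rw [hstarts, ← reindexH m n Φ hX]
    have := Finset.sum_filter_add_sum_filter_not X (fun s => (s.1, s.2 - 1) ∈ X) (phiP Φ)
    linarith
  have hb : bstar1 Φ Γ X = ∑ s ∈ hEnds X, Γ s - ∑ s ∈ hStarts X, phiP Φ s := by
    unfold bstar1 phiP; rfl
  have t2 : ∑ s ∈ X, (Γ s - phiP Φ s)
      = ∑ s ∈ Smn m n, (if s ∈ X then Γ s - phiP Φ s else 0) :=
    sum_subset_ite _ hX
  have hsub : X.filter (fun s => (s.1, s.2 + 1) ∈ X) ⊆ Smn m n :=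
    (Finset.filter_subset _ _).trans hX
  have t1 : ∑ s ∈ X.filter (fun s => (s.1, s.2 + 1) ∈ X), (Φ s - Γ s)
      = ∑ s ∈ Smn m n, (if s ∈ X ∧ (s.1, s.2 + 1) ∈ X then Φ s - Γ s else 0) := by
    rw [sum_subset_ite _ hsub]
    apply Finset.sum_congr rfl
    intro s _
    simp [Finset.mem_filter]
  rw [Finset.sum_add_distrib, ← t1, ← t2, hb, e1, e2]
  rw [Finset.sum_sub_distrib (s := X), Finset.sum_sub_distrib]
  ring
lemma bstar1_submod (m n : ℕ) {Φ Γ : ℕ × ℕ → ℤ} (hΦΓ : ∀ s ∈ Smn m n, Φ s ≤ Γ s)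
    {X Y : Finset (ℕ × ℕ)} (hX : X ⊆ Smn m n) (hY : Y ⊆ Smn m n) :
    bstar1 Φ Γ (X ∪ Y) + bstar1 Φ Γ (X ∩ Y) ≤ bstar1 Φ Γ X + bstar1 Φ Γ Y := by
  rw [bstar1_rep m n Φ Γ hX, bstar1_rep m n Φ Γ hY,
    bstar1_rep m n Φ Γ (Finset.union_subset hX hY),
    bstar1_rep m n Φ Γ ((Finset.inter_subset_left).trans hX), ← Finset.sum_add_distrib,
    ← Finset.sum_add_distrib]
  apply Finset.sum_le_sum
  intro s hs
  have h := hΦΓ s hs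
  by_cases ha : s ∈ X <;> by_cases hc : s ∈ Y <;>
    by_cases ha' : (s.1, s.2 + 1) ∈ X <;> by_cases hc' : (s.1, s.2 + 1) ∈ Y <;>
    simp [ha, hc, ha', hc', Finset.mem_union, Finset.mem_inter] <;> linarith
lemma mem_image_swap {X : Finset (ℕ × ℕ)} {s : ℕ × ℕ} :
    s ∈ X.image Prod.swap ↔ s.swap ∈ X := by
  simp only [Finset.mem_image]
  constructor
  · rintro ⟨t, ht, rfl⟩; simpa using ht
  · intro h; exact ⟨s.swap, h, by simp⟩

lemma image_swap_subset_Smn {m n : ℕ} {X : Finset (ℕ × ℕ)} (hX : X ⊆ Smn m n) :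
    X.image Prod.swap ⊆ Smn n m := by
  intro s hs
  rw [mem_image_swap] at hs
  have := hX hs
  simp only [Smn, Finset.mem_product, Finset.mem_Icc, Prod.fst_swap, Prod.snd_swap] at this ⊢
  exact ⟨this.2, this.1⟩

lemma vEnds_swap (X : Finset (ℕ × ℕ)) :
    hEnds (X.image Prod.swap) = (vEnds X).image Prod.swap := by
  ext s
  simp only [hEnds, vEnds, Finset.mem_filter, mem_image_swap, Prod.swap_prod_mk,
    Prod.fst_swap, Prod.snd_swap]

lemma vStarts_swap (X : Finset (ℕ × ℕ)) :
    hStarts (X.image Prod.swap) = (vStarts X).image Prod.swap := by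
  ext s
  simp only [hStarts, vStarts, Finset.mem_filter, mem_image_swap, Prod.swap_prod_mk,
    Prod.fst_swap, Prod.snd_swap]

lemma sum_image_swap (F : ℕ × ℕ → ℤ) (X : Finset (ℕ × ℕ)) :
    ∑ s ∈ X.image Prod.swap, F s = ∑ s ∈ X, F s.swap := by
  rw [Finset.sum_image]
  intro a _ b _ h
  exact Prod.swap_injective h

lemma bstar2_eq (Φ Γ : ℕ × ℕ → ℤ) (X : Finset (ℕ × ℕ)) :
    bstar2 Φ Γ X = bstar1 (fun s => Φ s.swap) (fun s => Γ s.swap) (X.image Prod.swap) := by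
  unfold bstar1 bstar2
  rw [vEnds_swap, vStarts_swap, sum_image_swap, sum_image_swap]
  rfl

lemma fsum_swap (x : ℕ × ℕ → ℤ) (X : Finset (ℕ × ℕ)) :
    fsum (fun s => x s.swap) (X.image Prod.swap) = fsum x X := by
  unfold fsum
  rw [sum_image_swap]
  simp

lemma bstar2_submod (m n : ℕ) {Φ Γ : ℕ × ℕ → ℤ} (hΦΓ : ∀ s ∈ Smn m n, Φ s ≤ Γ s)
    {X Y : Finset (ℕ × ℕ)} (hX : X ⊆ Smn m n) (hY : Y ⊆ Smn m n) :
    bstar2 Φ Γ (X ∪ Y) + bstar2 Φ Γ (X ∩ Y) ≤ bstar2 Φ Γ X + bstar2 Φ Γ Y := by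
  rw [bstar2_eq, bstar2_eq, bstar2_eq, bstar2_eq, Finset.image_union,
    Finset.image_inter _ _ Prod.swap_injective]
  exact bstar1_submod n m (fun s hs => hΦΓ s.swap (by
      simp only [Smn, Finset.mem_product, Finset.mem_Icc, Prod.fst_swap, Prod.snd_swap] at hs ⊢
      exact ⟨hs.2, hs.1⟩))
    (image_swap_subset_Smn hX) (image_swap_subset_Smn hY)
lemma hPrefix_succ (i j : ℕ) (hj : 1 ≤ j) :
    hPrefix i j = insert (i, j) (hPrefix i (j - 1)) := by
  ext s
  simp only [hPrefix, Finset.mem_insert, Finset.mem_product, Finset.mem_singleton,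
    Finset.mem_Icc, Prod.ext_iff]
  omega

lemma notmem_hPrefix (i j : ℕ) : (i, j) ∉ hPrefix i (j - 1) := by
  simp only [hPrefix, Finset.mem_product, Finset.mem_singleton, Finset.mem_Icc]
  omega

lemma fsum_le_bstar1 (m n : ℕ) (Φ Γ A : ℕ × ℕ → ℤ)
    (hbd : ∀ i ∈ Finset.Icc 1 m, ∀ j ∈ Finset.Icc 1 n,
      Φ (i, j) ≤ fsum A (hPrefix i j) ∧ fsum A (hPrefix i j) ≤ Γ (i, j))
    {X : Finset (ℕ × ℕ)} (hX : X ⊆ Smn m n) : fsum A X ≤ bstar1 Φ Γ X := by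
  set PA : ℕ × ℕ → ℤ := fun s => fsum A (hPrefix s.1 s.2) with hPA
  have key : ∀ s ∈ Smn m n, A s = PA s - phiP PA s := by
    intro s hs
    simp only [Smn, Finset.mem_product, Finset.mem_Icc] at hs
    simp only [hPA, phiP]
    by_cases h1 : s.2 = 1
    · have : hPrefix s.1 s.2 = {(s.1, s.2)} := by
        rw [h1]; ext t
        simp [hPrefix, Prod.ext_iff]
      rw [if_pos h1, this]
      simp [fsum]
    · rw [if_neg h1]
      have := hPrefix_succ s.1 s.2 (by omega)
      unfold fsum
      rw [this, Finset.sum_insert (notmem_hPrefix s.1 s.2)]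
      ring
  have hbd' : ∀ s ∈ Smn m n, Φ s ≤ PA s ∧ PA s ≤ Γ s := by
    intro s hs
    simp only [Smn, Finset.mem_product, Finset.mem_Icc] at hs
    have := hbd s.1 (Finset.mem_Icc.mpr hs.1) s.2 (Finset.mem_Icc.mpr hs.2)
    simpa [hPA] using this
  have e1 : fsum A X = bstar1 PA PA X := by
    rw [bstar1_rep m n PA PA hX, fsum_ite A hX]
    apply Finset.sum_congr rfl
    intro s hs
    by_cases h : s ∈ X
    · simp only [h, if_pos, if_true]
      rw [key s hs]
      by_cases h2 : s ∈ X ∧ (s.1, s.2 + 1) ∈ X <;> simp [h2]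
    · simp [h, fun hc : s ∈ X ∧ _ => h hc.1]
  rw [e1]
  show (∑ s ∈ hEnds X, PA s) - ∑ s ∈ hStarts X, (if s.2 = 1 then 0 else PA (s.1, s.2 - 1))
    ≤ (∑ s ∈ hEnds X, Γ s) - ∑ s ∈ hStarts X, (if s.2 = 1 then 0 else Φ (s.1, s.2 - 1))
  have hE : ∑ s ∈ hEnds X, PA s ≤ ∑ s ∈ hEnds X, Γ s := by
    apply Finset.sum_le_sum
    intro s hs
    exact (hbd' s (hX ((Finset.filter_subset _ _) hs))).2
  have hS : ∑ s ∈ hStarts X, (if s.2 = 1 then 0 else Φ (s.1, s.2 - 1))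
      ≤ ∑ s ∈ hStarts X, (if s.2 = 1 then 0 else PA (s.1, s.2 - 1)) := by
    apply Finset.sum_le_sum
    intro s hs
    have hsm := hX ((Finset.filter_subset _ _) hs)
    by_cases h1 : s.2 = 1
    · simp [h1]
    · rw [if_neg h1, if_neg h1]
      have : (s.1, s.2 - 1) ∈ Smn m n := by
        simp only [Smn, Finset.mem_product, Finset.mem_Icc] at hsm ⊢
        omega
      exact (hbd' _ this).1
  linarith
lemma vPrefix_swap (i j : ℕ) : (vPrefix i j).image Prod.swap = hPrefix j i := by
  ext s
  simp only [mem_image_swap, vPrefix, hPrefix, Finset.mem_product, Finset.mem_singleton,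
    Finset.mem_Icc, Prod.fst_swap, Prod.snd_swap]
  tauto

lemma Smn_swap (m n : ℕ) : (Smn m n).image Prod.swap = Smn n m := by
  ext s
  simp only [mem_image_swap, Smn, Finset.mem_product, Finset.mem_Icc, Prod.fst_swap,
    Prod.snd_swap]
  tauto

lemma fsum_le_bstar2 (m n : ℕ) (Φ Γ A : ℕ × ℕ → ℤ)
    (hbd : ∀ i ∈ Finset.Icc 1 m, ∀ j ∈ Finset.Icc 1 n,
      Φ (i, j) ≤ fsum A (vPrefix i j) ∧ fsum A (vPrefix i j) ≤ Γ (i, j))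
    {X : Finset (ℕ × ℕ)} (hX : X ⊆ Smn m n) : fsum A X ≤ bstar2 Φ Γ X := by
  rw [bstar2_eq, ← fsum_swap A X]
  apply fsum_le_bstar1 n m _ _ _ _ (image_swap_subset_Smn hX)
  intro j hj i hi
  have := hbd i hi j hj
  rwa [show ((j : ℕ), (i : ℕ)).swap = (i, j) from rfl, ← vPrefix_swap i j,
    fsum_swap A (vPrefix i j)]
lemma bstar1_empty (Φ Γ : ℕ × ℕ → ℤ) : bstar1 Φ Γ ∅ = 0 := by
  simp [bstar1, hEnds, hStarts]

lemma bstar2_empty (Φ Γ : ℕ × ℕ → ℤ) : bstar2 Φ Γ ∅ = 0 := by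
  simp [bstar2, vEnds, vStarts]

lemma sum_prod_singleton (T : Finset ℕ) (x : ℕ) (F : ℕ × ℕ → ℤ) :
    ∑ s ∈ T ×ˢ {x}, F s = ∑ k ∈ T, F (k, x) := by
  rw [Finset.sum_product]
  simp

lemma bstar1_hPrefix (Φ Γ : ℕ × ℕ → ℤ) (i j : ℕ) (hj : 1 ≤ j) :
    bstar1 Φ Γ (hPrefix i j) = Γ (i, j) := by
  have hE : hEnds (hPrefix i j) = {(i, j)} := by
    ext s
    simp only [hEnds, hPrefix, Finset.mem_filter, Finset.mem_product, Finset.mem_singleton,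
      Finset.mem_Icc, Prod.ext_iff]
    omega
  have hS : hStarts (hPrefix i j) = {(i, 1)} := by
    ext s
    simp only [hStarts, hPrefix, Finset.mem_filter, Finset.mem_product, Finset.mem_singleton,
      Finset.mem_Icc, Prod.ext_iff]
    omega
  unfold bstar1
  rw [hE, hS]
  simp

lemma bstar1_Smn (m n : ℕ) (Φ Γ : ℕ × ℕ → ℤ) (hn : 1 ≤ n) :
    bstar1 Φ Γ (Smn m n) = ∑ i ∈ Finset.Icc 1 m, Γ (i, n) := by
  have hE : hEnds (Smn m n) = Finset.Icc 1 m ×ˢ {n} := by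
    ext s
    simp only [hEnds, Smn, Finset.mem_filter, Finset.mem_product, Finset.mem_singleton,
      Finset.mem_Icc]
    omega
  have hS : hStarts (Smn m n) = Finset.Icc 1 m ×ˢ {1} := by
    ext s
    simp only [hStarts, Smn, Finset.mem_filter, Finset.mem_product, Finset.mem_singleton,
      Finset.mem_Icc]
    omega
  unfold bstar1
  rw [hE, hS, sum_prod_singleton, sum_prod_singleton]
  simp

lemma bstar1_sdiff_hPrefix (m n : ℕ) (Φ Γ : ℕ × ℕ → ℤ) (i j : ℕ)
    (hi : i ∈ Finset.Icc 1 m) (hj1 : 1 ≤ j) (hjn : j ≤ n) (heq : Φ (i, n) = Γ (i, n)) :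
    bstar1 Φ Γ (Smn m n \ hPrefix i j)
      = (∑ k ∈ Finset.Icc 1 m, Γ (k, n)) - Φ (i, j) := by
  simp only [Finset.mem_Icc] at hi
  by_cases hj : j = n
  · have hE : hEnds (Smn m n \ hPrefix i j) = ((Finset.Icc 1 m).erase i) ×ˢ {n} := by
      ext s
      simp only [hEnds, Smn, hPrefix, Finset.mem_filter, Finset.mem_sdiff, Finset.mem_product,
        Finset.mem_singleton, Finset.mem_erase, Finset.mem_Icc]
      omega
    have hS : hStarts (Smn m n \ hPrefix i j) = ((Finset.Icc 1 m).erase i) ×ˢ {1} := by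
      ext s
      simp only [hStarts, Smn, hPrefix, Finset.mem_filter, Finset.mem_sdiff, Finset.mem_product,
        Finset.mem_singleton, Finset.mem_erase, Finset.mem_Icc]
      omega
    unfold bstar1
    rw [hE, hS, sum_prod_singleton, sum_prod_singleton]
    rw [Finset.sum_erase_eq_sub (Finset.mem_Icc.mpr hi)]
    rw [hj]
    simp [heq]
  · have hjn' : j < n := by omega
    have hE : hEnds (Smn m n \ hPrefix i j) = Finset.Icc 1 m ×ˢ {n} := by
      ext s
      simp only [hEnds, Smn, hPrefix, Finset.mem_filter, Finset.mem_sdiff, Finset.mem_product,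
        Finset.mem_singleton, Finset.mem_Icc]
      omega
    have hS : hStarts (Smn m n \ hPrefix i j)
        = insert (i, j + 1) (((Finset.Icc 1 m).erase i) ×ˢ {1}) := by
      ext s
      simp only [hStarts, Smn, hPrefix, Finset.mem_filter, Finset.mem_sdiff, Finset.mem_product,
        Finset.mem_singleton, Finset.mem_erase, Finset.mem_insert, Finset.mem_Icc, Prod.ext_iff]
      omega
    unfold bstar1
    rw [hE, hS, sum_prod_singleton]
    rw [Finset.sum_insert (by
      simp only [Finset.mem_product, Finset.mem_singleton]
      omega)]
    have : ∑ s ∈ ((Finset.Icc 1 m).erase i) ×ˢ {1},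
        (if s.2 = 1 then 0 else Φ (s.1, s.2 - 1)) = 0 := by
      apply Finset.sum_eq_zero
      intro s hs
      simp only [Finset.mem_product, Finset.mem_singleton] at hs
      simp [hs.2]
    rw [this]
    rw [if_neg (by omega)]
    simp
lemma bstar2_vPrefix (Φ Γ : ℕ × ℕ → ℤ) (i j : ℕ) (hi : 1 ≤ i) :
    bstar2 Φ Γ (vPrefix i j) = Γ (i, j) := by
  rw [bstar2_eq, vPrefix_swap, bstar1_hPrefix _ _ j i hi]
  rfl

lemma bstar2_Smn (m n : ℕ) (Φ Γ : ℕ × ℕ → ℤ) (hm : 1 ≤ m) :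
    bstar2 Φ Γ (Smn m n) = ∑ j ∈ Finset.Icc 1 n, Γ (m, j) := by
  rw [bstar2_eq, Smn_swap, bstar1_Smn n m _ _ hm]
  rfl

lemma bstar2_sdiff_vPrefix (m n : ℕ) (Φ Γ : ℕ × ℕ → ℤ) (i j : ℕ)
    (hj : j ∈ Finset.Icc 1 n) (hi1 : 1 ≤ i) (him : i ≤ m) (heq : Φ (m, j) = Γ (m, j)) :
    bstar2 Φ Γ (Smn m n \ vPrefix i j)
      = (∑ k ∈ Finset.Icc 1 n, Γ (m, k)) - Φ (i, j) := by
  rw [bstar2_eq, Finset.image_sdiff _ _ Prod.swap_injective, Smn_swap, vPrefix_swap]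
  rw [bstar1_sdiff_hPrefix n m _ _ j i hj hi1 him heq]
  rfl
lemma modular_uncross (m n : ℕ) {f g : ℕ × ℕ → ℤ} (hfg : ∀ s ∈ Smn m n, f s ≤ g s)
    {X' X'' Y' Y'' : Finset (ℕ × ℕ)} (hX' : X' ⊆ Smn m n) (hX'' : X'' ⊆ Smn m n)
    (hY' : Y' ⊆ Smn m n) (hY'' : Y'' ⊆ Smn m n)
    {s0 : ℕ × ℕ} (hs0 : s0 ∈ Smn m n) (h1 : s0 ∉ X') (h2 : s0 ∉ X'') (h3 : s0 ∈ Y')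
    (h4 : s0 ∈ Y'') :
    fsum g ((Smn m n \ (X' ∪ Y')) ∩ (Smn m n \ (X'' ∩ Y'')))
      + fsum g ((Smn m n \ (X' ∩ Y')) ∩ (Smn m n \ (X'' ∪ Y'')))
      - fsum f ((X' ∪ Y') ∩ (X'' ∩ Y'')) - fsum f ((X' ∩ Y') ∩ (X'' ∪ Y''))
    ≤ fsum g ((Smn m n \ X') ∩ (Smn m n \ X''))
      + fsum g ((Smn m n \ Y') ∩ (Smn m n \ Y''))
      - fsum f (X' ∩ X'') - fsum f (Y' ∩ Y'') - (g s0 - f s0) := by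
  have hsub : ∀ U V : Finset (ℕ × ℕ), (Smn m n \ U) ∩ (Smn m n \ V) ⊆ Smn m n := by
    intro U V s hs
    exact (Finset.mem_sdiff.mp (Finset.mem_inter.mp hs).1).1
  have hsub2 : ∀ (U V : Finset (ℕ × ℕ)), U ⊆ Smn m n → U ∩ V ⊆ Smn m n := by
    intro U V hU s hs
    exact hU (Finset.mem_inter.mp hs).1
  rw [fsum_ite g (hsub _ _), fsum_ite g (hsub _ _), fsum_ite g (hsub _ _),
    fsum_ite g (hsub _ _),
    fsum_ite f (hsub2 _ _ (Finset.union_subset hX' hY')),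
    fsum_ite f (hsub2 _ _ ((Finset.inter_subset_left).trans hX')),
    fsum_ite f (hsub2 _ _ hX'), fsum_ite f (hsub2 _ _ hY')]
  have hs0' : g s0 - f s0 = ∑ s ∈ Smn m n, (if s = s0 then g s - f s else 0) := by
    rw [Finset.sum_ite_eq' (Smn m n) s0 (fun s => g s - f s), if_pos hs0]
  rw [hs0']
  simp only [← Finset.sum_add_distrib, ← Finset.sum_sub_distrib]
  apply Finset.sum_le_sum
  intro s hs
  have hfgs := hfg s hs
  by_cases he : s = s0
  · subst he
    simp [Finset.mem_inter, Finset.mem_sdiff, Finset.mem_union, hs, h1, h2, h3, h4]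
  · by_cases ha : s ∈ X' <;> by_cases hb : s ∈ X'' <;> by_cases hc : s ∈ Y' <;>
      by_cases hd : s ∈ Y'' <;>
      simp [Finset.mem_inter, Finset.mem_sdiff, Finset.mem_union, hs, ha, hb, hc, hd, he] <;>
      linarith
lemma uncross (m n : ℕ) {Φ1 Γ1 Φ2 Γ2 f g : ℕ × ℕ → ℤ}
    (hΦΓ1 : ∀ s ∈ Smn m n, Φ1 s ≤ Γ1 s) (hΦΓ2 : ∀ s ∈ Smn m n, Φ2 s ≤ Γ2 s)
    (hfg : ∀ s ∈ Smn m n, f s ≤ g s)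
    {X' X'' Y' Y'' : Finset (ℕ × ℕ)} (hX' : X' ⊆ Smn m n) (hX'' : X'' ⊆ Smn m n)
    (hY' : Y' ⊆ Smn m n) (hY'' : Y'' ⊆ Smn m n)
    {s0 : ℕ × ℕ} (hs0 : s0 ∈ Smn m n) (h1 : s0 ∉ X') (h2 : s0 ∉ X'') (h3 : s0 ∈ Y')
    (h4 : s0 ∈ Y'') :
    (bstar1 Φ1 Γ1 (X' ∪ Y') + bstar2 Φ2 Γ2 (X'' ∩ Y'')
        + fsum g ((Smn m n \ (X' ∪ Y')) ∩ (Smn m n \ (X'' ∩ Y'')))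
        - fsum f ((X' ∪ Y') ∩ (X'' ∩ Y'')))
      + (bstar1 Φ1 Γ1 (X' ∩ Y') + bstar2 Φ2 Γ2 (X'' ∪ Y'')
        + fsum g ((Smn m n \ (X' ∩ Y')) ∩ (Smn m n \ (X'' ∪ Y'')))
        - fsum f ((X' ∩ Y') ∩ (X'' ∪ Y'')))
    ≤ (bstar1 Φ1 Γ1 X' + bstar2 Φ2 Γ2 X''
        + fsum g ((Smn m n \ X') ∩ (Smn m n \ X'')) - fsum f (X' ∩ X''))
      + (bstar1 Φ1 Γ1 Y' + bstar2 Φ2 Γ2 Y''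
        + fsum g ((Smn m n \ Y') ∩ (Smn m n \ Y'')) - fsum f (Y' ∩ Y''))
      - (g s0 - f s0) := by
  have u1 := bstar1_submod m n hΦΓ1 hX' hY'
  have u2 := bstar2_submod m n hΦΓ2 hX'' hY''
  have u3 := modular_uncross m n hfg hX' hX'' hY' hY'' hs0 h1 h2 h3 h4
  linarith
lemma fsum_hPrefix_n (A : ℕ × ℕ → ℤ) (i n : ℕ) :
    fsum A (hPrefix i n) = ∑ j ∈ Finset.Icc 1 n, A (i, j) := by
  unfold fsum hPrefix
  rw [Finset.sum_product]
  simp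

lemma fsum_Smn_rows (A : ℕ × ℕ → ℤ) (m n : ℕ) :
    fsum A (Smn m n) = ∑ i ∈ Finset.Icc 1 m, fsum A (hPrefix i n) := by
  unfold fsum Smn
  rw [Finset.sum_product]
  apply Finset.sum_congr rfl
  intro i _
  exact (fsum_hPrefix_n A i n).symm

lemma compl_inter_compl (m n : ℕ) (X' X'' : Finset (ℕ × ℕ)) :
    (Smn m n \ X') ∩ (Smn m n \ X'') = Smn m n \ (X' ∪ X'') := by
  ext s
  simp only [Finset.mem_inter, Finset.mem_sdiff, Finset.mem_union]
  tauto

lemma forward_dir (m n : ℕ) (Φ1 Γ1 Φ2 Γ2 f g : ℕ × ℕ → ℤ)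
    (hlastcol : ∀ i ∈ Finset.Icc 1 m, Φ1 (i, n) = Γ1 (i, n))
    (H : ℤ) (hH1 : ∑ i ∈ Finset.Icc 1 m, Φ1 (i, n) = H)
    (hn : 1 ≤ n)
    (A : ℕ × ℕ → ℤ) (hA : IsPBM m n Φ1 Γ1 Φ2 Γ2 A)
    (hAb : ∀ s ∈ Smn m n, f s ≤ A s ∧ A s ≤ g s) :
    ∀ X' ⊆ Smn m n, ∀ X'' ⊆ Smn m n,
      H ≤ bstar1 Φ1 Γ1 X' + bstar2 Φ2 Γ2 X'' +
        fsum g ((Smn m n \ X') ∩ (Smn m n \ X'')) - fsum f (X' ∩ X'') := by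
  intro X' hX' X'' hX''
  have hAS : fsum A (Smn m n) = H := by
    rw [fsum_Smn_rows, ← hH1]
    apply Finset.sum_congr rfl
    intro i hi
    have h1 := (hA i hi n (Finset.mem_Icc.mpr ⟨hn, le_refl n⟩)).1
    have h2 := hlastcol i hi
    omega
  have h1 : fsum A X' ≤ bstar1 Φ1 Γ1 X' := by
    apply fsum_le_bstar1 m n Φ1 Γ1 A _ hX'
    intro i hi j hj
    exact (hA i hi j hj).1
  have h2 : fsum A X'' ≤ bstar2 Φ2 Γ2 X'' := by
    apply fsum_le_bstar2 m n Φ2 Γ2 A _ hX''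
    intro i hi j hj
    exact (hA i hi j hj).2
  have hIE : fsum A (X' ∪ X'') + fsum A (X' ∩ X'') = fsum A X' + fsum A X'' :=
    Finset.sum_union_inter
  have hsd : fsum A (Smn m n \ (X' ∪ X'')) = fsum A (Smn m n) - fsum A (X' ∪ X'') :=
    fsum_sdiff (Finset.union_subset hX' hX'')
  have hcompeq : (Smn m n \ X') ∩ (Smn m n \ X'') = Smn m n \ (X' ∪ X'') :=
    compl_inter_compl m n X' X''
  have hg : fsum A (Smn m n \ (X' ∪ X'')) ≤ fsum g (Smn m n \ (X' ∪ X'')) :=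
    fsum_mono (Finset.sdiff_subset) (fun s hs => (hAb s hs).2)
  have hf : fsum f (X' ∩ X'') ≤ fsum A (X' ∩ X'') :=
    fsum_mono ((Finset.inter_subset_left).trans hX') (fun s hs => (hAb s hs).1)
  rw [hcompeq]
  linarith
lemma fsum_empty (x : ℕ × ℕ → ℤ) : fsum x ∅ = 0 := Finset.sum_empty

lemma fsum_congr {x y : ℕ × ℕ → ℤ} {C T : Finset (ℕ × ℕ)} (h : C ⊆ T)
    (hxy : ∀ s ∈ T, x s = y s) : fsum x C = fsum y C :=
  Finset.sum_congr rfl fun s hs => hxy s (h hs)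

lemma hPrefix_subset_Smn {m n i j : ℕ} (hi : i ∈ Finset.Icc 1 m) (hj : j ≤ n) :
    hPrefix i j ⊆ Smn m n := by
  intro s hs
  simp only [hPrefix, Smn, Finset.mem_product, Finset.mem_singleton, Finset.mem_Icc] at hs ⊢
  simp only [Finset.mem_Icc] at hi
  omega

lemma vPrefix_subset_Smn {m n i j : ℕ} (hi : i ≤ m) (hj : j ∈ Finset.Icc 1 n) :
    vPrefix i j ⊆ Smn m n := by
  intro s hs
  simp only [vPrefix, Smn, Finset.mem_product, Finset.mem_singleton, Finset.mem_Icc] at hs ⊢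
  simp only [Finset.mem_Icc] at hj
  omega

lemma base_case (m n : ℕ) (hm : 1 ≤ m) (hn : 1 ≤ n) (Φ1 Γ1 Φ2 Γ2 f g : ℕ × ℕ → ℤ)
    (hlastcol : ∀ i ∈ Finset.Icc 1 m, Φ1 (i, n) = Γ1 (i, n))
    (hlastrow : ∀ j ∈ Finset.Icc 1 n, Φ2 (m, j) = Γ2 (m, j))
    (H : ℤ)
    (hH1 : ∑ i ∈ Finset.Icc 1 m, Φ1 (i, n) = H)
    (hH2 : ∑ j ∈ Finset.Icc 1 n, Φ2 (m, j) = H)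
    (heq : ∀ s ∈ Smn m n, f s = g s)
    (hcond : ∀ X' ⊆ Smn m n, ∀ X'' ⊆ Smn m n,
      H ≤ bstar1 Φ1 Γ1 X' + bstar2 Φ2 Γ2 X'' +
        fsum g ((Smn m n \ X') ∩ (Smn m n \ X'')) - fsum f (X' ∩ X'')) :
    IsPBM m n Φ1 Γ1 Φ2 Γ2 f := by
  have hb1S : bstar1 Φ1 Γ1 (Smn m n) = H := by
    rw [bstar1_Smn m n _ _ hn, ← hH1]
    exact Finset.sum_congr rfl fun i hi => (hlastcol i hi).symm
  have hb2S : bstar2 Φ2 Γ2 (Smn m n) = H := by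
    rw [bstar2_Smn m n _ _ hm, ← hH2]
    exact Finset.sum_congr rfl fun j hj => (hlastrow j hj).symm
  have hg1 : ∑ k ∈ Finset.Icc 1 m, Γ1 (k, n) = H := by
    rw [← hH1]; exact Finset.sum_congr rfl fun i hi => (hlastcol i hi).symm
  have hg2 : ∑ k ∈ Finset.Icc 1 n, Γ2 (m, k) = H := by
    rw [← hH2]; exact Finset.sum_congr rfl fun j hj => (hlastrow j hj).symm
  -- total sum equals H
  have hle : fsum f (Smn m n) ≤ H := by
    have := hcond (Smn m n) (Finset.Subset.refl _) (Smn m n) (Finset.Subset.refl _)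
    rw [Finset.sdiff_self, Finset.inter_self, Finset.inter_self, fsum_empty, hb1S, hb2S]
      at this
    linarith
  have hge : H ≤ fsum f (Smn m n) := by
    have := hcond ∅ (Finset.empty_subset _) ∅ (Finset.empty_subset _)
    rw [Finset.sdiff_empty, Finset.inter_self, Finset.inter_empty, fsum_empty,
      bstar1_empty, bstar2_empty] at this
    rw [fsum_congr (Finset.Subset.refl _) heq]
    linarith
  have hFS : fsum f (Smn m n) = H := le_antisymm hle hge
  -- F(X) ≤ bstar1 X for all X ⊆ S
  have hup1 : ∀ X ⊆ Smn m n, fsum f X ≤ bstar1 Φ1 Γ1 X := by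
    intro X hX
    have := hcond X hX ∅ (Finset.empty_subset _)
    rw [Finset.sdiff_empty, Finset.inter_eq_left.mpr Finset.sdiff_subset, Finset.inter_empty,
      fsum_empty, bstar2_empty] at this
    have e1 : fsum g (Smn m n \ X) = fsum f (Smn m n \ X) :=
      (fsum_congr Finset.sdiff_subset fun s hs => (heq s hs).symm)
    have e2 : fsum f (Smn m n \ X) = fsum f (Smn m n) - fsum f X := fsum_sdiff hX
    linarith
  have hup2 : ∀ X ⊆ Smn m n, fsum f X ≤ bstar2 Φ2 Γ2 X := by
    intro X hX
    have := hcond ∅ (Finset.empty_subset _) X hX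
    rw [Finset.sdiff_empty, Finset.inter_eq_right.mpr Finset.sdiff_subset,
      Finset.empty_inter, fsum_empty, bstar1_empty] at this
    have e1 : fsum g (Smn m n \ X) = fsum f (Smn m n \ X) :=
      (fsum_congr Finset.sdiff_subset fun s hs => (heq s hs).symm)
    have e2 : fsum f (Smn m n \ X) = fsum f (Smn m n) - fsum f X := fsum_sdiff hX
    linarith
  intro i hi j hj
  simp only [Finset.mem_Icc] at hi hj
  have hiI : i ∈ Finset.Icc 1 m := Finset.mem_Icc.mpr hi
  have hjI : j ∈ Finset.Icc 1 n := Finset.mem_Icc.mpr hj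
  have hPsub : hPrefix i j ⊆ Smn m n := hPrefix_subset_Smn hiI hj.2
  have hVsub : vPrefix i j ⊆ Smn m n := vPrefix_subset_Smn hi.2 hjI
  refine ⟨⟨?_, ?_⟩, ?_, ?_⟩
  · -- Φ1 ≤ prefix sum
    have h1 := hup1 (Smn m n \ hPrefix i j) Finset.sdiff_subset
    rw [bstar1_sdiff_hPrefix m n Φ1 Γ1 i j hiI hj.1 hj.2 (hlastcol i hiI), hg1] at h1
    have h2 : fsum f (Smn m n \ hPrefix i j) = fsum f (Smn m n) - fsum f (hPrefix i j) :=
      fsum_sdiff hPsub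
    linarith
  · have := hup1 (hPrefix i j) hPsub
    rwa [bstar1_hPrefix Φ1 Γ1 i j hj.1] at this
  · have h1 := hup2 (Smn m n \ vPrefix i j) Finset.sdiff_subset
    rw [bstar2_sdiff_vPrefix m n Φ2 Γ2 i j hjI hi.1 hi.2 (hlastrow j hjI), hg2] at h1
    have h2 : fsum f (Smn m n \ vPrefix i j) = fsum f (Smn m n) - fsum f (vPrefix i j) :=
      fsum_sdiff hVsub
    linarith
  · have := hup2 (vPrefix i j) hVsub
    rwa [bstar2_vPrefix Φ2 Γ2 i j hi.1] at this
lemma fsum_dec (g : ℕ × ℕ → ℤ) (s0 : ℕ × ℕ) (C : Finset (ℕ × ℕ)) :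
    fsum (fun s => if s = s0 then g s - 1 else g s) C
      = fsum g C - (if s0 ∈ C then 1 else 0) := by
  unfold fsum
  rw [← Finset.sum_ite_eq' C s0 (fun _ => (1:ℤ)), ← Finset.sum_sub_distrib]
  apply Finset.sum_congr rfl
  intro s _
  by_cases h : s = s0 <;> simp [h]

lemma fsum_inc (f : ℕ × ℕ → ℤ) (s0 : ℕ × ℕ) (C : Finset (ℕ × ℕ)) :
    fsum (fun s => if s = s0 then f s + 1 else f s) C
      = fsum f C + (if s0 ∈ C then 1 else 0) := by
  unfold fsum
  rw [← Finset.sum_ite_eq' C s0 (fun _ => (1:ℤ)), ← Finset.sum_add_distrib]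
  apply Finset.sum_congr rfl
  intro s _
  by_cases h : s = s0 <;> simp [h]

lemma backward_main (m n : ℕ) (hm : 1 ≤ m) (hn : 1 ≤ n) (Φ1 Γ1 Φ2 Γ2 : ℕ × ℕ → ℤ)
    (hΦΓ1 : ∀ s ∈ Smn m n, Φ1 s ≤ Γ1 s) (hΦΓ2 : ∀ s ∈ Smn m n, Φ2 s ≤ Γ2 s)
    (hlastcol : ∀ i ∈ Finset.Icc 1 m, Φ1 (i, n) = Γ1 (i, n))
    (hlastrow : ∀ j ∈ Finset.Icc 1 n, Φ2 (m, j) = Γ2 (m, j))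
    (H : ℤ)
    (hH1 : ∑ i ∈ Finset.Icc 1 m, Φ1 (i, n) = H)
    (hH2 : ∑ j ∈ Finset.Icc 1 n, Φ2 (m, j) = H) :
    ∀ k : ℕ, ∀ f g : ℕ × ℕ → ℤ, (∀ s ∈ Smn m n, f s ≤ g s) →
      (∑ s ∈ Smn m n, (g s - f s)).toNat = k →
      (∀ X' ⊆ Smn m n, ∀ X'' ⊆ Smn m n,
        H ≤ bstar1 Φ1 Γ1 X' + bstar2 Φ2 Γ2 X'' +
          fsum g ((Smn m n \ X') ∩ (Smn m n \ X'')) - fsum f (X' ∩ X'')) →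
      ∃ A : ℕ × ℕ → ℤ, IsPBM m n Φ1 Γ1 Φ2 Γ2 A ∧
        ∀ s ∈ Smn m n, f s ≤ A s ∧ A s ≤ g s := by
  intro k
  induction k using Nat.strong_induction_on with
  | _ k ih =>
    intro f g hfg hk hcond
    by_cases hex : ∃ s0 ∈ Smn m n, f s0 < g s0
    · obtain ⟨s0, hs0, hlt⟩ := hex
      have hsum1 : (1:ℤ) ≤ ∑ s ∈ Smn m n, (g s - f s) := by
        calc (1:ℤ) = ∑ s ∈ Smn m n, (if s = s0 then (1:ℤ) else 0) := by
              rw [Finset.sum_ite_eq' (Smn m n) s0 (fun _ => (1:ℤ)), if_pos hs0]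
          _ ≤ ∑ s ∈ Smn m n, (g s - f s) := by
              apply Finset.sum_le_sum
              intro s hs
              by_cases h : s = s0
              · subst h; rw [if_pos rfl]; omega
              · rw [if_neg h]; have := hfg s hs; omega
      by_cases hcg : ∀ X' ⊆ Smn m n, ∀ X'' ⊆ Smn m n,
          H ≤ bstar1 Φ1 Γ1 X' + bstar2 Φ2 Γ2 X'' +
            fsum (fun s => if s = s0 then g s - 1 else g s)
              ((Smn m n \ X') ∩ (Smn m n \ X'')) - fsum f (X' ∩ X'')
      · -- recurse with g decreased at s0
        have hfg' : ∀ s ∈ Smn m n, f s ≤ (fun s => if s = s0 then g s - 1 else g s) s := by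
          intro s hs
          by_cases h : s = s0
          · subst h; simp only [if_pos rfl]; omega
          · simp only [if_neg h]; exact hfg s hs
        have hmeas : (∑ s ∈ Smn m n,
            ((fun s => if s = s0 then g s - 1 else g s) s - f s)).toNat = k - 1 := by
          have : ∑ s ∈ Smn m n, ((fun s => if s = s0 then g s - 1 else g s) s - f s)
              = (∑ s ∈ Smn m n, (g s - f s)) - 1 := by
            have h1 := fsum_dec g s0 (Smn m n)
            unfold fsum at h1
            rw [if_pos hs0] at h1
            rw [Finset.sum_sub_distrib, Finset.sum_sub_distrib] at *
            linarith
          rw [this]; omega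
        have hk1 : k - 1 < k := by omega
        obtain ⟨A, hA1, hA2⟩ := ih (k - 1) hk1 f _ hfg' hmeas hcg
        refine ⟨A, hA1, fun s hs => ⟨(hA2 s hs).1, ?_⟩⟩
        have := (hA2 s hs).2
        by_cases h : s = s0
        · subst h; simp only [if_pos rfl] at this; omega
        · simpa [if_neg h] using this
      · by_cases hcf : ∀ X' ⊆ Smn m n, ∀ X'' ⊆ Smn m n,
            H ≤ bstar1 Φ1 Γ1 X' + bstar2 Φ2 Γ2 X'' +
              fsum g ((Smn m n \ X') ∩ (Smn m n \ X''))
              - fsum (fun s => if s = s0 then f s + 1 else f s) (X' ∩ X'')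
        · -- recurse with f increased at s0
          have hfg' : ∀ s ∈ Smn m n, (fun s => if s = s0 then f s + 1 else f s) s ≤ g s := by
            intro s hs
            by_cases h : s = s0
            · subst h; simp only [if_pos rfl]; omega
            · simp only [if_neg h]; exact hfg s hs
          have hmeas : (∑ s ∈ Smn m n,
              (g s - (fun s => if s = s0 then f s + 1 else f s) s)).toNat = k - 1 := by
            have : ∑ s ∈ Smn m n, (g s - (fun s => if s = s0 then f s + 1 else f s) s)
                = (∑ s ∈ Smn m n, (g s - f s)) - 1 := by
              have h1 := fsum_inc f s0 (Smn m n)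
              unfold fsum at h1
              rw [if_pos hs0] at h1
              rw [Finset.sum_sub_distrib, Finset.sum_sub_distrib] at *
              linarith
            rw [this]; omega
          have hk1 : k - 1 < k := by omega
          obtain ⟨A, hA1, hA2⟩ := ih (k - 1) hk1 _ g hfg' hmeas hcf
          refine ⟨A, hA1, fun s hs => ⟨?_, (hA2 s hs).2⟩⟩
          have := (hA2 s hs).1
          by_cases h : s = s0
          · subst h; simp only [if_pos rfl] at this; omega
          · simpa [if_neg h] using this
        · -- both reductions fail: contradiction via uncrossing
          exfalso
          push_neg at hcg hcf
          obtain ⟨X', hX', X'', hX'', hltX⟩ := hcg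
          obtain ⟨Y', hY', Y'', hY'', hltY⟩ := hcf
          rw [fsum_dec] at hltX
          rw [fsum_inc] at hltY
          have hRX := hcond X' hX' X'' hX''
          have hRY := hcond Y' hY' Y'' hY''
          have hs0C : s0 ∈ (Smn m n \ X') ∩ (Smn m n \ X'') := by
            by_contra h
            rw [if_neg h] at hltX
            linarith
          have hs0I : s0 ∈ Y' ∩ Y'' := by
            by_contra h
            rw [if_neg h] at hltY
            linarith
          rw [if_pos hs0C] at hltX
          rw [if_pos hs0I] at hltY
          have hRXeq : bstar1 Φ1 Γ1 X' + bstar2 Φ2 Γ2 X'' +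
              fsum g ((Smn m n \ X') ∩ (Smn m n \ X'')) - fsum f (X' ∩ X'') = H := by
            linarith
          have hRYeq : bstar1 Φ1 Γ1 Y' + bstar2 Φ2 Γ2 Y'' +
              fsum g ((Smn m n \ Y') ∩ (Smn m n \ Y'')) - fsum f (Y' ∩ Y'') = H := by
            linarith
          simp only [Finset.mem_inter, Finset.mem_sdiff] at hs0C hs0I
          have hun := uncross m n hΦΓ1 hΦΓ2 hfg hX' hX'' hY' hY'' hs0
            hs0C.1.2 hs0C.2.2 hs0I.1 hs0I.2
          have hZ := hcond (X' ∪ Y') (Finset.union_subset hX' hY')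
            (X'' ∩ Y'') ((Finset.inter_subset_left).trans hX'')
          have hW := hcond (X' ∩ Y') ((Finset.inter_subset_left).trans hX')
            (X'' ∪ Y'') (Finset.union_subset hX'' hY'')
          have hgf : f s0 < g s0 := hlt
          linarith
    · -- f = g on the grid
      push_neg at hex
      have heq : ∀ s ∈ Smn m n, f s = g s := fun s hs => le_antisymm (hfg s hs) (hex s hs)
      exact ⟨f, base_case m n hm hn Φ1 Γ1 Φ2 Γ2 f g hlastcol hlastrow H hH1 hH2 heq hcond,
        fun s hs => ⟨le_refl _, le_of_eq (heq s hs)⟩⟩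

/-- feasibility of strict prefix-bounded matrices with entry
bounds (Theorem strictPBM). -/
theorem stmt_12 (m n : ℕ) (hm : 1 ≤ m) (hn : 1 ≤ n)
    (Φ1 Γ1 Φ2 Γ2 f g : ℕ × ℕ → ℤ)
    (hΦΓ1 : ∀ s ∈ Smn m n, Φ1 s ≤ Γ1 s) (hΦΓ2 : ∀ s ∈ Smn m n, Φ2 s ≤ Γ2 s)
    (hfg : ∀ s ∈ Smn m n, f s ≤ g s)
    (hlastcol : ∀ i ∈ Finset.Icc 1 m, Φ1 (i, n) = Γ1 (i, n))
    (hlastrow : ∀ j ∈ Finset.Icc 1 n, Φ2 (m, j) = Γ2 (m, j))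
    (H : ℤ)
    (hH1 : ∑ i ∈ Finset.Icc 1 m, Φ1 (i, n) = H)
    (hH2 : ∑ j ∈ Finset.Icc 1 n, Φ2 (m, j) = H) :
    (∃ A : ℕ × ℕ → ℤ, IsPBM m n Φ1 Γ1 Φ2 Γ2 A ∧
        (∀ s ∈ Smn m n, f s ≤ A s ∧ A s ≤ g s)) ↔
      (∀ X' ⊆ Smn m n, ∀ X'' ⊆ Smn m n,
        H ≤ bstar1 Φ1 Γ1 X' + bstar2 Φ2 Γ2 X'' +
          fsum g ((Smn m n \ X') ∩ (Smn m n \ X'')) - fsum f (X' ∩ X'')) := by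
  constructor
  · rintro ⟨A, hA, hAb⟩
    exact forward_dir m n Φ1 Γ1 Φ2 Γ2 f g hlastcol H hH1 hn A hA hAb
  · intro hcond
    exact backward_main m n hm hn Φ1 Γ1 Φ2 Γ2 hΦΓ1 hΦΓ2 hlastcol hlastrow H hH1 hH2
      _ f g hfg rfl hcond
end
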